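/- arXiv:2109.01829 — 3 statements merged into one kernel-verified Lean document; each statement's English description precedes it below -/
import Mathlib

section
/- Let g ∈ ℝⁿ \ {0}, let H be a symmetric n×n real matrix, and let ρ: ℝ → [0,∞] be a proper closed convex function with ρ(0) = 0 satisfying Assumptions 1–3. For t ∈ ℝ, let λ(t) be the smallest eigenvalue of B(t) := [[t, gᵀ],[g, H]], set t̄ := lim_{λ↑λ_min(H)} [λ + gᵀ(H − λI)⁻¹g] ∈ (−∞, ∞], and define k̂(t) := inf_{γ ≥ 0} { ρ(γ − 1) + γλ(t) }. Then k̂ is differentiable at every point of ℝ except possibly at t̄, and, in the case that lim_{t↑t̄} λ(t) > 0, also possibly at the point gᵀH⁻¹g. In particular, if H is not positive definite, k̂ is differentiable except possibly at the single point t̄. -/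
open Matrix Filter Set Topology

noncomputable section

/-- The quadratic part `2 gᵀ x + xᵀ H x` of the objective. -/
def quadObj {n : ℕ} (g : Fin n → ℝ) (H : Matrix (Fin n) (Fin n) ℝ) (x : Fin n → ℝ) : ℝ :=
  2 * (g ⬝ᵥ x) + x ⬝ᵥ H.mulVec x

/-- The squared Euclidean norm `‖x‖²`. -/
def nsq {m : Type*} [Fintype m] (x : m → ℝ) : ℝ := x ⬝ᵥ x

/-- The Euclidean norm `‖x‖`. -/
def vnorm {m : Type*} [Fintype m] (x : m → ℝ) : ℝ := Real.sqrt (x ⬝ᵥ x)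

/-- `ρ : ℝ → [0,∞]` is proper closed (lsc) convex with `ρ 0 = 0`. -/
def RhoBasic (ρ : ℝ → EReal) : Prop :=
  (∀ t, 0 ≤ ρ t) ∧ ρ 0 = 0 ∧ LowerSemicontinuous ρ ∧
    ∀ a b θ : ℝ, 0 ≤ θ → θ ≤ 1 →
      ρ (θ * a + (1 - θ) * b) ≤ (θ : EReal) * ρ a + ((1 - θ : ℝ) : EReal) * ρ b

/-- Assumption 1: `ρ` is nondecreasing, vanishes on `(-∞,0]`, finite somewhere on `(0,∞)`. -/
def Assump1 (ρ : ℝ → EReal) : Prop :=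
  Monotone ρ ∧ (∀ t ≤ (0:ℝ), ρ t = 0) ∧ ∃ t₀ : ℝ, 0 < t₀ ∧ ρ t₀ < ⊤

/-- Assumption 2: supercoercivity, `lim_{t→∞} ρ(t)/t = ∞`. -/
def Assump2 (ρ : ℝ → EReal) : Prop :=
  ∀ M : ℝ, ∀ᶠ t : ℝ in atTop, ((M * t : ℝ) : EReal) ≤ ρ t

/-- The monotone conjugate `ρ⁺(u) = sup_{t ≥ 0} (ut − ρ(t))`. -/
def mconj (ρ : ℝ → EReal) (u : ℝ) : EReal :=
  ⨆ t : {t : ℝ // 0 ≤ t}, (((u * (t : ℝ) : ℝ) : EReal) - ρ t)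

/-- The real-valued monotone conjugate (under supercoercivity `ρ⁺` is finite). -/
def mconjR (ρ : ℝ → EReal) (u : ℝ) : ℝ := (mconj ρ u).toReal

/-- Assumption 3: `ρ⁺` is differentiable on `(0,∞)`. -/
def Assump3 (ρ : ℝ → EReal) : Prop :=
  ∀ u : ℝ, 0 < u → DifferentiableAt ℝ (mconjR ρ) u

/-- Convex subdifferential of an `EReal`-valued function on `ℝ`. -/
def subdiff (f : ℝ → EReal) (x : ℝ) : Set ℝ :=
  {s : ℝ | ∀ y : ℝ, f x + ((s * (y - x) : ℝ) : EReal) ≤ f y}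

/-- Indicator function `δ_{ℝ₊}` of `[0,∞)`. -/
def indNonneg : ℝ → EReal := fun t => if 0 ≤ t then (0 : EReal) else ⊤

/-- Smallest eigenvalue of a symmetric matrix, via the Rayleigh quotient. -/
def lambdaMin {m : Type*} [Fintype m] (A : Matrix m m ℝ) : ℝ :=
  ⨅ x : {x : m → ℝ // x ⬝ᵥ x = 1}, ((x : m → ℝ) ⬝ᵥ A.mulVec (x : m → ℝ))

/-- Euclidean operator norm of a matrix. -/
def opNorm {m : Type*} [Fintype m] (A : Matrix m m ℝ) : ℝ :=
  ⨆ x : {x : m → ℝ // x ⬝ᵥ x = 1}, vnorm (A.mulVec (x : m → ℝ))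

/-- The bordered matrix `B(t) = [[t, gᵀ],[g, H]]`. -/
def Bmat {n : ℕ} (g : Fin n → ℝ) (H : Matrix (Fin n) (Fin n) ℝ) (t : ℝ) :
    Matrix (Fin (n+1)) (Fin (n+1)) ℝ :=
  Matrix.of (Fin.cons (Fin.cons t g) (fun i => Fin.cons (g i) (H i)))

/-- Moore–Penrose pseudoinverse of a real symmetric matrix (via the spectral theorem). -/
def symPinv {n : ℕ} (A : Matrix (Fin n) (Fin n) ℝ) : Matrix (Fin n) (Fin n) ℝ :=
  if h : A.IsHermitian then
    (h.eigenvectorUnitary : Matrix (Fin n) (Fin n) ℝ) *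
      Matrix.diagonal (fun i => (h.eigenvalues i)⁻¹) *
      star (h.eigenvectorUnitary : Matrix (Fin n) (Fin n) ℝ)
  else 0

/-- The set of minimizers of `ρ`. -/
def argminSet (ρ : ℝ → EReal) : Set ℝ := {t : ℝ | ∀ s : ℝ, ρ t ≤ ρ s}

/-- The RW-dual function `k̂(t) = inf_{γ ≥ 0} { ρ(γ−1) + γ λ_min(B(t)) }`. -/
def khat {n : ℕ} (ρ : ℝ → EReal) (g : Fin n → ℝ) (H : Matrix (Fin n) (Fin n) ℝ) (t : ℝ) : EReal :=
  ⨅ γ : {γ : ℝ // 0 ≤ γ},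
    (ρ ((γ : ℝ) - 1) + ((((γ : ℝ) * lambdaMin (Bmat g H t)) : ℝ) : EReal))

section RayleighHelpers
variable {m : Type*} [Fintype m]

lemma quad_lower (A : Matrix m m ℝ) {x : m → ℝ} (hx : x ⬝ᵥ x = 1) :
    -(∑ i, ∑ j, |A i j|) ≤ x ⬝ᵥ A.mulVec x := by
  have habs : ∀ i, |x i| ≤ 1 := by
    intro i
    have h1 : x i ^ 2 ≤ ∑ j, x j ^ 2 := by
      apply Finset.single_le_sum (f := fun j => x j ^ 2) (fun j _ => sq_nonneg _)
        (Finset.mem_univ i)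
    have h2 : (∑ j, x j ^ 2) = 1 := by
      rw [← hx]; simp [dotProduct, sq]
    rw [h2] at h1
    nlinarith [abs_nonneg (x i), sq_abs (x i)]
  have hexp : x ⬝ᵥ A.mulVec x = ∑ i, ∑ j, x i * A i j * x j := by
    simp [dotProduct, Matrix.mulVec, Finset.mul_sum, mul_assoc]
  rw [hexp]
  have : |∑ i, ∑ j, x i * A i j * x j| ≤ ∑ i, ∑ j, |A i j| := by
    refine (Finset.abs_sum_le_sum_abs _ _).trans (Finset.sum_le_sum fun i _ => ?_)
    refine (Finset.abs_sum_le_sum_abs _ _).trans (Finset.sum_le_sum fun j _ => ?_)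
    rw [abs_mul, abs_mul]
    calc |x i| * |A i j| * |x j| ≤ 1 * |A i j| * 1 := by
          apply mul_le_mul (mul_le_mul (habs i) le_rfl (abs_nonneg _) zero_le_one)
            (habs j) (abs_nonneg _) (by positivity)
      _ = |A i j| := by ring
  linarith [(abs_le.1 this).1]

lemma bddBelow_ray (A : Matrix m m ℝ) :
    BddBelow (Set.range fun x : {x : m → ℝ // x ⬝ᵥ x = 1} =>
      (x : m → ℝ) ⬝ᵥ A.mulVec (x : m → ℝ)) := by
  refine ⟨-(∑ i, ∑ j, |A i j|), ?_⟩
  rintro _ ⟨x, rfl⟩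
  exact quad_lower A x.2

lemma lambdaMin_le (A : Matrix m m ℝ) {x : m → ℝ} (hx : x ⬝ᵥ x = 1) :
    lambdaMin A ≤ x ⬝ᵥ A.mulVec x :=
  ciInf_le (bddBelow_ray A) ⟨x, hx⟩

lemma sphere_nonempty [DecidableEq m] [Nonempty m] : Nonempty {x : m → ℝ // x ⬝ᵥ x = 1} := by
  refine ⟨⟨Pi.single (Classical.arbitrary m) 1, ?_⟩⟩
  rw [dotProduct_single]
  simp

lemma le_lambdaMin [Nonempty m] {A : Matrix m m ℝ} {c : ℝ}
    (h : ∀ x : m → ℝ, x ⬝ᵥ x = 1 → c ≤ x ⬝ᵥ A.mulVec x) : c ≤ lambdaMin A := by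
  classical
  have := sphere_nonempty (m := m)
  exact le_ciInf fun x => h x x.2

lemma quad_smul (A : Matrix m m ℝ) (c : ℝ) (v : m → ℝ) :
    (c • v) ⬝ᵥ A.mulVec (c • v) = c ^ 2 * (v ⬝ᵥ A.mulVec v) := by
  rw [Matrix.mulVec_smul, dotProduct_smul, smul_dotProduct]
  simp [smul_eq_mul]; ring

lemma dot_self_nonneg (v : m → ℝ) : 0 ≤ v ⬝ᵥ v :=
  Finset.sum_nonneg fun i _ => mul_self_nonneg _

lemma dot_self_pos {v : m → ℝ} (hv : v ≠ 0) : 0 < v ⬝ᵥ v := by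
  rcases (dot_self_nonneg v).lt_or_eq with h | h
  · exact h
  · exact absurd (dotProduct_self_eq_zero.1 h.symm) hv

lemma lambdaMin_quad_le (A : Matrix m m ℝ) [Nonempty m] (v : m → ℝ) :
    lambdaMin A * (v ⬝ᵥ v) ≤ v ⬝ᵥ A.mulVec v := by
  rcases eq_or_ne v 0 with rfl | hv
  · simp
  · have hpos := dot_self_pos hv
    set s := Real.sqrt (v ⬝ᵥ v) with hs
    have hspos : 0 < s := Real.sqrt_pos.2 hpos
    have hs2 : s ^ 2 = v ⬝ᵥ v := Real.sq_sqrt hpos.le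
    have hunit : (s⁻¹ • v) ⬝ᵥ (s⁻¹ • v) = 1 := by
      have : (s⁻¹ • v) ⬝ᵥ (s⁻¹ • v) = (s⁻¹) ^ 2 * (v ⬝ᵥ v) := by
        rw [dotProduct_smul, smul_dotProduct]; simp [smul_eq_mul]; ring
      rw [this, inv_pow, hs2]
      field_simp
    have h1 := lambdaMin_le A hunit
    rw [quad_smul, inv_pow] at h1
    have h2 : lambdaMin A * (v ⬝ᵥ v) ≤ ((s ^ 2)⁻¹ * (v ⬝ᵥ A.mulVec v)) * (v ⬝ᵥ v) := by
      exact mul_le_mul_of_nonneg_right h1 hpos.le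
    calc lambdaMin A * (v ⬝ᵥ v) ≤ _ := h2
      _ = v ⬝ᵥ A.mulVec v := by rw [hs2]; field_simp

lemma lambdaMin_eq_of [Nonempty m] {A : Matrix m m ℝ} {μ : ℝ}
    (h1 : ∀ x : m → ℝ, μ * (x ⬝ᵥ x) ≤ x ⬝ᵥ A.mulVec x)
    {x₀ : m → ℝ} (h0 : x₀ ≠ 0) (h2 : x₀ ⬝ᵥ A.mulVec x₀ = μ * (x₀ ⬝ᵥ x₀)) :
    lambdaMin A = μ := by
  have hge : μ ≤ lambdaMin A :=
    le_lambdaMin fun x hx => by have := h1 x; rw [hx] at this; linarith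
  have hle : lambdaMin A ≤ μ := by
    have hpos := dot_self_pos h0
    set s := Real.sqrt (x₀ ⬝ᵥ x₀) with hs
    have hspos : 0 < s := Real.sqrt_pos.2 hpos
    have hs2 : s ^ 2 = x₀ ⬝ᵥ x₀ := Real.sq_sqrt hpos.le
    have hunit : (s⁻¹ • x₀) ⬝ᵥ (s⁻¹ • x₀) = 1 := by
      have : (s⁻¹ • x₀) ⬝ᵥ (s⁻¹ • x₀) = (s⁻¹) ^ 2 * (x₀ ⬝ᵥ x₀) := by
        rw [dotProduct_smul, smul_dotProduct]; simp [smul_eq_mul]; ring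
      rw [this, inv_pow, hs2]; field_simp
    have h1' := lambdaMin_le A hunit
    rw [quad_smul, inv_pow, h2, hs2] at h1'
    calc lambdaMin A ≤ (x₀ ⬝ᵥ x₀)⁻¹ * (μ * (x₀ ⬝ᵥ x₀)) := h1'
      _ = μ := by field_simp
  linarith

end RayleighHelpers
section BmatHelpers
variable {n : ℕ}

lemma dot_split (x : Fin (n+1) → ℝ) :
    x ⬝ᵥ x = x 0 ^ 2 + (Fin.tail x) ⬝ᵥ (Fin.tail x) := by
  simp [dotProduct, Fin.sum_univ_succ, Fin.tail, sq]

lemma Bmat_quad (g : Fin n → ℝ) (H : Matrix (Fin n) (Fin n) ℝ) (t : ℝ) (x : Fin (n+1) → ℝ) :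
    x ⬝ᵥ (Bmat g H t).mulVec x =
      t * x 0 ^ 2 + 2 * x 0 * (g ⬝ᵥ Fin.tail x) +
        (Fin.tail x) ⬝ᵥ H.mulVec (Fin.tail x) := by
  simp only [dotProduct, Matrix.mulVec, Fin.sum_univ_succ, Bmat, Matrix.of_apply,
    Fin.cons_zero, Fin.cons_succ, Fin.tail]
  have expand : ∀ i : Fin n, x i.succ * (g i * x 0 + ∑ j, H i j * x j.succ)
      = x 0 * (g i * x i.succ) + x i.succ * ∑ j, H i j * x j.succ := fun i => by ring
  rw [Finset.sum_congr rfl fun i _ => expand i, Finset.sum_add_distrib, ← Finset.mul_sum]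
  ring

end BmatHelpers
section SymHelpers
variable {n : ℕ}

lemma isHermitian_of_isSymm {A : Matrix (Fin n) (Fin n) ℝ} (hA : A.IsSymm) :
    A.IsHermitian := by
  have : Aᴴ = Aᵀ := by
    ext i j; simp [Matrix.conjTranspose_apply]
  rw [Matrix.IsHermitian, this, hA.eq]

lemma symm_dot_move {A : Matrix (Fin n) (Fin n) ℝ} (hA : A.IsSymm) (u v : Fin n → ℝ) :
    u ⬝ᵥ A.mulVec v = A.mulVec u ⬝ᵥ v := by
  rw [dotProduct_mulVec, ← Matrix.mulVec_transpose, hA.eq]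

/-- `H - μ•1` is positive definite for `μ < lambdaMin H`. -/
lemma shift_posDef [Nonempty (Fin n)] {H : Matrix (Fin n) (Fin n) ℝ} (hH : H.IsSymm)
    {μ : ℝ} (hμ : μ < lambdaMin H) : (H - μ • (1 : Matrix (Fin n) (Fin n) ℝ)).PosDef := by
  apply Matrix.PosDef.of_dotProduct_mulVec_pos
  · apply isHermitian_of_isSymm
    rw [Matrix.IsSymm] at *
    rw [Matrix.transpose_sub, hH, Matrix.transpose_smul, Matrix.transpose_one]
  · intro x hx
    have hq : x ⬝ᵥ (H - μ • (1 : Matrix (Fin n) (Fin n) ℝ)).mulVec x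
        = x ⬝ᵥ H.mulVec x - μ * (x ⬝ᵥ x) := by
      rw [Matrix.sub_mulVec, dotProduct_sub]
      congr 1
      rw [Matrix.smul_mulVec, Matrix.one_mulVec, dotProduct_smul, smul_eq_mul]
    have h1 := lambdaMin_quad_le H x
    have h2 : 0 < x ⬝ᵥ x := dot_self_pos hx
    simp only [star_trivial]
    rw [hq]
    nlinarith

lemma shift_quad {H : Matrix (Fin n) (Fin n) ℝ} (μ : ℝ) (v : Fin n → ℝ) :
    v ⬝ᵥ (H - μ • (1 : Matrix (Fin n) (Fin n) ℝ)).mulVec v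
      = v ⬝ᵥ H.mulVec v - μ * (v ⬝ᵥ v) := by
  rw [Matrix.sub_mulVec, dotProduct_sub]
  congr 1
  rw [Matrix.smul_mulVec, Matrix.one_mulVec, dotProduct_smul, smul_eq_mul]

lemma posDef_quad_nonneg {A : Matrix (Fin n) (Fin n) ℝ} (hA : A.PosDef) (v : Fin n → ℝ) :
    0 ≤ v ⬝ᵥ A.mulVec v := by
  rcases eq_or_ne v 0 with rfl | hv
  · simp
  · have := hA.dotProduct_mulVec_pos hv
    simp only [star_trivial] at this
    exact this.le

lemma posDef_inv_symm {A : Matrix (Fin n) (Fin n) ℝ} (hA : A.IsSymm) : (A⁻¹).IsSymm := by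
  rw [Matrix.IsSymm, Matrix.transpose_nonsing_inv, hA.eq]

lemma posDef_mul_inv {A : Matrix (Fin n) (Fin n) ℝ} (hA : A.PosDef) : A * A⁻¹ = 1 :=
  Matrix.mul_nonsing_inv A (Matrix.isUnit_iff_isUnit_det A |>.1 hA.isUnit)

lemma posDef_inv_mul {A : Matrix (Fin n) (Fin n) ℝ} (hA : A.PosDef) : A⁻¹ * A = 1 :=
  Matrix.nonsing_inv_mul A (Matrix.isUnit_iff_isUnit_det A |>.1 hA.isUnit)

lemma posDef_mulVec_inv {A : Matrix (Fin n) (Fin n) ℝ} (hA : A.PosDef) (u : Fin n → ℝ) :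
    A.mulVec (A⁻¹.mulVec u) = u := by
  rw [Matrix.mulVec_mulVec, posDef_mul_inv hA, Matrix.one_mulVec]

end SymHelpers
section Secular
variable {n : ℕ}

lemma shift_isSymm {H : Matrix (Fin n) (Fin n) ℝ} (hH : H.IsSymm) (μ : ℝ) :
    (H - μ • (1 : Matrix (Fin n) (Fin n) ℝ)).IsSymm := by
  rw [Matrix.IsSymm, Matrix.transpose_sub, hH.eq, Matrix.transpose_smul, Matrix.transpose_one]

lemma secular_quad [Nonempty (Fin n)] (g : Fin n → ℝ) {H : Matrix (Fin n) (Fin n) ℝ}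
    (hH : H.IsSymm) {μ : ℝ} (hμ : μ < lambdaMin H) (x : Fin (n+1) → ℝ) :
    x ⬝ᵥ (Bmat g H (μ + g ⬝ᵥ (H - μ • (1:Matrix (Fin n) (Fin n) ℝ))⁻¹.mulVec g)).mulVec x
      - μ * (x ⬝ᵥ x)
    = (Fin.tail x + x 0 • ((H - μ • (1:Matrix (Fin n) (Fin n) ℝ))⁻¹.mulVec g)) ⬝ᵥ
        (H - μ • (1:Matrix (Fin n) (Fin n) ℝ)).mulVec
          (Fin.tail x + x 0 • ((H - μ • (1:Matrix (Fin n) (Fin n) ℝ))⁻¹.mulVec g)) := by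
  set M := H - μ • (1:Matrix (Fin n) (Fin n) ℝ) with hM
  set w := M⁻¹.mulVec g with hw
  set v := Fin.tail x with hv
  have hMpd : M.PosDef := shift_posDef hH hμ
  have hMw : M.mulVec w = g := posDef_mulVec_inv hMpd g
  have hMsymm : M.IsSymm := shift_isSymm hH μ
  rw [Bmat_quad, dot_split]
  have hRHS : (v + x 0 • w) ⬝ᵥ M.mulVec (v + x 0 • w)
      = v ⬝ᵥ M.mulVec v + x 0 * (v ⬝ᵥ g) + x 0 * (g ⬝ᵥ v) + x 0 ^ 2 * (g ⬝ᵥ w) := by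
    rw [Matrix.mulVec_add, Matrix.mulVec_smul, hMw]
    rw [add_dotProduct, smul_dotProduct]
    rw [dotProduct_add, dotProduct_add]
    have h1 : v ⬝ᵥ (x 0 • g) = x 0 * (v ⬝ᵥ g) := by
      rw [dotProduct_smul, smul_eq_mul]
    have h2 : w ⬝ᵥ M.mulVec v = g ⬝ᵥ v := by rw [symm_dot_move hMsymm, hMw]
    have h3 : w ⬝ᵥ (x 0 • g) = x 0 * (g ⬝ᵥ w) := by
      rw [dotProduct_smul, smul_eq_mul, dotProduct_comm]
    rw [h1, h2, h3]
    simp only [smul_eq_mul, smul_add]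
    ring
  rw [hRHS]
  have hMv : v ⬝ᵥ M.mulVec v = v ⬝ᵥ H.mulVec v - μ * (v ⬝ᵥ v) := shift_quad μ v
  rw [hMv, dotProduct_comm v g]
  ring

lemma secular [Nonempty (Fin n)] (g : Fin n → ℝ) {H : Matrix (Fin n) (Fin n) ℝ}
    (hH : H.IsSymm) {μ : ℝ} (hμ : μ < lambdaMin H) :
    lambdaMin (Bmat g H (μ + g ⬝ᵥ (H - μ • (1:Matrix (Fin n) (Fin n) ℝ))⁻¹.mulVec g)) = μ := by
  set M := H - μ • (1:Matrix (Fin n) (Fin n) ℝ) with hM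
  have hMpd : M.PosDef := shift_posDef hH hμ
  apply lambdaMin_eq_of (x₀ := Fin.cons 1 (-(M⁻¹.mulVec g)))
  · intro x
    have h := secular_quad g hH hμ x
    have h2 := posDef_quad_nonneg hMpd
      (Fin.tail x + x 0 • (M⁻¹.mulVec g))
    rw [← h] at h2
    linarith
  · intro h
    have : (Fin.cons 1 (-(M⁻¹.mulVec g)) : Fin (n+1) → ℝ) 0 = 1 := Fin.cons_zero _ _
    rw [h] at this
    simp at this
  · have h := secular_quad g hH hμ (Fin.cons 1 (-(M⁻¹.mulVec g)))
    rw [Fin.tail_cons, Fin.cons_zero] at h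
    rw [← hM] at h
    simp only [one_smul, neg_add_cancel] at h
    have : (0 : Fin n → ℝ) ⬝ᵥ M.mulVec 0 = 0 := by simp
    rw [this] at h
    linarith

end Secular
section Fprops
variable {n : ℕ}

lemma inv_posDef {M : Matrix (Fin n) (Fin n) ℝ} (hM : M.PosDef) : (M⁻¹).PosDef :=
  hM.inv

/-- monotonicity gap of the secular quantity -/
lemma F_quad_mono [Nonempty (Fin n)] (g : Fin n → ℝ) {H : Matrix (Fin n) (Fin n) ℝ}
    (hH : H.IsSymm) {μ₁ μ₂ : ℝ} (h12 : μ₁ ≤ μ₂) (h2 : μ₂ < lambdaMin H) :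
    g ⬝ᵥ (H - μ₁ • (1:Matrix (Fin n) (Fin n) ℝ))⁻¹.mulVec g
      ≤ g ⬝ᵥ (H - μ₂ • (1:Matrix (Fin n) (Fin n) ℝ))⁻¹.mulVec g := by
  set M₁ := H - μ₁ • (1:Matrix (Fin n) (Fin n) ℝ) with hM₁
  set M₂ := H - μ₂ • (1:Matrix (Fin n) (Fin n) ℝ) with hM₂
  have h1 : μ₁ < lambdaMin H := lt_of_le_of_lt h12 h2
  have hpd₁ : M₁.PosDef := shift_posDef hH h1
  have hpd₂ : M₂.PosDef := shift_posDef hH h2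
  set w := M₁⁻¹.mulVec g with hw
  set c := μ₂ - μ₁ with hc
  have hcnn : 0 ≤ c := by linarith
  have hM1w : M₁.mulVec w = g := posDef_mulVec_inv hpd₁ g
  have hdiffM : M₁ - M₂ = c • (1:Matrix (Fin n) (Fin n) ℝ) := by
    rw [hM₁, hM₂, hc, sub_smul]; abel
  have hres : M₂⁻¹ - M₁⁻¹ = c • (M₂⁻¹ * M₁⁻¹) := by
    have : M₂⁻¹ - M₁⁻¹ = M₂⁻¹ * (M₁ - M₂) * M₁⁻¹ := by
      rw [Matrix.mul_sub, Matrix.sub_mul, Matrix.mul_assoc, posDef_mul_inv hpd₁,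
        posDef_inv_mul hpd₂]
      simp [Matrix.mul_one, Matrix.one_mul]
    rw [this, hdiffM]
    rw [Matrix.mul_smul, Matrix.smul_mul]
    simp [Matrix.mul_one]
  have hkey : g ⬝ᵥ M₂⁻¹.mulVec g - g ⬝ᵥ M₁⁻¹.mulVec g
      = c * (w ⬝ᵥ w + c * (w ⬝ᵥ M₂⁻¹.mulVec w)) := by
    have e1 : g ⬝ᵥ M₂⁻¹.mulVec g - g ⬝ᵥ M₁⁻¹.mulVec g
        = g ⬝ᵥ (M₂⁻¹ - M₁⁻¹).mulVec g := by
      rw [Matrix.sub_mulVec, dotProduct_sub]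
    rw [e1, hres]
    have e2 : (c • (M₂⁻¹ * M₁⁻¹)).mulVec g = c • (M₂⁻¹.mulVec w) := by
      rw [Matrix.smul_mulVec, ← Matrix.mulVec_mulVec]
    rw [e2, dotProduct_smul, smul_eq_mul]
    congr 1
    have hsymm₁ : M₁.IsSymm := shift_isSymm hH μ₁
    have e3 : g ⬝ᵥ M₂⁻¹.mulVec w = w ⬝ᵥ (M₁ * M₂⁻¹).mulVec w := by
      conv_lhs => rw [← hM1w]
      rw [← symm_dot_move hsymm₁, Matrix.mulVec_mulVec]
    have e4 : M₁ * M₂⁻¹ = 1 + c • M₂⁻¹ := by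
      have : M₁ = M₂ + c • (1:Matrix (Fin n) (Fin n) ℝ) := by
        rw [← hdiffM]; abel
      rw [this, Matrix.add_mul, posDef_mul_inv hpd₂, Matrix.smul_mul]
      simp [Matrix.one_mul]
    rw [e3, e4, Matrix.add_mulVec, dotProduct_add, Matrix.one_mulVec,
      Matrix.smul_mulVec, dotProduct_smul, smul_eq_mul]
  have hnn1 : 0 ≤ w ⬝ᵥ w := dot_self_nonneg w
  have hnn2 : 0 ≤ w ⬝ᵥ M₂⁻¹.mulVec w := posDef_quad_nonneg (inv_posDef hpd₂) w
  rw [hw]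
  nlinarith [mul_nonneg hcnn (add_nonneg hnn1 (mul_nonneg hcnn hnn2))]

lemma F_quad_nonneg [Nonempty (Fin n)] (g : Fin n → ℝ) {H : Matrix (Fin n) (Fin n) ℝ}
    (hH : H.IsSymm) {μ : ℝ} (hμ : μ < lambdaMin H) :
    0 ≤ g ⬝ᵥ (H - μ • (1:Matrix (Fin n) (Fin n) ℝ))⁻¹.mulVec g :=
  posDef_quad_nonneg (inv_posDef (shift_posDef hH hμ)) g

lemma F_quad_upper [Nonempty (Fin n)] (g : Fin n → ℝ) {H : Matrix (Fin n) (Fin n) ℝ}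
    (hH : H.IsSymm) {μ : ℝ} (hμ : μ < lambdaMin H) :
    (g ⬝ᵥ (H - μ • (1:Matrix (Fin n) (Fin n) ℝ))⁻¹.mulVec g) * (lambdaMin H - μ)
      ≤ g ⬝ᵥ g := by
  set M := H - μ • (1:Matrix (Fin n) (Fin n) ℝ) with hM
  have hpd : M.PosDef := shift_posDef hH hμ
  set w := M⁻¹.mulVec g with hw
  have hMw : M.mulVec w = g := posDef_mulVec_inv hpd g
  set q := g ⬝ᵥ w with hq
  have hqM : q = w ⬝ᵥ M.mulVec w := by
    rw [hq, ← hMw]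
    rw [symm_dot_move (shift_isSymm hH μ) w, dotProduct_comm]
  have hlow : (lambdaMin H - μ) * (w ⬝ᵥ w) ≤ q := by
    rw [hqM, shift_quad]
    have := lambdaMin_quad_le H w
    nlinarith [dot_self_nonneg w]
  have hcs : q ^ 2 ≤ (g ⬝ᵥ g) * (w ⬝ᵥ w) := by
    have := Finset.sum_mul_sq_le_sq_mul_sq Finset.univ g w
    simpa [hq, dotProduct, sq] using this
  have hd : 0 < lambdaMin H - μ := by linarith
  have hG : 0 ≤ g ⬝ᵥ g := dot_self_nonneg g
  rcases le_or_gt q 0 with hq0 | hq0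
  · nlinarith
  · nlinarith [dot_self_nonneg w]

end Fprops
section Fdiff
variable {n : ℕ}

lemma det_differentiableAt {k : ℕ} {A : ℝ → Matrix (Fin k) (Fin k) ℝ} {x : ℝ}
    (h : ∀ i j, DifferentiableAt ℝ (fun μ => A μ i j) x) :
    DifferentiableAt ℝ (fun μ => (A μ).det) x := by
  simp only [Matrix.det_apply]
  apply DifferentiableAt.fun_sum
  intro σ _
  have : (fun μ => Equiv.Perm.sign σ • ∏ i, A μ (σ i) i)
      = fun μ => ((Equiv.Perm.sign σ : ℤ) : ℝ) * ∏ i, A μ (σ i) i := by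
    funext μ
    rw [Units.smul_def, zsmul_eq_mul]
  rw [this]
  exact (DifferentiableAt.fun_finsetProd fun i _ => h (σ i) i).const_mul _

lemma entry_differentiableAt {k : ℕ} (H' : Matrix (Fin k) (Fin k) ℝ) (a b : Fin k) (x : ℝ) :
    DifferentiableAt ℝ (fun l => (H' - l • (1:Matrix (Fin k) (Fin k) ℝ)) a b) x := by
  have : (fun l => (H' - l • (1:Matrix (Fin k) (Fin k) ℝ)) a b)
      = fun l => H' a b - l * (1:Matrix (Fin k) (Fin k) ℝ) a b := by
    funext l
    simp [Matrix.sub_apply, Matrix.smul_apply, smul_eq_mul]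
  rw [this]
  exact (differentiableAt_const _).sub (differentiableAt_id.mul (differentiableAt_const _))

lemma Ffun_eq (g : Fin n → ℝ) (H : Matrix (Fin n) (Fin n) ℝ) (l : ℝ) :
    g ⬝ᵥ (H - l • (1:Matrix (Fin n) (Fin n) ℝ))⁻¹.mulVec g
      = ((H - l • (1:Matrix (Fin n) (Fin n) ℝ)).det)⁻¹ *
        (g ⬝ᵥ (H - l • (1:Matrix (Fin n) (Fin n) ℝ)).adjugate.mulVec g) := by
  simp only [Matrix.inv_def, Ring.inverse_eq_inv, Matrix.smul_mulVec,
    dotProduct_smul, smul_eq_mul]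

lemma Ffun_differentiableAt [Nonempty (Fin n)] (g : Fin n → ℝ)
    {H : Matrix (Fin n) (Fin n) ℝ} (hH : H.IsSymm) {μ : ℝ} (hμ : μ < lambdaMin H) :
    DifferentiableAt ℝ
      (fun l => l + g ⬝ᵥ (H - l • (1:Matrix (Fin n) (Fin n) ℝ))⁻¹.mulVec g) μ := by
  have hrw : (fun l : ℝ => l + g ⬝ᵥ (H - l • (1:Matrix (Fin n) (Fin n) ℝ))⁻¹.mulVec g)
      = fun l : ℝ => l + ((H - l • (1:Matrix (Fin n) (Fin n) ℝ)).det)⁻¹ *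
          (g ⬝ᵥ (H - l • (1:Matrix (Fin n) (Fin n) ℝ)).adjugate.mulVec g) := by
    funext l
    rw [Ffun_eq]
  rw [hrw]
  have hdet : DifferentiableAt ℝ
      (fun l => (H - l • (1:Matrix (Fin n) (Fin n) ℝ)).det) μ :=
    det_differentiableAt fun i j => entry_differentiableAt H i j μ
  have hdetne : (H - μ • (1:Matrix (Fin n) (Fin n) ℝ)).det ≠ 0 :=
    (shift_posDef hH hμ).det_pos.ne'
  have hadj : DifferentiableAt ℝ
      (fun l => g ⬝ᵥ (H - l • (1:Matrix (Fin n) (Fin n) ℝ)).adjugate.mulVec g) μ := by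
    have : (fun l : ℝ => g ⬝ᵥ (H - l • (1:Matrix (Fin n) (Fin n) ℝ)).adjugate.mulVec g)
        = fun l : ℝ => ∑ i, g i * ∑ j,
            ((H - l • (1:Matrix (Fin n) (Fin n) ℝ)).updateRow j (Pi.single i 1)).det * g j := by
      funext l
      simp [dotProduct, Matrix.mulVec, Matrix.adjugate_apply]
    rw [this]
    apply DifferentiableAt.fun_sum
    intro i _
    apply DifferentiableAt.const_mul
    apply DifferentiableAt.fun_sum
    intro j _
    apply DifferentiableAt.mul_const
    apply det_differentiableAt
    intro a b
    have : (fun l : ℝ => ((H - l • (1:Matrix (Fin n) (Fin n) ℝ)).updateRow j (Pi.single i 1)) a b)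
        = fun l : ℝ => if a = j then (Pi.single i (1:ℝ) : Fin n → ℝ) b
            else (H - l • (1:Matrix (Fin n) (Fin n) ℝ)) a b := by
      funext l
      rw [Matrix.updateRow_apply]
    rw [this]
    split_ifs
    · exact differentiableAt_const _
    · exact entry_differentiableAt H a b μ
  exact differentiableAt_id.add ((hdet.inv hdetne).mul hadj)

end Fdiff
section MconjHelpers

lemma mconj_nonneg {ρ : ℝ → EReal} (hρ : RhoBasic ρ) (u : ℝ) : 0 ≤ mconj ρ u := by
  have h := le_iSup (fun t : {t : ℝ // 0 ≤ t} =>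
    (((u * (t : ℝ) : ℝ) : EReal) - ρ t)) ⟨0, le_rfl⟩
  simp only [mul_zero] at h
  rw [hρ.2.1] at h
  simpa [mconj] using h

lemma mconj_ge {ρ : ℝ → EReal} (u s : ℝ) (hs : 0 ≤ s) :
    ((u * s : ℝ) : EReal) - ρ s ≤ mconj ρ u :=
  le_iSup (fun t : {t : ℝ // 0 ≤ t} => (((u * (t : ℝ) : ℝ) : EReal) - ρ t)) ⟨s, hs⟩

lemma mconj_ne_top {ρ : ℝ → EReal} (hρ : RhoBasic ρ) (h2 : Assump2 ρ) (u : ℝ) :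
    mconj ρ u ≠ ⊤ := by
  obtain ⟨T, hT⟩ := Filter.eventually_atTop.1 (h2 (u + 1))
  set T' := max T 0 with hT'
  have hT'0 : 0 ≤ T' := le_max_right _ _
  set b := |u| * T' with hb
  have hb0 : 0 ≤ b := mul_nonneg (abs_nonneg u) hT'0
  have hle : mconj ρ u ≤ (b : EReal) := by
    apply iSup_le
    rintro ⟨s, hs⟩
    rcases le_or_gt s T' with hsT | hsT
    · have h1 : ((u * s : ℝ) : EReal) - ρ s ≤ ((u * s : ℝ) : EReal) - 0 :=
        EReal.sub_le_sub le_rfl (hρ.1 s)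
      have h2' : u * s ≤ b := by
        calc u * s ≤ |u| * s := mul_le_mul_of_nonneg_right (le_abs_self u) hs
          _ ≤ |u| * T' := mul_le_mul_of_nonneg_left hsT (abs_nonneg u)
      calc ((u * s : ℝ) : EReal) - ρ s ≤ ((u * s : ℝ) : EReal) - 0 := h1
        _ = ((u * s : ℝ) : EReal) := by rw [sub_zero]
        _ ≤ (b : EReal) := EReal.coe_le_coe_iff.2 h2'
    · have hsT2 : T ≤ s := le_trans (le_max_left _ _) hsT.le
      have h1 : (((u + 1) * s : ℝ) : EReal) ≤ ρ s := hT s hsT2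
      have h2' : ((u * s : ℝ) : EReal) - ρ s ≤ ((u * s : ℝ) : EReal) - (((u + 1) * s : ℝ) : EReal) :=
        EReal.sub_le_sub le_rfl h1
      calc ((u * s : ℝ) : EReal) - ρ s
          ≤ ((u * s : ℝ) : EReal) - (((u + 1) * s : ℝ) : EReal) := h2'
        _ = ((u * s - (u + 1) * s : ℝ) : EReal) := by rw [← EReal.coe_sub]
        _ ≤ (b : EReal) := by
            apply EReal.coe_le_coe_iff.2
            have : 0 ≤ s := le_trans hT'0 hsT.le
            nlinarith
  intro htop
  rw [htop] at hle
  exact absurd (top_le_iff.1 hle) (EReal.coe_ne_top b)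

lemma mconj_ne_bot {ρ : ℝ → EReal} (hρ : RhoBasic ρ) (u : ℝ) : mconj ρ u ≠ ⊥ :=
  fun h => absurd (h ▸ mconj_nonneg hρ u) (by simp)

lemma mconj_eq_coe {ρ : ℝ → EReal} (hρ : RhoBasic ρ) (h2 : Assump2 ρ) (u : ℝ) :
    mconj ρ u = ((mconjR ρ u : ℝ) : EReal) :=
  (EReal.coe_toReal (mconj_ne_top hρ h2 u) (mconj_ne_bot hρ u)).symm

lemma mconjR_nonneg {ρ : ℝ → EReal} (hρ : RhoBasic ρ) (h2 : Assump2 ρ) (u : ℝ) :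
    0 ≤ mconjR ρ u := by
  have := mconj_nonneg hρ u
  rw [mconj_eq_coe hρ h2 u] at this
  exact_mod_cast this

end MconjHelpers

/-- auxiliary closed form of `khat` as a function of the smallest eigenvalue -/
def psiAux (ρ : ℝ → EReal) (μ : ℝ) : ℝ := if μ < 0 then μ - mconjR ρ (-μ) else 0

section KhatFormula
variable {n : ℕ}

lemma khat_coe (ρ : ℝ → EReal) (g : Fin n → ℝ) (H : Matrix (Fin n) (Fin n) ℝ)
    (hρ : RhoBasic ρ) (h1 : Assump1 ρ) (h2 : Assump2 ρ) (w : ℝ) :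
    khat ρ g H w = ((psiAux ρ (lambdaMin (Bmat g H w)) : ℝ) : EReal) := by
  set μ := lambdaMin (Bmat g H w) with hμdef
  rcases lt_or_ge μ 0 with hμ | hμ
  · -- negative case
    set c := mconjR ρ (-μ) with hc
    have hcoe : mconj ρ (-μ) = ((c : ℝ) : EReal) := mconj_eq_coe hρ h2 (-μ)
    have hcnn : 0 ≤ c := mconjR_nonneg hρ h2 (-μ)
    have hlower : ((μ - c : ℝ) : EReal) ≤ khat ρ g H w := by
      apply le_iInf
      rintro ⟨γ, hγ⟩
      rcases le_or_gt γ 1 with hγ1 | hγ1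
      · have hz : ρ (γ - 1) = 0 := h1.2.1 _ (by linarith)
        rw [hz, zero_add]
        apply EReal.coe_le_coe_iff.2
        nlinarith
      · have hs : (0:ℝ) ≤ γ - 1 := by linarith
        have hup := mconj_ge (ρ := ρ) (-μ) (γ - 1) hs
        rw [hcoe] at hup
        rcases eq_or_ne (ρ (γ - 1)) ⊤ with hρs | hρs
        · rw [hρs]
          rw [EReal.top_add_of_ne_bot (EReal.coe_ne_bot _)]
          exact le_top
        · have hρsb : ρ (γ - 1) ≠ ⊥ := by
            intro hbot
            have := hρ.1 (γ - 1)
            rw [hbot] at this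
            simp at this
          set r := (ρ (γ - 1)).toReal with hr
          have hρr : ρ (γ - 1) = ((r : ℝ) : EReal) := (EReal.coe_toReal hρs hρsb).symm
          rw [hρr] at hup ⊢
          rw [← EReal.coe_sub] at hup
          have hre : -μ * (γ - 1) - r ≤ c := EReal.coe_le_coe_iff.1 hup
          rw [← EReal.coe_add]
          apply EReal.coe_le_coe_iff.2
          nlinarith
    have hupper : khat ρ g H w ≤ ((μ - c : ℝ) : EReal) := by
      have hub : ∀ ε : ℝ, 0 < ε → khat ρ g H w ≤ ((μ - c + ε : ℝ) : EReal) := by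
        intro ε hε
        have hlt : ((c - ε : ℝ) : EReal) < mconj ρ (-μ) := by
          rw [hcoe]; exact EReal.coe_lt_coe_iff.2 (by linarith)
        rw [mconj] at hlt
        obtain ⟨⟨s, hs⟩, hterm⟩ := lt_iSup_iff.1 hlt
        have hρs : ρ s ≠ ⊤ := by
          intro htop
          rw [htop] at hterm
          rw [EReal.sub_top] at hterm
          exact absurd hterm (by simp)
        have hρsb : ρ s ≠ ⊥ := by
          intro hbot
          have := hρ.1 s
          rw [hbot] at this
          simp at this
        set r := (ρ s).toReal with hr
        have hρr : ρ s = ((r : ℝ) : EReal) := (EReal.coe_toReal hρs hρsb).symm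
        rw [hρr, ← EReal.coe_sub] at hterm
        have hre : c - ε < -μ * s - r := EReal.coe_lt_coe_iff.1 hterm
        have hkle := iInf_le (fun γ : {γ : ℝ // 0 ≤ γ} =>
          (ρ ((γ : ℝ) - 1) + ((((γ : ℝ) * μ) : ℝ) : EReal))) ⟨s + 1, by linarith⟩
        simp only at hkle
        have hsimp : s + 1 - 1 = s := by ring
        rw [hsimp, hρr, ← EReal.coe_add] at hkle
        refine le_trans hkle (EReal.coe_le_coe_iff.2 ?_)
        nlinarith
      have hnetop : khat ρ g H w ≠ ⊤ := by
        intro htop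
        have := hub 1 one_pos
        rw [htop] at this
        exact absurd (top_le_iff.1 this) (EReal.coe_ne_top _)
      have hnebot : khat ρ g H w ≠ ⊥ := by
        intro hbot
        rw [hbot] at hlower
        exact absurd (le_bot_iff.1 hlower) (EReal.coe_ne_bot _)
      set k := (khat ρ g H w).toReal with hk
      have hkcoe : khat ρ g H w = ((k : ℝ) : EReal) := (EReal.coe_toReal hnetop hnebot).symm
      rw [hkcoe]
      apply EReal.coe_le_coe_iff.2
      have : ∀ ε : ℝ, 0 < ε → k ≤ μ - c + ε := by
        intro ε hε
        have := hub ε hε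
        rw [hkcoe] at this
        exact EReal.coe_le_coe_iff.1 this
      by_contra hcon
      push_neg at hcon
      have := this ((k - (μ - c)) / 2) (by linarith)
      linarith
    have : khat ρ g H w = ((μ - c : ℝ) : EReal) := le_antisymm hupper hlower
    rw [this, psiAux, if_pos hμ]
  · -- nonnegative case
    have hlo : (0 : EReal) ≤ khat ρ g H w := by
      apply le_iInf
      rintro ⟨γ, hγ⟩
      apply add_nonneg (hρ.1 _)
      exact_mod_cast mul_nonneg hγ hμ
    have hhi : khat ρ g H w ≤ 0 := by
      have hkle := iInf_le (fun γ : {γ : ℝ // 0 ≤ γ} =>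
        (ρ ((γ : ℝ) - 1) + ((((γ : ℝ) * μ) : ℝ) : EReal))) ⟨0, le_rfl⟩
      simp only [zero_mul, zero_sub] at hkle
      rw [h1.2.1 (-1) (by norm_num)] at hkle
      show (⨅ γ : {γ : ℝ // 0 ≤ γ}, (ρ ((γ : ℝ) - 1) + ((((γ : ℝ) * μ) : ℝ) : EReal))) ≤ 0
      simpa using hkle
    have : khat ρ g H w = 0 := le_antisymm hhi hlo
    rw [this, psiAux, if_neg (not_lt.2 hμ)]
    simp

lemma khat_toReal (ρ : ℝ → EReal) (g : Fin n → ℝ) (H : Matrix (Fin n) (Fin n) ℝ)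
    (hρ : RhoBasic ρ) (h1 : Assump1 ρ) (h2 : Assump2 ρ) (w : ℝ) :
    (khat ρ g H w).toReal = psiAux ρ (lambdaMin (Bmat g H w)) := by
  rw [khat_coe ρ g H hρ h1 h2 w, EReal.toReal_coe]

end KhatFormula
section PosDefHelper
variable {n : ℕ}

lemma posDef_of_lambdaMin_pos [Nonempty (Fin n)] {H : Matrix (Fin n) (Fin n) ℝ}
    (hH : H.IsSymm) (h : 0 < lambdaMin H) : H.PosDef := by
  refine Matrix.PosDef.of_dotProduct_mulVec_pos (isHermitian_of_isSymm hH) fun x hx => ?_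
  simp only [star_trivial]
  have h1 := lambdaMin_quad_le H x
  have h2 := dot_self_pos hx
  nlinarith

end PosDefHelper
theorem stmt14 {n : ℕ} (g : Fin n → ℝ) (hg : g ≠ 0)
    (H : Matrix (Fin n) (Fin n) ℝ) (hH : H.IsSymm)
    (ρ : ℝ → EReal) (hρ : RhoBasic ρ) (h1 : Assump1 ρ) (h2 : Assump2 ρ) (h3 : Assump3 ρ)
    (tb : EReal)
    (htb : Filter.Tendsto (fun l : ℝ =>
        (((l + g ⬝ᵥ ((H - l • (1 : Matrix (Fin n) (Fin n) ℝ))⁻¹).mulVec g) : ℝ) : EReal))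
      (nhdsWithin (lambdaMin H) (Iio (lambdaMin H))) (nhds tb)) :
    (∀ t : ℝ, (t : EReal) ≠ tb →
        (0 < lambdaMin H → t ≠ g ⬝ᵥ H⁻¹.mulVec g) →
        DifferentiableAt ℝ (fun w : ℝ => (khat ρ g H w).toReal) t) ∧
      (¬H.PosDef → ∀ t : ℝ, (t : EReal) ≠ tb →
        DifferentiableAt ℝ (fun w : ℝ => (khat ρ g H w).toReal) t) := by
  classical
  have hn : n ≠ 0 := by
    rintro rfl
    exact hg (funext fun i => i.elim0)
  have hne : Nonempty (Fin n) := ⟨⟨0, Nat.pos_of_ne_zero hn⟩⟩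
  set lm := lambdaMin H with hlm
  set F : ℝ → ℝ :=
    fun l => l + g ⬝ᵥ (H - l • (1 : Matrix (Fin n) (Fin n) ℝ))⁻¹.mulVec g with hFdef
  set lam : ℝ → ℝ := fun t => lambdaMin (Bmat g H t) with hlamdef
  -- secular identity
  have hsec : ∀ μ, μ < lm → lam (F μ) = μ := fun μ hμ => secular g hH hμ
  -- monotonicity gap
  have hgap : ∀ a b : ℝ, a ≤ b → b < lm → b - a ≤ F b - F a := by
    intro a b hab hbl
    have := F_quad_mono g hH hab hbl
    simp only [hFdef]
    linarith
  -- F μ ≤ tb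
  have hF_le_tb : ∀ μ, μ < lm → (F μ : EReal) ≤ tb := by
    intro μ hμ
    refine ge_of_tendsto htb ?_
    have hmem : Ioo μ lm ∈ nhdsWithin lm (Iio lm) := by
      apply mem_nhdsWithin.2
      exact ⟨Ioi μ, isOpen_Ioi, hμ, by
        rintro x ⟨hx1, hx2⟩
        exact ⟨hx1, hx2⟩⟩
    filter_upwards [hmem] with l hl
    have : F μ ≤ F l := by
      have := hgap μ l hl.1.le hl.2
      linarith [hl.1]
    exact_mod_cast this
  -- Lipschitz continuity of lam
  have hlam_lip : ∀ a b : ℝ, lam a ≤ lam b + |a - b| := by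
    intro a b
    have key : ∀ x : Fin (n+1) → ℝ, x ⬝ᵥ x = 1 →
        lam a - |a - b| ≤ x ⬝ᵥ (Bmat g H b).mulVec x := by
      intro x hx
      have h1 : lam a ≤ x ⬝ᵥ (Bmat g H a).mulVec x := lambdaMin_le _ hx
      have h2 : x ⬝ᵥ (Bmat g H a).mulVec x
          = x ⬝ᵥ (Bmat g H b).mulVec x + (a - b) * x 0 ^ 2 := by
        rw [Bmat_quad, Bmat_quad]; ring
      have h3 : x 0 ^ 2 ≤ 1 := by
        have := dot_split x
        rw [hx] at this
        nlinarith [dot_self_nonneg (Fin.tail x)]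
      have h4 : (a - b) * x 0 ^ 2 ≤ |a - b| := by
        calc (a - b) * x 0 ^ 2 ≤ |a - b| * x 0 ^ 2 :=
              mul_le_mul_of_nonneg_right (le_abs_self _) (sq_nonneg _)
          _ ≤ |a - b| * 1 := mul_le_mul_of_nonneg_left h3 (abs_nonneg _)
          _ = |a - b| := mul_one _
      linarith
    have := le_lambdaMin key
    simp only [hlamdef]
    linarith [this]
  have hlam_cont : Continuous lam := by
    apply LipschitzWith.continuous (K := 1)
    apply LipschitzWith.of_dist_le_mul
    intro a b
    rw [Real.dist_eq, Real.dist_eq]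
    rw [show ((1:NNReal):ℝ) * |a - b| = |a - b| by norm_num]
    rw [abs_sub_le_iff]
    constructor
    · have := hlam_lip a b; linarith [this]
    · have := hlam_lip b a; rw [abs_sub_comm] at this; linarith [this]
  -- constancy above tb
  have hconst : ∀ s : ℝ, tb ≤ (s : EReal) → lam s = lm := by
    intro s hs
    haveI := sphere_nonempty (m := Fin n)
    have hle : lam s ≤ lm := by
      apply le_ciInf
      intro v
      have hx : (Fin.cons 0 (v : Fin n → ℝ) : Fin (n+1) → ℝ) ⬝ᵥ
          (Fin.cons 0 (v : Fin n → ℝ)) = 1 := by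
        rw [dot_split, Fin.tail_cons, Fin.cons_zero]
        rw [v.2]; ring
      have := lambdaMin_le (Bmat g H s) hx
      rw [Bmat_quad, Fin.tail_cons, Fin.cons_zero] at this
      simpa using this
    have hge : lm ≤ lam s := by
      apply le_lambdaMin
      intro x hx
      by_contra hcon
      push_neg at hcon
      obtain ⟨μ, hμ1, hμ2⟩ := exists_between hcon
      have hμl : μ < lm := hμ2
      have hFμs : F μ ≤ s := by
        have := hF_le_tb μ hμl
        have h' : (F μ : EReal) ≤ (s : EReal) := le_trans this hs
        exact_mod_cast h'
      have hq := secular_quad g hH hμl x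
      have hq2 : x ⬝ᵥ (Bmat g H s).mulVec x
          = x ⬝ᵥ (Bmat g H (F μ)).mulVec x + (s - F μ) * x 0 ^ 2 := by
        rw [Bmat_quad, Bmat_quad]
        simp only [hFdef]
        ring
      have hnn := posDef_quad_nonneg (shift_posDef hH hμl)
        (Fin.tail x + x 0 • ((H - μ • (1:Matrix (Fin n) (Fin n) ℝ))⁻¹.mulVec g))
      rw [← hq] at hnn
      rw [hx] at hnn
      nlinarith [sq_nonneg (x 0)]
    linarith
  -- solving F μ = s for s < tb
  have hinv : ∀ s : ℝ, (s : EReal) < tb → ∃ μ, μ < lm ∧ F μ = s := by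
    intro s hs
    have hev : ∀ᶠ l in nhdsWithin lm (Iio lm), (s : EReal) < ((F l : ℝ) : EReal) :=
      htb.eventually (eventually_gt_nhds hs)
    obtain ⟨μ₁, hμ₁⟩ := (hev.and self_mem_nhdsWithin).exists
    have hμ₁l : μ₁ < lm := hμ₁.2
    have hsμ₁ : s < F μ₁ := by exact_mod_cast hμ₁.1
    set μ₀ := min (lm - 1) (s - 1 - g ⬝ᵥ g) with hμ₀def
    have hμ₀l : μ₀ < lm := lt_of_le_of_lt (min_le_left _ _) (by linarith)
    have hFμ₀ : F μ₀ < s := by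
      have hup := F_quad_upper g hH hμ₀l
      have hd1 : 1 ≤ lm - μ₀ := by
        have := min_le_left (lm - 1) (s - 1 - g ⬝ᵥ g)
        simp only [hμ₀def]
        linarith [this]
      have hq0 : 0 ≤ g ⬝ᵥ (H - μ₀ • (1:Matrix (Fin n) (Fin n) ℝ))⁻¹.mulVec g :=
        F_quad_nonneg g hH hμ₀l
      have hqb : g ⬝ᵥ (H - μ₀ • (1:Matrix (Fin n) (Fin n) ℝ))⁻¹.mulVec g ≤ g ⬝ᵥ g := by
        nlinarith
      have hμ₀s : μ₀ ≤ s - 1 - g ⬝ᵥ g := min_le_right _ _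
      simp only [hFdef]
      linarith
    rcases le_or_gt μ₀ μ₁ with hle | hlt
    · have hcont : ContinuousOn F (Icc μ₀ μ₁) := by
        intro ν hν
        exact ((Ffun_differentiableAt g hH
          (lt_of_le_of_lt hν.2 hμ₁l)).continuousAt).continuousWithinAt
      have hmem : s ∈ Icc (F μ₀) (F μ₁) := ⟨hFμ₀.le, hsμ₁.le⟩
      obtain ⟨μ, hμIcc, hFμ⟩ := intermediate_value_Icc hle hcont hmem
      exact ⟨μ, lt_of_le_of_lt hμIcc.2 hμ₁l, hFμ⟩
    · exfalso
      have := hgap μ₁ μ₀ hlt.le hμ₀l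
      linarith
  -- khat formula
  have hkhat : (fun w : ℝ => (khat ρ g H w).toReal) = fun w => psiAux ρ (lam w) :=
    funext fun w => khat_toReal ρ g H hρ h1 h2 w
  -- main statement
  have main : ∀ t : ℝ, (t : EReal) ≠ tb →
      (0 < lm → t ≠ g ⬝ᵥ H⁻¹.mulVec g) →
      DifferentiableAt ℝ (fun w : ℝ => (khat ρ g H w).toReal) t := by
    intro t htne hexc
    rw [hkhat]
    rcases lt_trichotomy ((t : ℝ) : EReal) tb with hlt | heq | hgt
    · -- below tb : lam is locally the inverse of F
      obtain ⟨μ, hμl, hFμ⟩ := hinv t hlt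
      have hlamt : lam t = μ := by rw [← hFμ]; exact hsec μ hμl
      have hFd : DifferentiableAt ℝ F μ := Ffun_differentiableAt g hH hμl
      have hFd' : HasDerivAt F (deriv F μ) μ := hFd.hasDerivAt
      have hd1 : 1 ≤ deriv F μ := by
        have hslope := hasDerivAt_iff_tendsto_slope.1 hFd'
        refine ge_of_tendsto hslope ?_
        have hmem1 : Iio lm ∈ 𝓝 μ := isOpen_Iio.mem_nhds hμl
        filter_upwards [mem_nhdsWithin_of_mem_nhds hmem1, self_mem_nhdsWithin]
          with y hyl hyne
        have hyne' : y ≠ μ := hyne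
        rw [slope_def_field]
        rcases lt_or_gt_of_ne hyne' with hy | hy
        · have hgap2 := hgap y μ hy.le hμl
          have heq2 : (F y - F μ) / (y - μ) = (F μ - F y) / (μ - y) := by
            have hne1 : y - μ ≠ 0 := by linarith
            have hne2 : μ - y ≠ 0 := by linarith
            field_simp
            ring
          rw [heq2, le_div_iff₀ (by linarith : (0:ℝ) < μ - y)]
          linarith
        · have hgap2 := hgap μ y hy.le hyl
          rw [le_div_iff₀ (by linarith : (0:ℝ) < y - μ)]
          linarith
      have hlamCont : ContinuousAt lam t := hlam_cont.continuousAt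
      have hopen : IsOpen {y : ℝ | (y : EReal) < tb} :=
        isOpen_Iio.preimage continuous_coe_real_ereal
      have hleft : ∀ᶠ y in 𝓝 t, F (lam y) = y := by
        filter_upwards [hopen.mem_nhds hlt] with y hy
        obtain ⟨ν, hνl, hFν⟩ := hinv y hy
        have : lam y = ν := by rw [← hFν]; exact hsec ν hνl
        rw [this, hFν]
      have hFd'' : HasDerivAt F (deriv F μ) (lam t) := by rw [hlamt]; exact hFd'
      have hlamd : HasDerivAt lam (deriv F μ)⁻¹ t :=
        HasDerivAt.of_local_left_inverse hlamCont hFd'' (by linarith) hleft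
      rcases lt_trichotomy μ 0 with hμ0 | hμ0 | hμ0
      · -- lam t < 0
        have h0 : lam t < 0 := by rw [hlamt]; exact hμ0
        have hev : ∀ᶠ y in 𝓝 t, lam y < 0 :=
          hlamCont.preimage_mem_nhds (Iio_mem_nhds h0)
        have heq' : (fun w => psiAux ρ (lam w)) =ᶠ[𝓝 t]
            fun w => lam w - mconjR ρ (-(lam w)) := by
          filter_upwards [hev] with y hy
          simp [psiAux, hy]
        rw [Filter.EventuallyEq.differentiableAt_iff heq']
        have hmd : DifferentiableAt ℝ (mconjR ρ) (-(lam t)) := by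
          apply h3
          rw [hlamt]; linarith
        have hcomp : DifferentiableAt ℝ (fun w => mconjR ρ (-(lam w))) t := by
          have := hmd.comp t (hlamd.differentiableAt.neg)
          exact this
        exact hlamd.differentiableAt.sub hcomp
      · -- lam t = 0 : excluded point
        exfalso
        have hlmpos : 0 < lm := by rw [hμ0] at hμl; exact hμl
        apply hexc hlmpos
        rw [← hFμ, hμ0]
        simp only [hFdef]
        rw [zero_smul, sub_zero, zero_add]
      · -- lam t > 0 : khat locally 0
        have h0 : 0 < lam t := by rw [hlamt]; exact hμ0
        have hev : ∀ᶠ y in 𝓝 t, 0 < lam y :=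
          hlamCont.preimage_mem_nhds (Ioi_mem_nhds h0)
        have heq' : (fun w => psiAux ρ (lam w)) =ᶠ[𝓝 t] fun _ => (0:ℝ) := by
          filter_upwards [hev] with y hy
          simp [psiAux, not_lt.2 hy.le]
        rw [Filter.EventuallyEq.differentiableAt_iff heq']
        exact differentiableAt_const 0
    · exact absurd heq htne
    · -- above tb : lam locally constant
      have hbot : tb ≠ ⊥ := by
        intro hb
        have := hF_le_tb (lm - 1) (by linarith)
        rw [hb] at this
        exact absurd (le_bot_iff.1 this) (EReal.coe_ne_bot _)
      have htop : tb ≠ ⊤ := by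
        intro ht
        rw [ht] at hgt
        exact absurd hgt (not_lt.2 le_top)
      obtain ⟨r, hr⟩ : ∃ r : ℝ, tb = (r : EReal) :=
        ⟨tb.toReal, (EReal.coe_toReal htop hbot).symm⟩
      have hrt : r < t := by
        rw [hr] at hgt
        exact_mod_cast hgt
      have heq' : (fun w => psiAux ρ (lam w)) =ᶠ[𝓝 t] fun _ => psiAux ρ lm := by
        filter_upwards [isOpen_Ioi.mem_nhds hrt] with y hy
        rw [hconst y (by rw [hr]; exact_mod_cast hy.le)]
      rw [Filter.EventuallyEq.differentiableAt_iff heq']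
      exact differentiableAt_const _
  refine ⟨main, fun hnpd t htne => main t htne fun hpos => ?_⟩
  exact absurd (posDef_of_lambdaMin_pos hH hpos) hnpd

end
end

section
/- Let g ∈ ℝⁿ \ {0}, let H be a symmetric n×n real matrix, and let ρ: ℝ → [0,∞] be a proper closed convex function with ρ(0) = 0 satisfying Assumptions 1–3. For t ∈ ℝ, let λ(t) be the smallest eigenvalue of B(t) := [[t, gᵀ],[g, H]], set t̄ := lim_{λ↑λ_min(H)} [λ + gᵀ(H − λI)⁻¹g] ∈ (−∞, ∞], define k̂(t) := inf_{γ ≥ 0} { ρ(γ − 1) + γλ(t) }, and let t* be a maximizer of t ↦ k̂(t) − t. Then: (i) if λ(t*) = 0, then λ_min(H) ≥ 0 and g ∈ Range(H); (ii) if λ(t*) ≠ 0 and t* = t̄, then λ(t*) < 0, λ(t*) = λ_min(H), and g ∈ Range(H − λ_min(H)I). -/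
open Matrix Filter Set Topology

noncomputable section

/-! ### Auxiliary lemmas -/

namespace RW17

lemma quadform_bmat {n : ℕ} (g : Fin n → ℝ) (H : Matrix (Fin n) (Fin n) ℝ) (t : ℝ)
    (x : Fin (n+1) → ℝ) :
    x ⬝ᵥ (Bmat g H t).mulVec x
      = t * (x 0 * x 0) + 2 * (x 0 * (g ⬝ᵥ Fin.tail x)) + (Fin.tail x) ⬝ᵥ H.mulVec (Fin.tail x) := by
  have h0 : (Bmat g H t).mulVec x 0 = t * x 0 + g ⬝ᵥ Fin.tail x := by
    simp [Bmat, mulVec, dotProduct, Fin.sum_univ_succ, Fin.tail]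
  have hs : ∀ i : Fin n, (Bmat g H t).mulVec x i.succ = g i * x 0 + H.mulVec (Fin.tail x) i := by
    intro i
    simp [Bmat, mulVec, dotProduct, Fin.sum_univ_succ, Fin.tail]
  rw [dotProduct, Fin.sum_univ_succ, h0]
  simp only [hs]
  rw [show (∑ i : Fin n, x i.succ * (g i * x 0 + H.mulVec (Fin.tail x) i))
      = x 0 * (∑ i : Fin n, g i * x i.succ)
        + ∑ i : Fin n, x i.succ * H.mulVec (Fin.tail x) i by
    rw [Finset.mul_sum, ← Finset.sum_add_distrib]; apply Finset.sum_congr rfl; intros; ring]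
  have hg : g ⬝ᵥ Fin.tail x = ∑ i : Fin n, g i * x i.succ := rfl
  have hx : Fin.tail x ⬝ᵥ H.mulVec (Fin.tail x)
      = ∑ i : Fin n, x i.succ * H.mulVec (Fin.tail x) i := rfl
  rw [hg, hx]
  ring

lemma bddBelow_ray {m : Type*} [Fintype m] (A : Matrix m m ℝ) :
    BddBelow (Set.range fun x : {x : m → ℝ // x ⬝ᵥ x = 1} =>
      (x : m → ℝ) ⬝ᵥ A.mulVec (x : m → ℝ)) := by
  refine ⟨-(∑ i, ∑ j, |A i j|), ?_⟩
  rintro r ⟨⟨x, hx⟩, rfl⟩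
  have habs : ∀ i, |x i| ≤ 1 := by
    intro i
    have h1 : x i ^ 2 ≤ ∑ j, x j ^ 2 := by
      apply Finset.single_le_sum (f := fun j => x j ^ 2) (fun j _ => sq_nonneg _)
        (Finset.mem_univ i)
    have h2 : ∑ j, x j ^ 2 = 1 := by
      rw [← hx]; simp [dotProduct, sq]
    nlinarith [abs_nonneg (x i), sq_abs (x i)]
  simp only [dotProduct, mulVec]
  rw [neg_le, ← Finset.sum_neg_distrib]
  apply Finset.sum_le_sum; intro i _
  rw [Finset.mul_sum, neg_le, ← Finset.sum_neg_distrib]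
  apply Finset.sum_le_sum; intro j _
  have : |x i * (A i j * x j)| ≤ |A i j| := by
    rw [abs_mul, abs_mul]
    calc |x i| * (|A i j| * |x j|) ≤ 1 * (|A i j| * 1) := by
          apply mul_le_mul (habs i) _ (by positivity) zero_le_one
          exact mul_le_mul_of_nonneg_left (habs j) (abs_nonneg _)
      _ = |A i j| := by ring
  nlinarith [neg_abs_le (x i * (A i j * x j))]

lemma lambdaMin_le {m : Type*} [Fintype m] (A : Matrix m m ℝ) (x : m → ℝ) (hx : x ⬝ᵥ x = 1) :
    lambdaMin A ≤ x ⬝ᵥ A.mulVec x :=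
  ciInf_le (bddBelow_ray A) ⟨x, hx⟩

lemma dotProduct_self_nonneg' {m : Type*} [Fintype m] (x : m → ℝ) : 0 ≤ x ⬝ᵥ x :=
  Finset.sum_nonneg fun _ _ => mul_self_nonneg _

lemma rayleigh_lower {m : Type*} [Fintype m] (A : Matrix m m ℝ) (x : m → ℝ) :
    lambdaMin A * (x ⬝ᵥ x) ≤ x ⬝ᵥ A.mulVec x := by
  rcases eq_or_lt_of_le (dotProduct_self_nonneg' x) with h | h
  · have hx0 : x = 0 := by
      funext i
      have h0 : ∑ j, x j * x j = 0 := h.symm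
      have h1 : x i * x i = 0 := (Finset.sum_eq_zero_iff_of_nonneg
        (fun j _ => mul_self_nonneg (x j))).1 h0 i (Finset.mem_univ i)
      simpa using mul_self_eq_zero.mp h1
    subst hx0
    simp [dotProduct]
  · have hc : (0:ℝ) < ((Real.sqrt (x ⬝ᵥ x))⁻¹) ^ 2 := by positivity
    set c : ℝ := (Real.sqrt (x ⬝ᵥ x))⁻¹ with hcdef
    have hcs : c ^ 2 * (x ⬝ᵥ x) = 1 := by
      rw [hcdef, ← Real.sqrt_inv, Real.sq_sqrt (by positivity)]
      field_simp
    have hunit : (c • x) ⬝ᵥ (c • x) = 1 := by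
      rw [smul_dotProduct, dotProduct_smul]
      simp only [smul_eq_mul, ← mul_assoc, ← sq]
      exact hcs
    have hle := lambdaMin_le A (c • x) hunit
    rw [smul_dotProduct, mulVec_smul, dotProduct_smul] at hle
    have hle2 : lambdaMin A ≤ c ^ 2 * (x ⬝ᵥ A.mulVec x) := by
      simpa [smul_eq_mul, ← mul_assoc, sq] using hle
    calc lambdaMin A * (x ⬝ᵥ x) ≤ (c ^ 2 * (x ⬝ᵥ A.mulVec x)) * (x ⬝ᵥ x) :=
          mul_le_mul_of_nonneg_right hle2 h.le
      _ = (c ^ 2 * (x ⬝ᵥ x)) * (x ⬝ᵥ A.mulVec x) := by ring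
      _ = x ⬝ᵥ A.mulVec x := by rw [hcs, one_mul]

lemma coord_sq_le_one {m : Type*} [Fintype m] (x : m → ℝ) (hx : x ⬝ᵥ x = 1) (i : m) :
    x i * x i ≤ 1 := by
  have h1 : x i * x i ≤ ∑ j, x j * x j :=
    Finset.single_le_sum (f := fun j => x j * x j) (fun j _ => mul_self_nonneg _)
      (Finset.mem_univ i)
  simpa [dotProduct] using h1.trans_eq hx

lemma sphere_nonempty_succ (k : ℕ) : Nonempty {x : Fin (k+1) → ℝ // x ⬝ᵥ x = 1} :=
  ⟨⟨Pi.single 0 1, by simp [dotProduct, Pi.single_apply]⟩⟩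

lemma lambdaMin_ge {m : Type*} [Fintype m] [Nonempty {x : m → ℝ // x ⬝ᵥ x = 1}]
    (A : Matrix m m ℝ) (c : ℝ) (h : ∀ x : m → ℝ, x ⬝ᵥ x = 1 → c ≤ x ⬝ᵥ A.mulVec x) :
    c ≤ lambdaMin A :=
  le_ciInf fun x => h x.1 x.2

lemma cons_unit {n : ℕ} (x : Fin n → ℝ) (hx : x ⬝ᵥ x = 1) :
    (Fin.cons 0 x : Fin (n+1) → ℝ) ⬝ᵥ (Fin.cons 0 x) = 1 := by
  simp only [dotProduct, Fin.sum_univ_succ, Fin.cons_zero, Fin.cons_succ]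
  simpa [dotProduct] using hx

lemma lambdaMin_bmat_le_lambdaMin {k : ℕ} (g : Fin (k+1) → ℝ)
    (H : Matrix (Fin (k+1)) (Fin (k+1)) ℝ) (t : ℝ) :
    lambdaMin (Bmat g H t) ≤ lambdaMin H := by
  have : Nonempty {x : Fin (k+1) → ℝ // x ⬝ᵥ x = 1} := sphere_nonempty_succ k
  apply lambdaMin_ge
  intro x hx
  have h1 := lambdaMin_le (Bmat g H t) (Fin.cons 0 x) (cons_unit x hx)
  rw [quadform_bmat] at h1
  simpa [Fin.tail_cons] using h1

lemma lambdaMin_bmat_lipschitz {n : ℕ} (g : Fin n → ℝ) (H : Matrix (Fin n) (Fin n) ℝ)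
    (t ε : ℝ) (hε : 0 ≤ ε) :
    lambdaMin (Bmat g H t) - ε ≤ lambdaMin (Bmat g H (t - ε)) := by
  have : Nonempty {x : Fin (n+1) → ℝ // x ⬝ᵥ x = 1} := sphere_nonempty_succ n
  apply lambdaMin_ge
  intro x hx
  have h1 := lambdaMin_le (Bmat g H t) x hx
  rw [quadform_bmat] at h1 ⊢
  have h2 : ε * (x 0 * x 0) ≤ ε := by
    have := coord_sq_le_one x hx 0
    nlinarith
  nlinarith [h1, h2]

lemma fredholm {n : ℕ} (A : Matrix (Fin n) (Fin n) ℝ) (hA : A.IsHermitian) (g : Fin n → ℝ)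
    (h : ∀ v : Fin n → ℝ, A.mulVec v = 0 → g ⬝ᵥ v = 0) : ∃ y : Fin n → ℝ, A.mulVec y = g := by
  set f : EuclideanSpace ℝ (Fin n) →ₗ[ℝ] EuclideanSpace ℝ (Fin n) := Matrix.toEuclideanLin A with hf
  have hsymm : f.IsSymmetric := Matrix.isHermitian_iff_isSymmetric.1 hA
  have hrange_le : LinearMap.range f ≤ (LinearMap.ker f)ᗮ := by
    rintro _ ⟨x, rfl⟩
    intro v hv
    rw [LinearMap.mem_ker] at hv
    rw [← hsymm v x, hv, inner_zero_left]
  have hdim : Module.finrank ℝ ↥(LinearMap.range f) = Module.finrank ℝ ↥((LinearMap.ker f)ᗮ) := by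
    have h1 := LinearMap.finrank_range_add_finrank_ker f
    have h2 := Submodule.finrank_add_finrank_orthogonal (K := LinearMap.ker f)
    omega
  have hrange : LinearMap.range f = (LinearMap.ker f)ᗮ :=
    Submodule.eq_of_le_of_finrank_eq hrange_le hdim
  have hg : (WithLp.toLp 2 g : EuclideanSpace ℝ (Fin n)) ∈ (LinearMap.ker f)ᗮ := by
    intro v hv
    rw [LinearMap.mem_ker] at hv
    have hv' : A.mulVec (WithLp.ofLp v) = 0 := by
      have h3 : (WithLp.equiv 2 (Fin n → ℝ)) (f v) = A.mulVec ((WithLp.equiv 2 (Fin n → ℝ)) v) :=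
        Matrix.ofLp_toEuclideanLin_apply A v
      rw [hv] at h3
      simpa using h3.symm
    simpa [PiLp.inner_apply, dotProduct, mul_comm] using h (WithLp.ofLp v) hv'
  rw [← hrange] at hg
  obtain ⟨y, hy⟩ := hg
  refine ⟨WithLp.ofLp y, ?_⟩
  have h3 : (WithLp.equiv 2 (Fin n → ℝ)) (f y) = A.mulVec ((WithLp.equiv 2 (Fin n → ℝ)) y) :=
    Matrix.ofLp_toEuclideanLin_apply A y
  rw [hy] at h3
  simpa using h3.symm

lemma mulVec_dot {n : ℕ} {A : Matrix (Fin n) (Fin n) ℝ} (hA : Aᵀ = A) (v w : Fin n → ℝ) :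
    (A.mulVec v) ⬝ᵥ w = v ⬝ᵥ A.mulVec w :=
  calc (A.mulVec v) ⬝ᵥ w = w ⬝ᵥ (A.mulVec v) := dotProduct_comm _ _
    _ = (w ᵥ* A) ⬝ᵥ v := Matrix.dotProduct_mulVec w A v
    _ = (Aᵀ.mulVec w) ⬝ᵥ v := by rw [Matrix.mulVec_transpose]
    _ = (A.mulVec w) ⬝ᵥ v := by rw [hA]
    _ = v ⬝ᵥ (A.mulVec w) := dotProduct_comm _ _

lemma inv_quad_nonneg {n : ℕ} {A : Matrix (Fin n) (Fin n) ℝ} (hA : Aᵀ = A)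
    (hpd : ∀ x : Fin n → ℝ, x ≠ 0 → 0 < x ⬝ᵥ A.mulVec x) (x : Fin n → ℝ) :
    0 ≤ x ⬝ᵥ A⁻¹.mulVec x := by
  have hherm : A.IsHermitian := hA
  have hposdef : A.PosDef := Matrix.PosDef.of_dotProduct_mulVec_pos hherm (fun z hz => by simpa using hpd z hz)
  have := hposdef.inv.posSemidef.dotProduct_mulVec_nonneg x
  simpa using this

lemma cs_bound {n : ℕ} {A : Matrix (Fin n) (Fin n) ℝ} (hA : Aᵀ = A)
    (hpd : ∀ x : Fin n → ℝ, x ≠ 0 → 0 < x ⬝ᵥ A.mulVec x)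
    (g w : Fin n → ℝ) (hw : w ≠ 0) :
    (g ⬝ᵥ w) * (g ⬝ᵥ w) / (w ⬝ᵥ A.mulVec w) ≤ g ⬝ᵥ A⁻¹.mulVec g := by
  have hherm : A.IsHermitian := hA
  have hposdef : A.PosDef := Matrix.PosDef.of_dotProduct_mulVec_pos hherm (fun x hx => by simpa using hpd x hx)
  have hdet : IsUnit A.det := isUnit_iff_ne_zero.2 (ne_of_gt hposdef.det_pos)
  have hAAinv : A * A⁻¹ = 1 := Matrix.mul_nonsing_inv A hdet
  have hAinvA : A⁻¹ * A = 1 := Matrix.nonsing_inv_mul A hdet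
  set s := w ⬝ᵥ A.mulVec w with hs
  have hspos : 0 < s := hpd w hw
  set d := g ⬝ᵥ w with hd
  set c := d / s with hc
  have h1 : (A.mulVec w) ⬝ᵥ (A⁻¹.mulVec g) = d := by
    rw [mulVec_dot hA, Matrix.mulVec_mulVec, hAAinv, Matrix.one_mulVec, hd]
    exact dotProduct_comm w g
  have h2 : (A.mulVec w) ⬝ᵥ w = s := by
    rw [mulVec_dot hA, hs]
  have hkey : (g - c • (A.mulVec w)) ⬝ᵥ A⁻¹.mulVec (g - c • (A.mulVec w))
      = g ⬝ᵥ A⁻¹.mulVec g - 2 * c * d + c * c * s := by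
    simp only [Matrix.mulVec_sub, Matrix.mulVec_smul, Matrix.mulVec_mulVec, hAinvA,
      Matrix.one_mulVec, sub_dotProduct, dotProduct_sub, smul_dotProduct, dotProduct_smul,
      smul_eq_mul, h1, h2, ← hd]
    ring
  have h0 := inv_quad_nonneg hA hpd (g - c • (A.mulVec w))
  rw [hkey] at h0
  have hcc : c * c * s = d * d / s := by
    rw [hc]; field_simp
  have h2cd : 2 * c * d = 2 * (d * d / s) := by rw [hc]; field_simp
  rw [hcc, h2cd] at h0
  linarith

lemma tendsto_coe_atTop_ereal {α : Type*} {l : Filter α} {f : α → ℝ}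
    (h : Filter.Tendsto f l Filter.atTop) :
    Filter.Tendsto (fun a => ((f a : ℝ) : EReal)) l (nhds (⊤ : EReal)) := by
  rw [EReal.tendsto_nhds_top_iff_real]
  intro x
  filter_upwards [h.eventually (Filter.eventually_ge_atTop (x+1))] with a ha
  exact_mod_cast lt_of_lt_of_le (by linarith) ha

end RW17



namespace RW17

lemma khat_le_zero {n : ℕ} (ρ : ℝ → EReal) (h1 : Assump1 ρ) (g : Fin n → ℝ)
    (H : Matrix (Fin n) (Fin n) ℝ) (t : ℝ) : khat ρ g H t ≤ 0 := by
  have h := iInf_le (fun γ : {γ : ℝ // 0 ≤ γ} =>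
    (ρ ((γ : ℝ) - 1) + ((((γ : ℝ) * lambdaMin (Bmat g H t)) : ℝ) : EReal))) ⟨0, le_refl 0⟩
  simpa [khat, h1.2.1 (-1) (by norm_num)] using h

lemma khat_eq_zero {n : ℕ} (ρ : ℝ → EReal) (hnn : ∀ t, 0 ≤ ρ t) (h1 : Assump1 ρ)
    (g : Fin n → ℝ) (H : Matrix (Fin n) (Fin n) ℝ) (t : ℝ)
    (hΛ : 0 ≤ lambdaMin (Bmat g H t)) : khat ρ g H t = 0 := by
  apply le_antisymm (khat_le_zero ρ h1 g H t)
  apply le_iInf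
  rintro ⟨γ, hγ⟩
  have h2 : (0 : EReal) ≤ (((γ : ℝ) * lambdaMin (Bmat g H t) : ℝ) : EReal) := by
    rw [EReal.coe_nonneg]; positivity
  have h3 := hnn (γ - 1)
  positivity

end RW17


theorem stmt17 {n : ℕ} (g : Fin n → ℝ) (hg : g ≠ 0)
    (H : Matrix (Fin n) (Fin n) ℝ) (hH : H.IsSymm)
    (ρ : ℝ → EReal) (hρ : RhoBasic ρ) (h1 : Assump1 ρ) (h2 : Assump2 ρ) (h3 : Assump3 ρ)
    (tb : EReal)
    (htb : Filter.Tendsto (fun l : ℝ =>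
        (((l + g ⬝ᵥ ((H - l • (1 : Matrix (Fin n) (Fin n) ℝ))⁻¹).mulVec g) : ℝ) : EReal))
      (nhdsWithin (lambdaMin H) (Iio (lambdaMin H))) (nhds tb))
    (ts : ℝ) (hts : ∀ t : ℝ, khat ρ g H t - (t : EReal) ≤ khat ρ g H ts - (ts : EReal)) :
    (lambdaMin (Bmat g H ts) = 0 →
        0 ≤ lambdaMin H ∧ ∃ y : Fin n → ℝ, H.mulVec y = g) ∧
      (lambdaMin (Bmat g H ts) ≠ 0 → (ts : EReal) = tb →
        lambdaMin (Bmat g H ts) < 0 ∧ lambdaMin (Bmat g H ts) = lambdaMin H ∧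
          ∃ y : Fin n → ℝ, (H - lambdaMin H • (1 : Matrix (Fin n) (Fin n) ℝ)).mulVec y = g) := by
  obtain ⟨k, rfl⟩ : ∃ k, n = k + 1 := by
    cases n with
    | zero => exact absurd (Subsingleton.elim g 0) hg
    | succ k => exact ⟨k, rfl⟩
  -- the optimal value forces the smallest eigenvalue to be nonpositive
  have hnonpos : lambdaMin (Bmat g H ts) ≤ 0 := by
    by_contra hpos
    push_neg at hpos
    set ε := lambdaMin (Bmat g H ts) / 2 with hε
    have hεpos : 0 < ε := by rw [hε]; linarith
    have hL : 0 < lambdaMin (Bmat g H (ts - ε)) := by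
      have := RW17.lambdaMin_bmat_lipschitz g H ts ε hεpos.le
      rw [hε] at this ⊢
      linarith
    have hk' : khat ρ g H (ts - ε) = 0 := RW17.khat_eq_zero ρ hρ.1 h1 g H _ hL.le
    have h := hts (ts - ε)
    rw [hk'] at h
    have h2 : khat ρ g H ts - (ts : EReal) ≤ (0 : EReal) - (ts : EReal) :=
      EReal.sub_le_sub (RW17.khat_le_zero ρ h1 g H ts) (le_refl _)
    have h3 : (0 : EReal) - ((ts - ε : ℝ) : EReal) ≤ (0 : EReal) - (ts : EReal) := le_trans h h2
    rw [show (0 : EReal) = ((0:ℝ) : EReal) from rfl, ← EReal.coe_sub, ← EReal.coe_sub] at h3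
    have h4 := EReal.coe_le_coe_iff.1 h3
    linarith
  constructor
  · -- Part (i)
    intro h0
    have hpsd : ∀ x : Fin (k+1+1) → ℝ, 0 ≤ x ⬝ᵥ (Bmat g H ts).mulVec x := by
      intro x
      have h := RW17.rayleigh_lower (Bmat g H ts) x
      rw [h0, zero_mul] at h
      exact h
    constructor
    · have : Nonempty {x : Fin (k+1) → ℝ // x ⬝ᵥ x = 1} := RW17.sphere_nonempty_succ k
      apply RW17.lambdaMin_ge
      intro x hx
      have h := hpsd (Fin.cons 0 x)
      rw [RW17.quadform_bmat] at h
      simpa [Fin.tail_cons] using h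
    · apply RW17.fredholm H hH
      intro v hv
      by_contra hvne
      set c : ℝ := -(ts+1)/(2*(g ⬝ᵥ v)) with hc
      have h := hpsd (Fin.cons 1 (c • v))
      rw [RW17.quadform_bmat, Fin.cons_zero, Fin.tail_cons, dotProduct_smul,
        Matrix.mulVec_smul, hv, smul_zero, dotProduct_zero, smul_eq_mul] at h
      have hce : c * (g ⬝ᵥ v) = -(ts+1)/2 := by
        rw [hc]; field_simp
      rw [hce] at h
      linarith
  · -- Part (ii)
    intro hne htbeq
    set μ := lambdaMin H with hμ
    have hlam_le : lambdaMin (Bmat g H ts) ≤ μ := RW17.lambdaMin_bmat_le_lambdaMin g H ts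
    have hlam_neg : lambdaMin (Bmat g H ts) < 0 := lt_of_le_of_ne hnonpos hne
    have hH' : Hᵀ = H := hH
    have hxx_pos : ∀ x : Fin (k+1) → ℝ, x ≠ 0 → 0 < x ⬝ᵥ x := by
      intro x hx
      rcases eq_or_lt_of_le (RW17.dotProduct_self_nonneg' x) with h | h
      · exact absurd (dotProduct_self_eq_zero.1 h.symm) hx
      · exact h
    have hquad : ∀ (l : ℝ) (x : Fin (k+1) → ℝ),
        x ⬝ᵥ (H - l • (1:Matrix (Fin (k+1)) (Fin (k+1)) ℝ)).mulVec x
          = x ⬝ᵥ H.mulVec x - l * (x ⬝ᵥ x) := by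
      intro l x
      rw [Matrix.sub_mulVec, dotProduct_sub, Matrix.smul_mulVec, Matrix.one_mulVec,
        dotProduct_smul, smul_eq_mul]
    have hsub_t : ∀ l : ℝ, (H - l • (1:Matrix (Fin (k+1)) (Fin (k+1)) ℝ))ᵀ = H - l • 1 := by
      intro l
      rw [Matrix.transpose_sub, Matrix.transpose_smul, Matrix.transpose_one, hH']
    have hpd : ∀ l : ℝ, l < μ → ∀ x : Fin (k+1) → ℝ, x ≠ 0 →
        0 < x ⬝ᵥ (H - l • (1:Matrix (Fin (k+1)) (Fin (k+1)) ℝ)).mulVec x := by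
      intro l hl x hx
      rw [hquad]
      have h1 := RW17.rayleigh_lower H x
      rw [← hμ] at h1
      have h2 := hxx_pos x hx
      nlinarith
    have hFts : Filter.Tendsto (fun l : ℝ =>
        (((l + g ⬝ᵥ ((H - l • (1 : Matrix (Fin (k+1)) (Fin (k+1)) ℝ))⁻¹).mulVec g) : ℝ) : EReal))
        (nhdsWithin μ (Iio μ)) (nhds ((ts : ℝ) : EReal)) := by
      rw [htbeq]; exact htb
    -- g is in the range of H - μ I
    have hy : ∃ y, (H - μ • (1:Matrix (Fin (k+1)) (Fin (k+1)) ℝ)).mulVec y = g := by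
      apply RW17.fredholm _ (hsub_t μ)
      intro v hv
      by_contra hvne
      replace hv : (H - μ • (1:Matrix (Fin (k+1)) (Fin (k+1)) ℝ)).mulVec v = 0 := hv
      have hv0 : v ≠ 0 := by rintro rfl; simp at hvne
      have hHv : v ⬝ᵥ H.mulVec v = μ * (v ⬝ᵥ v) := by
        have h5 : H.mulVec v = μ • v := by
          rw [Matrix.sub_mulVec, Matrix.smul_mulVec, Matrix.one_mulVec, sub_eq_zero] at hv
          exact hv
        rw [h5, dotProduct_smul, smul_eq_mul]
      set K := (g ⬝ᵥ v) * (g ⬝ᵥ v) with hK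
      have hKpos : 0 < K := mul_self_pos.2 hvne
      set cv := v ⬝ᵥ v with hcv
      have hcvpos : 0 < cv := hxx_pos v hv0
      have hbound : ∀ l ∈ Iio μ, l + K / ((μ - l) * cv)
          ≤ l + g ⬝ᵥ ((H - l • (1:Matrix (Fin (k+1)) (Fin (k+1)) ℝ))⁻¹).mulVec g := by
        intro l hl
        have hb := RW17.cs_bound (hsub_t l) (hpd l hl) g v hv0
        rw [hquad, hHv] at hb
        have heq : μ * cv - l * cv = (μ - l) * cv := by ring
        rw [← hcv, heq] at hb
        linarith
      have hGtop : Filter.Tendsto (fun l : ℝ => l + K / ((μ - l) * cv)) (nhdsWithin μ (Iio μ))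
          Filter.atTop := by
        apply Filter.Tendsto.add_atTop (tendsto_id.mono_left nhdsWithin_le_nhds)
        have hden : Filter.Tendsto (fun l : ℝ => (μ - l) * cv) (nhdsWithin μ (Iio μ))
            (nhdsWithin 0 (Ioi 0)) := by
          rw [tendsto_nhdsWithin_iff]
          constructor
          · have hcont : ContinuousAt (fun l : ℝ => (μ - l) * cv) μ := by fun_prop
            have h0 := hcont.tendsto.mono_left (nhdsWithin_le_nhds (s := Iio μ))
            simpa using h0
          · filter_upwards [eventually_mem_nhdsWithin] with l hl
            have hlμ : l < μ := hl
            have : 0 < (μ - l) * cv := mul_pos (by linarith) hcvpos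
            exact this
        have := (hden.inv_tendsto_nhdsGT_zero).const_mul_atTop hKpos
        simpa [div_eq_mul_inv] using this
      have hFtop : Filter.Tendsto (fun l : ℝ =>
          (((l + g ⬝ᵥ ((H - l • (1 : Matrix (Fin (k+1)) (Fin (k+1)) ℝ))⁻¹).mulVec g) : ℝ) : EReal))
          (nhdsWithin μ (Iio μ)) (nhds (⊤ : EReal)) := by
        apply RW17.tendsto_coe_atTop_ereal
        apply tendsto_atTop_mono' _ _ hGtop
        filter_upwards [eventually_mem_nhdsWithin] with l hl
        exact hbound l hl
      have hcontra := tendsto_nhds_unique hFts hFtop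
      exact EReal.coe_ne_top ts hcontra
    obtain ⟨y, hyy⟩ := hy
    set d := g ⬝ᵥ y with hd
    have hd_eq : y ⬝ᵥ H.mulVec y = d + μ * (y ⬝ᵥ y) := by
      have h6 := hquad μ y
      rw [hyy] at h6
      have h7 : y ⬝ᵥ g = d := dotProduct_comm y g
      linarith [h6, h7, (by rw [h7] : y ⬝ᵥ g = d)]
    have hd0 : 0 ≤ d := by
      have h1 := RW17.rayleigh_lower H y
      rw [← hμ] at h1
      linarith
    have hts_ge : μ + d ≤ ts := by
      rcases eq_or_lt_of_le hd0 with hdz | hdpos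
      · have hmono : ∀ᶠ l in nhdsWithin μ (Iio μ), ((l : ℝ) : EReal) ≤
            (((l + g ⬝ᵥ ((H - l • (1 : Matrix (Fin (k+1)) (Fin (k+1)) ℝ))⁻¹).mulVec g) : ℝ) : EReal) := by
          filter_upwards [eventually_mem_nhdsWithin] with l hl
          have h8 := RW17.inv_quad_nonneg (hsub_t l) (hpd l hl) g
          exact_mod_cast (by linarith : l ≤ l + g ⬝ᵥ ((H - l • (1 : Matrix (Fin (k+1)) (Fin (k+1)) ℝ))⁻¹).mulVec g)
        have hto : Filter.Tendsto (fun l : ℝ => ((l : ℝ) : EReal)) (nhdsWithin μ (Iio μ))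
            (nhds ((μ : ℝ) : EReal)) :=
          EReal.tendsto_coe.2 (tendsto_id.mono_left nhdsWithin_le_nhds)
        have h9 := le_of_tendsto_of_tendsto hto hFts hmono
        rw [EReal.coe_le_coe_iff] at h9
        linarith
      · have hy0 : y ≠ 0 := by
          rintro rfl
          rw [hd, dotProduct_zero] at hdpos
          exact lt_irrefl 0 hdpos
        set cy := y ⬝ᵥ y with hcy
        have hcypos : 0 < cy := hxx_pos y hy0
        have hbound : ∀ l ∈ Iio μ, l + d * d / (d + (μ - l) * cy)
            ≤ l + g ⬝ᵥ ((H - l • (1:Matrix (Fin (k+1)) (Fin (k+1)) ℝ))⁻¹).mulVec g := by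
          intro l hl
          have hb := RW17.cs_bound (hsub_t l) (hpd l hl) g y hy0
          rw [hquad, hd_eq, ← hd, ← hcy] at hb
          have heq : d + μ * cy - l * cy = d + (μ - l) * cy := by ring
          rw [heq] at hb
          linarith
        have hG : Filter.Tendsto (fun l : ℝ => l + d * d / (d + (μ - l) * cy))
            (nhdsWithin μ (Iio μ)) (nhds (μ + d)) := by
          have hcont : ContinuousAt (fun l : ℝ => l + d * d / (d + (μ - l) * cy)) μ := by
            apply ContinuousAt.add continuousAt_id
            apply ContinuousAt.div continuousAt_const (by fun_prop)
            simp
            linarith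
          have h10 := hcont.tendsto.mono_left (nhdsWithin_le_nhds (s := Iio μ))
          have hval : μ + d * d / (d + (μ - μ) * cy) = μ + d := by
            rw [sub_self, zero_mul, add_zero]
            field_simp
          rw [hval] at h10
          exact h10
        have hto : Filter.Tendsto (fun l : ℝ => ((l + d * d / (d + (μ - l) * cy) : ℝ) : EReal))
            (nhdsWithin μ (Iio μ)) (nhds (((μ + d : ℝ)) : EReal)) := EReal.tendsto_coe.2 hG
        have hmono : ∀ᶠ l in nhdsWithin μ (Iio μ),
            ((l + d * d / (d + (μ - l) * cy) : ℝ) : EReal) ≤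
            (((l + g ⬝ᵥ ((H - l • (1 : Matrix (Fin (k+1)) (Fin (k+1)) ℝ))⁻¹).mulVec g) : ℝ) : EReal) := by
          filter_upwards [eventually_mem_nhdsWithin] with l hl
          exact EReal.coe_le_coe_iff.2 (hbound l hl)
        have h9 := le_of_tendsto_of_tendsto hto hFts hmono
        exact EReal.coe_le_coe_iff.1 h9
    have hAμpsd : ∀ z : Fin (k+1) → ℝ,
        0 ≤ z ⬝ᵥ (H - μ • (1:Matrix (Fin (k+1)) (Fin (k+1)) ℝ)).mulVec z := by
      intro z
      rw [hquad]
      have h1 := RW17.rayleigh_lower H z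
      rw [← hμ] at h1
      linarith
    have hlam_ge : μ ≤ lambdaMin (Bmat g H ts) := by
      have : Nonempty {x : Fin (k+1+1) → ℝ // x ⬝ᵥ x = 1} := RW17.sphere_nonempty_succ (k+1)
      apply RW17.lambdaMin_ge
      intro x hx
      rw [RW17.quadform_bmat]
      set x0 := x 0 with hx0
      set u := Fin.tail x with hu
      have hxsum : x0 * x0 + u ⬝ᵥ u = 1 := by
        have h' : x ⬝ᵥ x = x0 * x0 + u ⬝ᵥ u := by
          rw [dotProduct, Fin.sum_univ_succ]; rfl
        rw [← h', hx]
      have hz := hAμpsd (x0 • y + u)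
      have hexp : (x0 • y + u) ⬝ᵥ (H - μ • (1:Matrix (Fin (k+1)) (Fin (k+1)) ℝ)).mulVec (x0 • y + u)
          = x0 * x0 * d + 2 * (x0 * (g ⬝ᵥ u)) + (u ⬝ᵥ H.mulVec u - μ * (u ⬝ᵥ u)) := by
        rw [Matrix.mulVec_add, Matrix.mulVec_smul, hyy, dotProduct_add, add_dotProduct,
          add_dotProduct, dotProduct_smul, smul_dotProduct, smul_dotProduct]
        have e1 : y ⬝ᵥ (H - μ • (1:Matrix (Fin (k+1)) (Fin (k+1)) ℝ)).mulVec u = g ⬝ᵥ u := by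
          rw [← RW17.mulVec_dot (hsub_t μ) y u, hyy]
        have e2 : y ⬝ᵥ g = d := dotProduct_comm y g
        have e3 : u ⬝ᵥ g = g ⬝ᵥ u := dotProduct_comm u g
        have e4 := hquad μ u
        rw [e1, e2, dotProduct_smul, e3, e4]
        simp only [smul_eq_mul]
        ring
      rw [hexp] at hz
      have hμsum : μ * (x0 * x0) + μ * (u ⬝ᵥ u) = μ := by nlinarith [hxsum]
      have hprod : 0 ≤ (ts - (μ + d)) * (x0 * x0) :=
        mul_nonneg (by linarith) (mul_self_nonneg x0)
      nlinarith [hz, hprod, hμsum]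
    exact ⟨hlam_neg, le_antisymm hlam_le hlam_ge, ⟨y, hyy⟩⟩

end
end

section
/- Let g ∈ ℝⁿ \ {0}, let H be a symmetric n×n real matrix, and let ρ: ℝ → [0,∞] be a proper closed convex function with ρ(0) = 0 satisfying Assumptions 1–3. For t ∈ ℝ, let λ(t) be the smallest eigenvalue of B(t) := [[t, gᵀ],[g, H]], define k̂(t) := inf_{γ ≥ 0} { ρ(γ − 1) + γλ(t) }, and let t* be a maximizer of t ↦ k̂(t) − t. Then: (i) if H is positive definite and ‖H⁻¹g‖² ∉ argmin ρ, then λ(t*) < 0 and k̂ is differentiable at t*; (ii) if λ_min(H) ≤ 0, g ∈ Range(H − λ_min(H)I), and ‖(H − λ_min(H)I)†g‖ > √((ρ⁺)'₊(−λ_min(H))), then λ(t*) < λ_min(H) and k̂ is differentiable at t*. -/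
open Matrix Filter Set Topology
noncomputable section


set_option linter.unusedSectionVars false
set_option maxHeartbeats 1000000

namespace SAux
section B1


lemma dot_self_nonneg {m : Type*} [Fintype m] (x : m → ℝ) : 0 ≤ x ⬝ᵥ x :=
  Finset.sum_nonneg fun _ _ => mul_self_nonneg _

lemma dot_self_pos {m : Type*} [Fintype m] {x : m → ℝ} (hx : x ≠ 0) : 0 < x ⬝ᵥ x := by
  rcases Function.ne_iff.1 hx with ⟨i, hi⟩
  exact Finset.sum_pos' (fun j _ => mul_self_nonneg _)
    ⟨i, Finset.mem_univ i, mul_self_pos.2 hi⟩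

lemma eq_zero_of_dot_self {m : Type*} [Fintype m] {x : m → ℝ} (hx : x ⬝ᵥ x = 0) : x = 0 := by
  by_contra h; exact absurd hx (ne_of_gt (dot_self_pos h))

lemma abs_coord_le_one {m : Type*} [Fintype m] {x : m → ℝ} (hx : x ⬝ᵥ x = 1) (i : m) :
    |x i| ≤ 1 := by
  have h1 : x i * x i ≤ 1 := by
    rw [← hx]
    exact Finset.single_le_sum (f := fun j => x j * x j)
      (fun j _ => mul_self_nonneg _) (Finset.mem_univ i)
  nlinarith [abs_nonneg (x i), sq_abs (x i)]

lemma rayleigh_abs_le {m : Type*} [Fintype m] (A : Matrix m m ℝ) {x : m → ℝ}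
    (hx : x ⬝ᵥ x = 1) : |x ⬝ᵥ A.mulVec x| ≤ ∑ i, ∑ j, |A i j| := by
  have h1 : |x ⬝ᵥ A.mulVec x| ≤ ∑ i, |x i * (A.mulVec x) i| := by
    exact Finset.abs_sum_le_sum_abs _ _
  refine h1.trans (Finset.sum_le_sum fun i _ => ?_)
  rw [abs_mul]
  have h2 : |(A.mulVec x) i| ≤ ∑ j, |A i j| := by
    refine (Finset.abs_sum_le_sum_abs _ _).trans (Finset.sum_le_sum fun j _ => ?_)
    rw [abs_mul]
    calc |A i j| * |x j| ≤ |A i j| * 1 := by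
          exact mul_le_mul_of_nonneg_left (abs_coord_le_one hx j) (abs_nonneg _)
      _ = |A i j| := mul_one _
  calc |x i| * |(A.mulVec x) i| ≤ 1 * (∑ j, |A i j|) := by
        apply mul_le_mul (abs_coord_le_one hx i) h2 (abs_nonneg _) zero_le_one
    _ = ∑ j, |A i j| := one_mul _

lemma rayleigh_bddBelow {m : Type*} [Fintype m] (A : Matrix m m ℝ) :
    BddBelow (Set.range fun x : {x : m → ℝ // x ⬝ᵥ x = 1} =>
      (x : m → ℝ) ⬝ᵥ A.mulVec (x : m → ℝ)) := by
  refine ⟨-(∑ i, ∑ j, |A i j|), ?_⟩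
  rintro _ ⟨x, rfl⟩
  have := rayleigh_abs_le A x.2
  have := abs_le.1 this
  linarith [this.1]

lemma lambdaMin_le {m : Type*} [Fintype m] (A : Matrix m m ℝ) {x : m → ℝ}
    (hx : x ⬝ᵥ x = 1) : lambdaMin A ≤ x ⬝ᵥ A.mulVec x :=
  ciInf_le (rayleigh_bddBelow A) ⟨x, hx⟩

lemma lambdaMin_smul_le {m : Type*} [Fintype m] (A : Matrix m m ℝ) (x : m → ℝ) :
    lambdaMin A * (x ⬝ᵥ x) ≤ x ⬝ᵥ A.mulVec x := by
  rcases eq_or_ne x 0 with rfl | hx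
  · simp [Matrix.mulVec_zero]
  · have hpos : 0 < x ⬝ᵥ x := dot_self_pos hx
    set c : ℝ := (Real.sqrt (x ⬝ᵥ x))⁻¹ with hc
    have hsq : Real.sqrt (x ⬝ᵥ x) ^ 2 = x ⬝ᵥ x := Real.sq_sqrt hpos.le
    have hs0 : Real.sqrt (x ⬝ᵥ x) ≠ 0 := by positivity
    have hdot : (c • x) ⬝ᵥ (c • x) = 1 := by
      rw [smul_dotProduct, dotProduct_smul, smul_eq_mul, smul_eq_mul]
      rw [← mul_assoc, ← sq, hc, inv_pow, hsq, inv_mul_cancel₀ hpos.ne']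
    have h := lambdaMin_le A hdot
    have hray : (c • x) ⬝ᵥ A.mulVec (c • x) = c^2 * (x ⬝ᵥ A.mulVec x) := by
      rw [Matrix.mulVec_smul, smul_dotProduct, dotProduct_smul]
      simp [smul_eq_mul]; ring
    rw [hray] at h
    have hc2 : c^2 = (x ⬝ᵥ x)⁻¹ := by
      rw [hc, inv_pow]; rw [hsq]
    rw [hc2] at h
    calc lambdaMin A * (x ⬝ᵥ x) ≤ ((x ⬝ᵥ x)⁻¹ * (x ⬝ᵥ A.mulVec x)) * (x ⬝ᵥ x) := by
          rw [mul_comm ((x ⬝ᵥ x)⁻¹) _] at h ⊢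
          exact mul_le_mul_of_nonneg_right h hpos.le
      _ = x ⬝ᵥ A.mulVec x := by field_simp

lemma le_lambdaMin {m : Type*} [Fintype m] [Nonempty m] [DecidableEq m]
    (A : Matrix m m ℝ) {c : ℝ} (h : ∀ x : m → ℝ, x ⬝ᵥ x = 1 → c ≤ x ⬝ᵥ A.mulVec x) :
    c ≤ lambdaMin A := by
  have hne : Nonempty {x : m → ℝ // x ⬝ᵥ x = 1} := by
    refine ⟨⟨Pi.single (Classical.arbitrary m) 1, ?_⟩⟩
    simp [dotProduct, Pi.single_apply]
  exact le_ciInf fun x => h x.1 x.2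

lemma continuous_rayleigh {m : Type*} [Fintype m] (A : Matrix m m ℝ) :
    Continuous fun x : m → ℝ => x ⬝ᵥ A.mulVec x := by
  simp only [dotProduct, Matrix.mulVec]
  fun_prop

lemma exists_unit_isMin {m : Type*} [Fintype m] [Nonempty m] [DecidableEq m]
    (A : Matrix m m ℝ) : ∃ x : m → ℝ, x ⬝ᵥ x = 1 ∧ x ⬝ᵥ A.mulVec x = lambdaMin A := by
  set S : Set (m → ℝ) := {x | x ⬝ᵥ x = 1} with hS
  have hclosed : IsClosed S := by
    have : Continuous fun x : m → ℝ => x ⬝ᵥ x := by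
      simp only [dotProduct]; fun_prop
    exact (isClosed_singleton (x := (1:ℝ))).preimage this
  have hbdd : Bornology.IsBounded S := by
    refine (Metric.isBounded_iff_subset_closedBall 0).2 ⟨1, fun x hx => ?_⟩
    simp only [Metric.mem_closedBall, dist_zero_right]
    refine (pi_norm_le_iff_of_nonneg zero_le_one).2 fun i => ?_
    simpa [Real.norm_eq_abs] using abs_coord_le_one hx i
  have hcomp : IsCompact S := Metric.isCompact_of_isClosed_isBounded hclosed hbdd
  have hne : S.Nonempty := ⟨Pi.single (Classical.arbitrary m) 1, by
    simp [hS, dotProduct, Pi.single_apply]⟩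
  obtain ⟨x, hxS, hmin⟩ := hcomp.exists_isMinOn hne (continuous_rayleigh A).continuousOn
  refine ⟨x, hxS, le_antisymm ?_ (lambdaMin_le A hxS)⟩
  exact le_lambdaMin A fun y hy => hmin hy


end B1
section B2

variable {ρ : ℝ → EReal}

lemma rho_ne_bot (hρ : RhoBasic ρ) (t : ℝ) : ρ t ≠ ⊥ :=
  fun h => absurd (h ▸ hρ.1 t) (by simp)

lemma mconj_nonneg (hρ : RhoBasic ρ) (x : ℝ) : 0 ≤ mconj ρ x := by
  have h0 : (((x * ((0:ℝ)) : ℝ) : EReal) - ρ 0) = 0 := by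
    rw [hρ.2.1]; simp
  calc (0:EReal) = ((x * ((0:ℝ)) : ℝ) : EReal) - ρ 0 := h0.symm
    _ ≤ mconj ρ x := le_iSup (fun t : {t : ℝ // 0 ≤ t} =>
        (((x * (t : ℝ) : ℝ) : EReal) - ρ t)) ⟨0, le_refl 0⟩

lemma mconj_lt_top (hρ : RhoBasic ρ) (h2 : Assump2 ρ) (x : ℝ) : mconj ρ x < ⊤ := by
  obtain ⟨T, hT⟩ := (Filter.eventually_atTop).1 (h2 (x + 1))
  set T' : ℝ := max T 0 with hT'
  have hle : mconj ρ x ≤ (((|x| * T') : ℝ) : EReal) := by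
    refine iSup_le fun t => ?_
    rcases le_or_gt (t : ℝ) T' with h | h
    · have h1 : (((x * (t : ℝ) : ℝ) : EReal) - ρ t) ≤ ((x * (t:ℝ) : ℝ) : EReal) := by
        have := hρ.1 t
        rcases eq_or_ne (ρ t) ⊤ with ht | ht
        · rw [ht]; simp
        · have hb := rho_ne_bot hρ t
          lift (ρ t) to ℝ using ⟨ht, hb⟩ with r hr
          have hr0 : (0:ℝ) ≤ r := by exact_mod_cast this
          rw [← EReal.coe_sub]
          exact_mod_cast (by linarith : x * (t:ℝ) - r ≤ x * (t:ℝ))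
      refine h1.trans ?_
      exact_mod_cast (by nlinarith [abs_nonneg x, le_abs_self x, neg_abs_le x, t.2] : x * (t:ℝ) ≤ |x| * T')
    · have hTt : T ≤ (t:ℝ) := le_trans (le_max_left _ _) h.le
      have hρt := hT (t : ℝ) hTt
      have h1 : (((x * (t : ℝ) : ℝ) : EReal) - ρ t) ≤ (((x * (t:ℝ)) - ((x+1) * (t:ℝ)) : ℝ) : EReal) := by
        rw [EReal.coe_sub]
        exact EReal.sub_le_sub (le_refl _) hρt
      refine h1.trans ?_
      have ht0 : (0:ℝ) ≤ (t:ℝ) := t.2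
      exact_mod_cast (by nlinarith [mul_nonneg (abs_nonneg x) (le_max_right T 0)] : x * (t:ℝ) - (x+1) * (t:ℝ) ≤ |x| * T')
  exact lt_of_le_of_lt hle (EReal.coe_lt_top _)

lemma mconj_eq_coe (hρ : RhoBasic ρ) (h2 : Assump2 ρ) (x : ℝ) :
    mconj ρ x = ((mconjR ρ x : ℝ) : EReal) := by
  have h1 : mconj ρ x ≠ ⊤ := (mconj_lt_top hρ h2 x).ne
  have h0 : mconj ρ x ≠ ⊥ := fun h => absurd (h ▸ mconj_nonneg hρ x) (by simp)
  exact (EReal.coe_toReal h1 h0).symm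

lemma mconjR_nonneg (hρ : RhoBasic ρ) (h2 : Assump2 ρ) (x : ℝ) : 0 ≤ mconjR ρ x := by
  have := mconj_nonneg hρ x
  rw [mconj_eq_coe hρ h2] at this
  exact_mod_cast this

lemma sub_mconjR_le_rho (hρ : RhoBasic ρ) (h2 : Assump2 ρ) (x : ℝ) {s : ℝ} (hs : 0 ≤ s) :
    ((x * s - mconjR ρ x : ℝ) : EReal) ≤ ρ s := by
  have h1 : (((x * s : ℝ) : EReal) - ρ s) ≤ mconj ρ x :=
    le_iSup (fun t : {t : ℝ // 0 ≤ t} => (((x * (t : ℝ) : ℝ) : EReal) - ρ t)) ⟨s, hs⟩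
  rw [mconj_eq_coe hρ h2] at h1
  rcases eq_or_ne (ρ s) ⊤ with ht | ht
  · rw [ht]; exact le_top
  · lift (ρ s) to ℝ using ⟨ht, rho_ne_bot hρ s⟩ with r hr
    rw [← EReal.coe_sub] at h1
    have := (EReal.coe_le_coe_iff).1 h1
    exact_mod_cast (by linarith : x * s - mconjR ρ x ≤ r)

lemma exists_approx (hρ : RhoBasic ρ) (h2 : Assump2 ρ) (x : ℝ) {ε : ℝ} (hε : 0 < ε) :
    ∃ s : ℝ, 0 ≤ s ∧ ρ s ≠ ⊤ ∧ mconjR ρ x - ε ≤ x * s - (ρ s).toReal := by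
  have h1 : ((mconjR ρ x - ε : ℝ) : EReal) < mconj ρ x := by
    rw [mconj_eq_coe hρ h2]; exact_mod_cast (by linarith : mconjR ρ x - ε < mconjR ρ x)
  obtain ⟨⟨s, hs⟩, hlt⟩ := lt_iSup_iff.1 h1
  rcases eq_or_ne (ρ s) ⊤ with ht | ht
  · exfalso; rw [ht] at hlt; simp at hlt
  · refine ⟨s, hs, ht, ?_⟩
    lift (ρ s) to ℝ using ⟨ht, rho_ne_bot hρ s⟩ with r hr
    rw [← EReal.coe_sub] at hlt
    have := (EReal.coe_lt_coe_iff).1 hlt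
    simp only [EReal.toReal_coe]
    linarith

lemma mconjR_nonpos_eq_zero (hρ : RhoBasic ρ) (h2 : Assump2 ρ) {x : ℝ} (hx : x ≤ 0) :
    mconjR ρ x = 0 := by
  have hle : mconj ρ x ≤ ((0:ℝ) : EReal) := by
    refine iSup_le fun t => ?_
    have h1 : (((x * (t : ℝ) : ℝ) : EReal) - ρ t) ≤ ((x * (t:ℝ) : ℝ) : EReal) := by
      rcases eq_or_ne (ρ t) ⊤ with ht | ht
      · rw [ht]; simp
      · lift (ρ t) to ℝ using ⟨ht, rho_ne_bot hρ t⟩ with r hr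
        have : (0:ℝ) ≤ r := by
          have := hρ.1 t; rw [← hr] at this; exact_mod_cast this
        rw [← EReal.coe_sub]
        exact_mod_cast (by linarith : x * (t:ℝ) - r ≤ x * (t:ℝ))
    exact h1.trans (by exact_mod_cast mul_nonpos_of_nonpos_of_nonneg hx t.2)
  have := mconjR_nonneg hρ h2 x
  have h2' : mconjR ρ x ≤ 0 := by
    rw [mconj_eq_coe hρ h2] at hle; exact_mod_cast hle
  linarith

lemma mconjR_mono (hρ : RhoBasic ρ) (h2 : Assump2 ρ) : Monotone (mconjR ρ) := by
  intro x y hxy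
  have h1 : mconj ρ x ≤ mconj ρ y := by
    refine iSup_le fun t => le_trans ?_ (le_iSup (fun t : {t : ℝ // 0 ≤ t} =>
      (((y * (t : ℝ) : ℝ) : EReal) - ρ t)) t)
    apply EReal.sub_le_sub _ (le_refl _)
    exact_mod_cast mul_le_mul_of_nonneg_right hxy t.2
  rw [mconj_eq_coe hρ h2, mconj_eq_coe hρ h2] at h1
  exact_mod_cast h1

lemma mconjR_convexOn (hρ : RhoBasic ρ) (h2 : Assump2 ρ) :
    ConvexOn ℝ Set.univ (mconjR ρ) := by
  refine ⟨convex_univ, fun a _ b _ p q hp hq hpq => ?_⟩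
  simp only [smul_eq_mul]
  refine le_of_forall_pos_le_add fun ε hε => ?_
  obtain ⟨s, hs, hst, hineq⟩ := exists_approx hρ h2 (p * a + q * b) hε
  have ha : a * s - (ρ s).toReal ≤ mconjR ρ a := by
    have := sub_mconjR_le_rho hρ h2 a hs
    lift (ρ s) to ℝ using ⟨hst, rho_ne_bot hρ s⟩ with r hr
    have h' := (EReal.coe_le_coe_iff).1 this
    have hrr : (EReal.toReal (Real.toEReal r)) = r := by simp
    rw [hrr]; linarith
  have hb : b * s - (ρ s).toReal ≤ mconjR ρ b := by
    have := sub_mconjR_le_rho hρ h2 b hs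
    lift (ρ s) to ℝ using ⟨hst, rho_ne_bot hρ s⟩ with r hr
    have h' := (EReal.coe_le_coe_iff).1 this
    have hrr : (EReal.toReal (Real.toEReal r)) = r := by simp
    rw [hrr]; linarith
  have hq1 : q = 1 - p := by linarith
  subst hq1
  have key : (p * a + (1-p) * b) * s - (ρ s).toReal
      = p * (a * s - (ρ s).toReal) + (1-p) * (b * s - (ρ s).toReal) := by ring
  nlinarith [mul_le_mul_of_nonneg_left ha hp, mul_le_mul_of_nonneg_left hb hq]

lemma convex_ineq {f : ℝ → ℝ} (hf : ConvexOn ℝ Set.univ f) {p q r : ℝ}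
    (h1 : p ≤ q) (h2 : q ≤ r) :
    f q * (r - p) ≤ f p * (r - q) + f r * (q - p) := by
  rcases eq_or_lt_of_le (h1.trans h2) with h | h
  · have hqp : q = p := le_antisymm (h ▸ h2) h1
    subst hqp
    rw [← h]
    simp
  · set θ : ℝ := (r - q) / (r - p) with hθ
    have hrp : 0 < r - p := by linarith
    have hθ0 : 0 ≤ θ := div_nonneg (by linarith) hrp.le
    have hθ1 : θ ≤ 1 := (div_le_one hrp).2 (by linarith)
    have hcomb := hf.2 (Set.mem_univ p) (Set.mem_univ r)
      hθ0 (show (0:ℝ) ≤ 1 - θ by linarith) (show θ + (1 - θ) = 1 by ring)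
    simp only [smul_eq_mul] at hcomb
    have hq : θ * p + (1 - θ) * r = q := by
      rw [hθ]; field_simp; ring
    rw [hq] at hcomb
    have hmul := mul_le_mul_of_nonneg_right hcomb hrp.le
    have hθr : θ * (r - p) = r - q := by rw [hθ, div_mul_cancel₀ _ hrp.ne']
    have hθr2 : (1 - θ) * (r - p) = q - p := by nlinarith [hθr]
    have e1 : (θ * f p + (1 - θ) * f r) * (r - p)
        = f p * (θ * (r - p)) + f r * ((1 - θ) * (r - p)) := by ring
    rw [hθr, hθr2] at e1
    linarith [hmul, e1.symm.le, e1.le]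


end B2
section B3


variable {n : ℕ} (g : Fin n → ℝ) (H : Matrix (Fin n) (Fin n) ℝ)

lemma Bmat_apply_zero (t : ℝ) (j : Fin (n+1)) :
    Bmat g H t 0 j = (Fin.cons t g : Fin (n+1) → ℝ) j := by
  simp [Bmat]

lemma Bmat_apply_succ (t : ℝ) (i : Fin n) (j : Fin (n+1)) :
    Bmat g H t i.succ j = (Fin.cons (g i) (H i) : Fin (n+1) → ℝ) j := by
  simp [Bmat]

lemma cons_dot (a : ℝ) (z : Fin n → ℝ) (x : Fin (n+1) → ℝ) :
    Fin.cons a z ⬝ᵥ x = a * x 0 + z ⬝ᵥ (fun i => x i.succ) := by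
  simp [dotProduct, Fin.sum_univ_succ]

lemma dot_cons_cons (a b : ℝ) (z w : Fin n → ℝ) :
    (Fin.cons a z : Fin (n+1) → ℝ) ⬝ᵥ Fin.cons b w = a * b + z ⬝ᵥ w := by
  simp [cons_dot]

lemma Bmat_quad (t : ℝ) (x : Fin (n+1) → ℝ) :
    x ⬝ᵥ (Bmat g H t).mulVec x
      = t * (x 0)^2 + 2 * (x 0) * (g ⬝ᵥ fun i => x i.succ)
        + (fun i => x i.succ) ⬝ᵥ H.mulVec (fun i => x i.succ) := by
  have hmv0 : (Bmat g H t).mulVec x 0 = t * x 0 + g ⬝ᵥ (fun i => x i.succ) := by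
    show (fun j => Bmat g H t 0 j) ⬝ᵥ x = _
    have : (fun j => Bmat g H t 0 j) = Fin.cons t g := by
      funext j; rw [Bmat_apply_zero]
    rw [this, cons_dot]
  have hmvs : ∀ i : Fin n, (Bmat g H t).mulVec x i.succ
      = g i * x 0 + H i ⬝ᵥ (fun j => x j.succ) := by
    intro i
    show (fun j => Bmat g H t i.succ j) ⬝ᵥ x = _
    have : (fun j => Bmat g H t i.succ j) = Fin.cons (g i) (H i) := by
      funext j; rw [Bmat_apply_succ]
    rw [this, cons_dot]
  have hdot : x ⬝ᵥ (Bmat g H t).mulVec x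
      = x 0 * ((Bmat g H t).mulVec x 0)
        + ∑ i : Fin n, x i.succ * ((Bmat g H t).mulVec x i.succ) := by
    simp [dotProduct, Fin.sum_univ_succ]
  rw [hdot, hmv0]
  have : ∑ i : Fin n, x i.succ * ((Bmat g H t).mulVec x i.succ)
      = ∑ i : Fin n, (x i.succ * (g i * x 0) + x i.succ * (H i ⬝ᵥ fun j => x j.succ)) := by
    refine Finset.sum_congr rfl fun i _ => ?_
    rw [hmvs i]; ring
  rw [this, Finset.sum_add_distrib]
  have h1 : ∑ i : Fin n, x i.succ * (g i * x 0)
      = x 0 * (g ⬝ᵥ fun i => x i.succ) := by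
    simp only [dotProduct, Finset.mul_sum]
    exact Finset.sum_congr rfl fun i _ => by ring
  have h2 : ∑ i : Fin n, x i.succ * (H i ⬝ᵥ fun j => x j.succ)
      = (fun i => x i.succ) ⬝ᵥ H.mulVec (fun i => x i.succ) := by
    simp [dotProduct, Matrix.mulVec]
  rw [h1, h2]
  have h3 : g ⬝ᵥ (fun i => x i.succ) = (fun i => x i.succ) ⬝ᵥ g := by
    simp [dotProduct]; exact Finset.sum_congr rfl fun i _ => mul_comm _ _
  ring

lemma Bmat_quad_cons (t x₀ : ℝ) (z : Fin n → ℝ) :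
    (Fin.cons x₀ z : Fin (n+1) → ℝ) ⬝ᵥ (Bmat g H t).mulVec (Fin.cons x₀ z)
      = t * x₀^2 + 2 * x₀ * (g ⬝ᵥ z) + z ⬝ᵥ H.mulVec z := by
  have h := Bmat_quad g H t (Fin.cons x₀ z)
  simpa using h

lemma cons_dot_self (x₀ : ℝ) (z : Fin n → ℝ) :
    (Fin.cons x₀ z : Fin (n+1) → ℝ) ⬝ᵥ Fin.cons x₀ z = x₀^2 + z ⬝ᵥ z := by
  rw [dot_cons_cons]; ring

/-- upper bound on λmin(B t) from an (unnormalized) test vector. -/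
lemma lambdaMin_B_le (t x₀ : ℝ) (z : Fin n → ℝ) :
    lambdaMin (Bmat g H t) * (x₀^2 + z ⬝ᵥ z)
      ≤ t * x₀^2 + 2 * x₀ * (g ⬝ᵥ z) + z ⬝ᵥ H.mulVec z := by
  have := lambdaMin_smul_le (Bmat g H t) (Fin.cons x₀ z)
  rwa [cons_dot_self, Bmat_quad_cons] at this

/-- lower bound on λmin(B t) from pointwise positivity. -/
lemma le_lambdaMin_B (t μ : ℝ)
    (h : ∀ (x₀ : ℝ) (z : Fin n → ℝ),
      μ * (x₀^2 + z ⬝ᵥ z) ≤ t * x₀^2 + 2 * x₀ * (g ⬝ᵥ z) + z ⬝ᵥ H.mulVec z) :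
    μ ≤ lambdaMin (Bmat g H t) := by
  refine le_lambdaMin _ fun x hx => ?_
  have hcons : (Fin.cons (x 0) (fun i => x i.succ) : Fin (n+1) → ℝ) = x := by
    funext j
    exact Fin.cases rfl (fun i => rfl) j
  have hds := cons_dot_self (x 0) (fun i => x i.succ)
  rw [hcons, hx] at hds
  have h1 := h (x 0) (fun i => x i.succ)
  rw [← hds] at h1
  rw [Bmat_quad]
  linarith

lemma lambdaMin_B_mono : Monotone (fun t => lambdaMin (Bmat g H t)) := by
  intro t₁ t₂ h
  by_cases hstr : t₁ = t₂
  · rw [hstr]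
  have : ∀ x : Fin (n+1) → ℝ, x ⬝ᵥ x = 1 →
      lambdaMin (Bmat g H t₁) ≤ x ⬝ᵥ (Bmat g H t₂).mulVec x := by
    intro x hx
    have h1 := lambdaMin_le (Bmat g H t₁) hx
    have h2 : x ⬝ᵥ (Bmat g H t₁).mulVec x ≤ x ⬝ᵥ (Bmat g H t₂).mulVec x := by
      rw [Bmat_quad, Bmat_quad]
      have : (0:ℝ) ≤ (x 0)^2 := sq_nonneg _
      nlinarith
    linarith
  exact le_lambdaMin _ this

lemma lambdaMin_B_lip (t₁ t₂ : ℝ) :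
    lambdaMin (Bmat g H t₁) ≤ lambdaMin (Bmat g H t₂) + |t₁ - t₂| := by
  have : ∀ x : Fin (n+1) → ℝ, x ⬝ᵥ x = 1 →
      lambdaMin (Bmat g H t₁) - |t₁ - t₂| ≤ x ⬝ᵥ (Bmat g H t₂).mulVec x := by
    intro x hx
    have h1 := lambdaMin_le (Bmat g H t₁) hx
    have hx0 : (x 0)^2 ≤ 1 := by
      have : (x 0)^2 ≤ x ⬝ᵥ x := by
        have : x 0 * x 0 ≤ x ⬝ᵥ x :=
          Finset.single_le_sum (f := fun j => x j * x j)
            (fun j _ => mul_self_nonneg _) (Finset.mem_univ 0)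
        nlinarith
      linarith [hx ▸ this]
    have h2 : x ⬝ᵥ (Bmat g H t₁).mulVec x
        ≤ x ⬝ᵥ (Bmat g H t₂).mulVec x + |t₁ - t₂| := by
      rw [Bmat_quad, Bmat_quad]
      have habs : (t₁ - t₂) * (x 0)^2 ≤ |t₁ - t₂| := by
        calc (t₁ - t₂) * (x 0)^2 ≤ |t₁ - t₂| * (x 0)^2 :=
              mul_le_mul_of_nonneg_right (le_abs_self _) (sq_nonneg _)
          _ ≤ |t₁ - t₂| * 1 := mul_le_mul_of_nonneg_left hx0 (abs_nonneg _)
          _ = |t₁ - t₂| := mul_one _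
      nlinarith
    linarith
  have := le_lambdaMin (Bmat g H t₂) this
  linarith

lemma lambdaMin_B_continuous : Continuous (fun t => lambdaMin (Bmat g H t)) := by
  rw [Metric.continuous_iff]
  intro t ε hε
  refine ⟨ε, hε, fun t' ht' => ?_⟩
  rw [Real.dist_eq] at ht' ⊢
  have h1 := lambdaMin_B_lip g H t' t
  have h2 : lambdaMin (Bmat g H t) - lambdaMin (Bmat g H t') ≤ |t' - t| := by
    have := lambdaMin_B_lip g H t t'
    rw [abs_sub_comm] at this
    linarith
  rw [abs_lt]
  constructor <;> linarith


end B3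
section B4

lemma EReal.le_coe_of_forall {a : EReal} {c : ℝ}
    (h : ∀ ε : ℝ, 0 < ε → a ≤ ((c + ε : ℝ) : EReal)) : a ≤ (c : EReal) := by
  by_contra hlt
  push_neg at hlt
  obtain ⟨x, hx1, hx2⟩ := EReal.lt_iff_exists_real_btwn.1 hlt
  have hε : (0:ℝ) < x - c := by exact_mod_cast sub_pos.2 (by exact_mod_cast hx1)
  have := h (x - c) hε
  rw [show c + (x - c) = x by ring] at this
  exact absurd (lt_of_le_of_lt this hx2) (lt_irrefl _)

variable {n : ℕ} {ρ : ℝ → EReal} (g : Fin n → ℝ) (H : Matrix (Fin n) (Fin n) ℝ)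

lemma khat_le_conj (hρ : RhoBasic ρ) (h2 : Assump2 ρ) (t : ℝ) :
    khat ρ g H t ≤ ((lambdaMin (Bmat g H t)
      - mconjR ρ (-(lambdaMin (Bmat g H t))) : ℝ) : EReal) := by
  set ν : ℝ := lambdaMin (Bmat g H t) with hν
  set r : ℝ := mconjR ρ (-ν) with hr
  refine EReal.le_coe_of_forall fun ε hε => ?_
  obtain ⟨s, hs, hst, happ⟩ := exists_approx hρ h2 (-ν) hε
  have hkey : khat ρ g H t ≤ ρ ((s+1) - 1) + (((s+1) * ν : ℝ) : EReal) :=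
    iInf_le (fun γ : {γ : ℝ // 0 ≤ γ} =>
      (ρ ((γ : ℝ) - 1) + ((((γ : ℝ) * ν) : ℝ) : EReal))) ⟨s+1, by linarith⟩
  have hs1 : (s + 1) - 1 = s := by ring
  rw [hs1] at hkey
  lift (ρ s) to ℝ using ⟨hst, rho_ne_bot hρ s⟩ with rs hrs
  have hrs' : (Real.toEReal rs).toReal = rs := by simp
  rw [hrs'] at happ
  refine hkey.trans ?_
  rw [← EReal.coe_add]
  exact_mod_cast (by nlinarith : rs + (s+1) * ν ≤ ν - r + ε)

lemma khat_ge (hρ : RhoBasic ρ) (h1 : Assump1 ρ) (h2 : Assump2 ρ) (t : ℝ) {ν' : ℝ}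
    (hle : ν' ≤ lambdaMin (Bmat g H t)) (hν0 : ν' ≤ 0) :
    ((ν' - mconjR ρ (-ν') : ℝ) : EReal) ≤ khat ρ g H t := by
  set ν : ℝ := lambdaMin (Bmat g H t) with hν
  set r : ℝ := mconjR ρ (-ν') with hr
  refine le_iInf fun γ => ?_
  have hγ0 : (0:ℝ) ≤ (γ:ℝ) := γ.2
  have hγν : ((γ:ℝ) * ν' : ℝ) ≤ ((γ:ℝ) * ν : ℝ) := mul_le_mul_of_nonneg_left hle hγ0
  rcases le_or_gt 1 (γ:ℝ) with hγ1 | hγ1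
  · have hρbd := sub_mconjR_le_rho hρ h2 (-ν') (by linarith : (0:ℝ) ≤ (γ:ℝ) - 1)
    calc ((ν' - r : ℝ) : EReal)
        = (((-ν') * ((γ:ℝ) - 1) - r : ℝ) : EReal) + (((γ:ℝ) * ν' : ℝ) : EReal) := by
          rw [← EReal.coe_add]; norm_cast; ring
      _ ≤ ρ ((γ:ℝ) - 1) + (((γ:ℝ) * ν : ℝ) : EReal) := by
          exact add_le_add hρbd (by exact_mod_cast hγν)
  · have hz : ρ ((γ:ℝ) - 1) = 0 := h1.2.1 _ (by linarith)
    rw [hz, zero_add]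
    have h1' : ν' - r ≤ (γ:ℝ) * ν := by
      have hr0 : 0 ≤ r := mconjR_nonneg hρ h2 _
      nlinarith
    exact_mod_cast h1'

lemma khat_eq (hρ : RhoBasic ρ) (h1 : Assump1 ρ) (h2 : Assump2 ρ) (t : ℝ)
    (hν : lambdaMin (Bmat g H t) ≤ 0) :
    khat ρ g H t = ((lambdaMin (Bmat g H t)
      - mconjR ρ (-(lambdaMin (Bmat g H t))) : ℝ) : EReal) :=
  le_antisymm (khat_le_conj g H hρ h2 t) (khat_ge g H hρ h1 h2 t (le_refl _) hν)

lemma khat_toReal (hρ : RhoBasic ρ) (h1 : Assump1 ρ) (h2 : Assump2 ρ) (t : ℝ)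
    (hν : lambdaMin (Bmat g H t) ≤ 0) :
    (khat ρ g H t).toReal = lambdaMin (Bmat g H t)
      - mconjR ρ (-(lambdaMin (Bmat g H t))) := by
  rw [khat_eq g H hρ h1 h2 t hν, EReal.toReal_coe]


end B4

variable {n : ℕ}

section Spectral
variable {A : Matrix (Fin n) (Fin n) ℝ}

def Umat (hA : A.IsHermitian) : Matrix (Fin n) (Fin n) ℝ :=
  (hA.eigenvectorUnitary : Matrix (Fin n) (Fin n) ℝ)

lemma U_star_mul (hA : A.IsHermitian) : star (Umat hA) * Umat hA = 1 :=
  (Matrix.mem_unitaryGroup_iff').1 (hA.eigenvectorUnitary).2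

lemma U_mul_star (hA : A.IsHermitian) : Umat hA * star (Umat hA) = 1 :=
  (Matrix.mem_unitaryGroup_iff).1 (hA.eigenvectorUnitary).2

lemma spectral (hA : A.IsHermitian) :
    A = Umat hA * Matrix.diagonal hA.eigenvalues * star (Umat hA) := by
  have h := hA.spectral_theorem
  have h2 : RCLike.ofReal ∘ hA.eigenvalues = hA.eigenvalues := by
    funext i; simp [RCLike.ofReal_real_eq_id]
  rw [h2] at h
  exact h

lemma UDU_mul (hA : A.IsHermitian) (f h : Fin n → ℝ) :
    (Umat hA * Matrix.diagonal f * star (Umat hA)) *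
      (Umat hA * Matrix.diagonal h * star (Umat hA))
      = Umat hA * Matrix.diagonal (f * h) * star (Umat hA) := by
  simp only [Matrix.mul_assoc]
  rw [← Matrix.mul_assoc (star (Umat hA)) (Umat hA)
    (Matrix.diagonal h * star (Umat hA)), U_star_mul hA, Matrix.one_mul]
  rw [← Matrix.mul_assoc (Matrix.diagonal f) (Matrix.diagonal h) (star (Umat hA)),
    Matrix.diagonal_mul_diagonal]
  rfl

lemma Mu_UDU (hA : A.IsHermitian) (u : ℝ) :
    A + u • (1 : Matrix (Fin n) (Fin n) ℝ)
      = Umat hA * Matrix.diagonal (fun i => hA.eigenvalues i + u) * star (Umat hA) := by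
  have hd1 : Matrix.diagonal (fun _ : Fin n => u) = u • (1 : Matrix (Fin n) (Fin n) ℝ) := by
    ext i j
    rcases eq_or_ne i j with rfl | hij
    · simp
    · simp [Matrix.diagonal_apply_ne _ hij, Matrix.one_apply_ne hij]
  have h1 : u • (1 : Matrix (Fin n) (Fin n) ℝ)
      = Umat hA * Matrix.diagonal (fun _ : Fin n => u) * star (Umat hA) := by
    rw [hd1]
    rw [show Umat hA * (u • (1 : Matrix (Fin n) (Fin n) ℝ)) * star (Umat hA)
        = u • (Umat hA * 1 * star (Umat hA)) by
      simp [Matrix.mul_smul, Matrix.smul_mul]]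
    rw [Matrix.mul_one, U_mul_star hA]
  nth_rewrite 1 [spectral hA]
  rw [h1, ← Matrix.add_mul, ← Matrix.mul_add, ← Matrix.diagonal_add]

lemma nsq_mulVec_U (hA : A.IsHermitian) (v : Fin n → ℝ) :
    nsq (Umat hA *ᵥ v) = nsq v := by
  unfold nsq
  have h1 : (Umat hA *ᵥ v) ⬝ᵥ (Umat hA *ᵥ v)
      = v ⬝ᵥ ((Umat hA)ᵀ *ᵥ (Umat hA *ᵥ v)) := by
    rw [Matrix.dotProduct_mulVec v ((Umat hA)ᵀ) _, Matrix.vecMul_transpose]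
  rw [h1, Matrix.mulVec_mulVec]
  have hstar : (Umat hA)ᵀ = star (Umat hA) := by
    rw [Matrix.star_eq_conjTranspose, Matrix.conjTranspose_eq_transpose_of_trivial]
  rw [hstar, U_star_mul, Matrix.one_mulVec]

lemma nsq_diag_mulVec (v c : Fin n → ℝ) :
    nsq (Matrix.diagonal v *ᵥ c) = ∑ i, (c i)^2 * (v i)^2 := by
  unfold nsq
  simp only [dotProduct, Matrix.mulVec_diagonal]
  exact Finset.sum_congr rfl fun i _ => by ring

lemma colU_dot (hA : A.IsHermitian) (j : Fin n) :
    (fun i => Umat hA i j) ⬝ᵥ (fun i => Umat hA i j) = 1 := by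
  have h := congrFun (congrFun (U_star_mul hA) j) j
  simp only [Matrix.mul_apply, Matrix.star_apply, star_trivial, Matrix.one_apply_eq] at h
  simpa [dotProduct] using h

lemma A_mulVec_colU (hA : A.IsHermitian) (j : Fin n) :
    A *ᵥ (fun i => Umat hA i j) = fun i => hA.eigenvalues j * Umat hA i j := by
  have hAU : A * Umat hA = Umat hA * Matrix.diagonal hA.eigenvalues := by
    nth_rewrite 1 [spectral hA]
    rw [Matrix.mul_assoc, U_star_mul hA, Matrix.mul_one]
  funext i
  have h1 : (A * Umat hA) i j = (Umat hA * Matrix.diagonal hA.eigenvalues) i j := by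
    rw [hAU]
  rw [Matrix.mul_diagonal] at h1
  have h2 : (A *ᵥ (fun i => Umat hA i j)) i = (A * Umat hA) i j := by
    simp [Matrix.mulVec, Matrix.mul_apply, dotProduct]
  rw [h2, h1]; ring

lemma eig_rayleigh (hA : A.IsHermitian) (j : Fin n) :
    (fun i => Umat hA i j) ⬝ᵥ A.mulVec (fun i => Umat hA i j) = hA.eigenvalues j := by
  rw [A_mulVec_colU hA j]
  have h : ∑ i, Umat hA i j * (hA.eigenvalues j * Umat hA i j)
      = hA.eigenvalues j * ∑ i, Umat hA i j * Umat hA i j := by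
    rw [Finset.mul_sum]; exact Finset.sum_congr rfl fun i _ => by ring
  show ∑ i, Umat hA i j * (hA.eigenvalues j * Umat hA i j) = _
  rw [h]
  have h2 := colU_dot hA j
  simp only [dotProduct] at h2
  rw [h2, mul_one]

lemma eigenvalues_nonneg (hA : A.IsHermitian)
    (hpsd : ∀ x : Fin n → ℝ, 0 ≤ x ⬝ᵥ A.mulVec x) (j : Fin n) :
    0 ≤ hA.eigenvalues j := by
  have := hpsd (fun i => Umat hA i j)
  rwa [eig_rayleigh hA j] at this

lemma eigenvalues_pos (hA : A.IsHermitian)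
    (hpd : ∀ x : Fin n → ℝ, x ≠ 0 → 0 < x ⬝ᵥ A.mulVec x) (j : Fin n) :
    0 < hA.eigenvalues j := by
  have hne : (fun i => Umat hA i j) ≠ 0 := by
    intro h0
    have := colU_dot hA j
    rw [h0] at this
    simp [dotProduct] at this
  have := hpd _ hne
  rwa [eig_rayleigh hA j] at this

lemma spec_package {g : Fin n → ℝ} (hA : A.IsHermitian)
    (hpsd : ∀ x : Fin n → ℝ, 0 ≤ x ⬝ᵥ A.mulVec x)
    {y : Fin n → ℝ} (hy : A *ᵥ y = g) :
    ∃ d c : Fin n → ℝ, (∀ i, 0 ≤ d i) ∧ (∀ i, d i = 0 → c i = 0) ∧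
      (∀ u : ℝ, 0 < u →
        (A + u • (1 : Matrix (Fin n) (Fin n) ℝ)) *
          (A + u • (1 : Matrix (Fin n) (Fin n) ℝ))⁻¹ = 1 ∧
        nsq ((A + u • (1 : Matrix (Fin n) (Fin n) ℝ))⁻¹ *ᵥ g)
          = ∑ i, (c i)^2 * ((d i + u)⁻¹)^2) ∧
      nsq (symPinv A *ᵥ g) = ∑ i, (c i)^2 * ((d i)⁻¹)^2 := by
  refine ⟨hA.eigenvalues, star (Umat hA) *ᵥ g, eigenvalues_nonneg hA hpsd, ?_, ?_, ?_⟩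
  · intro i hdi
    have h1 : star (Umat hA) * A = Matrix.diagonal hA.eigenvalues * star (Umat hA) := by
      have h0 : star (Umat hA) * A
          = star (Umat hA) * (Umat hA * Matrix.diagonal hA.eigenvalues * star (Umat hA)) := by
        rw [← spectral hA]
      rw [h0, ← Matrix.mul_assoc, ← Matrix.mul_assoc, U_star_mul hA, Matrix.one_mul]
    have h2 : star (Umat hA) *ᵥ g
        = Matrix.diagonal hA.eigenvalues *ᵥ (star (Umat hA) *ᵥ y) := by
      rw [← hy, Matrix.mulVec_mulVec, h1, ← Matrix.mulVec_mulVec]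
    rw [h2, Matrix.mulVec_diagonal, hdi, zero_mul]
  · intro u hu
    have hdu : ∀ i, hA.eigenvalues i + u ≠ 0 := fun i => by
      have := eigenvalues_nonneg hA hpsd i; positivity
    have hright : (A + u • (1 : Matrix (Fin n) (Fin n) ℝ)) *
        (Umat hA * Matrix.diagonal (fun i => (hA.eigenvalues i + u)⁻¹) * star (Umat hA)) = 1 := by
      rw [Mu_UDU hA u, UDU_mul hA]
      have : (fun i => hA.eigenvalues i + u) * (fun i => (hA.eigenvalues i + u)⁻¹)
          = fun _ : Fin n => (1:ℝ) := by
        funext i; exact mul_inv_cancel₀ (hdu i)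
      rw [this, Matrix.diagonal_one, Matrix.mul_one, U_mul_star hA]
    have hinv := Matrix.inv_eq_right_inv hright
    constructor
    · rw [hinv]; exact hright
    · rw [hinv]
      rw [Matrix.mul_assoc, ← Matrix.mulVec_mulVec, ← Matrix.mulVec_mulVec,
        nsq_mulVec_U hA, nsq_diag_mulVec]
  · have hsp : symPinv A = Umat hA * Matrix.diagonal (fun i => (hA.eigenvalues i)⁻¹)
        * star (Umat hA) := by
      unfold symPinv; rw [dif_pos hA]; rfl
    rw [hsp, Matrix.mul_assoc, ← Matrix.mulVec_mulVec, ← Matrix.mulVec_mulVec,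
      nsq_mulVec_U hA, nsq_diag_mulVec]

lemma symPinv_eq_inv (hA : A.IsHermitian)
    (hpd : ∀ x : Fin n → ℝ, x ≠ 0 → 0 < x ⬝ᵥ A.mulVec x) : symPinv A = A⁻¹ := by
  have hdpos := eigenvalues_pos hA hpd
  have hsp : symPinv A = Umat hA * Matrix.diagonal (fun i => (hA.eigenvalues i)⁻¹)
      * star (Umat hA) := by
    unfold symPinv; rw [dif_pos hA]; rfl
  have hleft : symPinv A * A = 1 := by
    rw [hsp]
    have h2 : Umat hA * Matrix.diagonal (fun i => (hA.eigenvalues i)⁻¹) * star (Umat hA) * A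
        = Umat hA * Matrix.diagonal (fun i => (hA.eigenvalues i)⁻¹) * star (Umat hA)
          * (Umat hA * Matrix.diagonal hA.eigenvalues * star (Umat hA)) := by
      rw [← spectral hA]
    rw [h2, UDU_mul hA]
    have : (fun i => (hA.eigenvalues i)⁻¹) * hA.eigenvalues = fun _ : Fin n => (1:ℝ) := by
      funext i; exact inv_mul_cancel₀ (ne_of_gt (hdpos i))
    rw [this, Matrix.diagonal_one, Matrix.mul_one, U_mul_star hA]
  exact (Matrix.inv_eq_left_inv hleft).symm

end Spectral

section B6

variable {m : Type*} [Fintype m] [DecidableEq m]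

lemma dot_mulVec_symm {M : Matrix m m ℝ} (hM : Mᵀ = M) (a b : m → ℝ) :
    a ⬝ᵥ (M *ᵥ b) = (M *ᵥ a) ⬝ᵥ b := by
  rw [Matrix.dotProduct_mulVec]
  congr 1
  rw [← Matrix.vecMul_transpose, hM]

lemma det_differentiableAt {M : ℝ → Matrix m m ℝ} {μ₀ : ℝ}
    (h : ∀ i j, DifferentiableAt ℝ (fun μ => M μ i j) μ₀) :
    DifferentiableAt ℝ (fun μ => (M μ).det) μ₀ := by
  have heq : (fun μ => (M μ).det)
      = fun μ => ∑ σ : Equiv.Perm m, ((Equiv.Perm.sign σ : ℤ) : ℝ) * ∏ i, M μ (σ i) i := by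
    funext μ
    rw [Matrix.det_apply]
    refine Finset.sum_congr rfl fun σ _ => ?_
    rw [Units.smul_def, zsmul_eq_mul]
  rw [heq]
  refine DifferentiableAt.fun_sum fun σ _ => DifferentiableAt.const_mul ?_ _
  exact DifferentiableAt.fun_finsetProd fun i _ => h (σ i) i

lemma entries_sub_smul_one (H : Matrix m m ℝ) (i j : m) (μ₀ : ℝ) :
    DifferentiableAt ℝ (fun μ : ℝ => (H - μ • (1 : Matrix m m ℝ)) i j) μ₀ := by
  have : (fun μ : ℝ => (H - μ • (1 : Matrix m m ℝ)) i j)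
      = fun μ => H i j - μ * (1 : Matrix m m ℝ) i j := by
    funext μ; simp [Matrix.sub_apply]
  rw [this]
  exact (differentiableAt_const _).sub (differentiableAt_id.mul (differentiableAt_const _))

lemma inv_entry_differentiableAt {H : Matrix m m ℝ} {μ₀ : ℝ}
    (hdet : (H - μ₀ • (1 : Matrix m m ℝ)).det ≠ 0) (i j : m) :
    DifferentiableAt ℝ (fun μ : ℝ => (H - μ • (1 : Matrix m m ℝ))⁻¹ i j) μ₀ := by
  have heq : (fun μ : ℝ => (H - μ • (1 : Matrix m m ℝ))⁻¹ i j)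
      = fun μ => ((H - μ • (1 : Matrix m m ℝ)).det)⁻¹
          * (H - μ • (1 : Matrix m m ℝ)).adjugate i j := by
    funext μ
    rw [Matrix.inv_def, Matrix.smul_apply, Ring.inverse_eq_inv', smul_eq_mul]
  rw [heq]
  have hdd : DifferentiableAt ℝ (fun μ : ℝ => (H - μ • (1 : Matrix m m ℝ)).det) μ₀ :=
    det_differentiableAt fun i j => entries_sub_smul_one H i j μ₀
  refine DifferentiableAt.mul (hdd.inv hdet) ?_
  have hadj : (fun μ : ℝ => (H - μ • (1 : Matrix m m ℝ)).adjugate i j)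
      = fun μ => ((H - μ • (1 : Matrix m m ℝ)).updateRow j (Pi.single i 1)).det := by
    funext μ; rw [Matrix.adjugate_apply]
  rw [hadj]
  refine det_differentiableAt fun a b => ?_
  rcases eq_or_ne a j with rfl | haj
  · have : (fun μ : ℝ => ((H - μ • (1 : Matrix m m ℝ)).updateRow a (Pi.single i 1)) a b)
        = fun _ => (Pi.single i 1 : m → ℝ) b := by
      funext μ; rw [Matrix.updateRow_apply, if_pos rfl]
    rw [this]; exact differentiableAt_const _
  · have : (fun μ : ℝ => ((H - μ • (1 : Matrix m m ℝ)).updateRow j (Pi.single i 1)) a b)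
        = fun μ => (H - μ • (1 : Matrix m m ℝ)) a b := by
      funext μ; rw [Matrix.updateRow_apply, if_neg haj]
    rw [this]; exact entries_sub_smul_one H a b μ₀

lemma psi_hasDerivAt {H : Matrix m m ℝ} (hH : Hᵀ = H) (g : m → ℝ) {μ₀ : ℝ}
    (hdet : (H - μ₀ • (1 : Matrix m m ℝ)).det ≠ 0) :
    HasDerivAt (fun μ : ℝ => μ + g ⬝ᵥ ((H - μ • (1 : Matrix m m ℝ))⁻¹ *ᵥ g))
      (1 + nsq ((H - μ₀ • (1 : Matrix m m ℝ))⁻¹ *ᵥ g)) μ₀ := by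
  set F : ℝ → Matrix m m ℝ := fun μ => (H - μ • (1 : Matrix m m ℝ))⁻¹ with hF
  set M : ℝ → Matrix m m ℝ := fun μ => H - μ • (1 : Matrix m m ℝ) with hM
  have hFdiff : ∀ i j, DifferentiableAt ℝ (fun μ => F μ i j) μ₀ :=
    fun i j => inv_entry_differentiableAt hdet i j
  set Dm : Matrix m m ℝ := Matrix.of (fun i j => deriv (fun μ => F μ i j) μ₀) with hDm
  have hD : ∀ i j, HasDerivAt (fun μ => F μ i j) (Dm i j) μ₀ :=
    fun i j => (hFdiff i j).hasDerivAt
  have hMd : ∀ i j, HasDerivAt (fun μ => M μ i j) (-(1 : Matrix m m ℝ) i j) μ₀ := by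
    intro i j
    have : (fun μ => M μ i j) = fun μ => H i j - μ * (1 : Matrix m m ℝ) i j := by
      funext μ; simp [hM, Matrix.sub_apply]
    rw [this]
    simpa using ((hasDerivAt_id μ₀).mul_const ((1 : Matrix m m ℝ) i j)).const_sub (H i j)
  -- derivative of each entry of M * F
  have hPentry : ∀ i j, HasDerivAt (fun μ => (M μ * F μ) i j)
      ((-(1 : Matrix m m ℝ) * F μ₀ + M μ₀ * Dm) i j) μ₀ := by
    intro i j
    have heq : (fun μ => (M μ * F μ) i j) = fun μ => ∑ k, M μ i k * F μ k j := by
      funext μ; rw [Matrix.mul_apply]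
    rw [heq]
    have hval2 : ((-(1 : Matrix m m ℝ) * F μ₀ + M μ₀ * Dm) i j)
        = ∑ k, (-((1 : Matrix m m ℝ) i k) * F μ₀ k j + M μ₀ i k * Dm k j) := by
      rw [Matrix.add_apply, Matrix.mul_apply, Matrix.mul_apply, ← Finset.sum_add_distrib]
      refine Finset.sum_congr rfl fun k _ => ?_
      rw [Matrix.neg_apply]
    rw [hval2]
    exact HasDerivAt.fun_sum fun k _ => (hMd i k).mul (hD k j)
  -- M μ * F μ = 1 eventually
  have hdd : DifferentiableAt ℝ (fun μ => (M μ).det) μ₀ :=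
    det_differentiableAt fun i j => entries_sub_smul_one H i j μ₀
  have hne : ∀ᶠ μ in 𝓝 μ₀, (M μ).det ≠ 0 := hdd.continuousAt.eventually_ne hdet
  have hMF1 : ∀ᶠ μ in 𝓝 μ₀, ∀ i j, (M μ * F μ) i j = (1 : Matrix m m ℝ) i j := by
    filter_upwards [hne] with μ hμ i j
    rw [Matrix.mul_nonsing_inv _ (isUnit_iff_ne_zero.2 hμ)]
  have hzero : ∀ i j, ((-(1 : Matrix m m ℝ) * F μ₀ + M μ₀ * Dm) i j) = 0 := by
    intro i j
    have h1 : HasDerivAt (fun μ => (M μ * F μ) i j) 0 μ₀ := by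
      have hconst : HasDerivAt (fun _ : ℝ => (1 : Matrix m m ℝ) i j) 0 μ₀ := hasDerivAt_const _ _
      have heqv : (fun μ => (M μ * F μ) i j) =ᶠ[𝓝 μ₀] (fun _ : ℝ => (1 : Matrix m m ℝ) i j) := by
        filter_upwards [hMF1] with μ hμ
        exact hμ i j
      exact (Filter.EventuallyEq.hasDerivAt_iff heqv).2 hconst
    exact (hPentry i j).unique h1
  have hMD : M μ₀ * Dm = F μ₀ := by
    ext i j
    have := hzero i j
    rw [Matrix.add_apply, Matrix.neg_mul, Matrix.neg_apply, Matrix.one_mul] at this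
    linarith [this]
  have hDval : Dm = F μ₀ * F μ₀ := by
    have hunit : IsUnit (M μ₀).det := isUnit_iff_ne_zero.2 hdet
    calc Dm = (F μ₀ * M μ₀) * Dm := by rw [Matrix.nonsing_inv_mul _ hunit, Matrix.one_mul]
      _ = F μ₀ * (M μ₀ * Dm) := by rw [Matrix.mul_assoc]
      _ = F μ₀ * F μ₀ := by rw [hMD]
  -- now ψ
  have hsum : (fun μ : ℝ => μ + g ⬝ᵥ (F μ *ᵥ g))
      = fun μ => μ + ∑ i, ∑ j, g i * (F μ i j * g j) := by
    funext μ
    simp only [dotProduct, Matrix.mulVec, Finset.mul_sum]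
  have hval : (1 : ℝ) + nsq (F μ₀ *ᵥ g) = 1 + ∑ i, ∑ j, g i * (Dm i j * g j) := by
    have hFsymm : (F μ₀)ᵀ = F μ₀ := by
      rw [hF]
      rw [Matrix.transpose_nonsing_inv]
      congr 1
      rw [Matrix.transpose_sub, Matrix.transpose_smul, Matrix.transpose_one, hH]
    have h1 : nsq (F μ₀ *ᵥ g) = g ⬝ᵥ ((F μ₀ * F μ₀) *ᵥ g) := by
      unfold nsq
      rw [← Matrix.mulVec_mulVec]
      rw [dot_mulVec_symm hFsymm g (F μ₀ *ᵥ g)]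
    rw [h1, hDval]
    congr 1
    simp only [dotProduct, Matrix.mulVec, Finset.mul_sum]
  rw [show (fun μ : ℝ => μ + g ⬝ᵥ ((H - μ • (1 : Matrix m m ℝ))⁻¹ *ᵥ g))
      = (fun μ : ℝ => μ + g ⬝ᵥ (F μ *ᵥ g)) from rfl, hsum, hval]
  refine (hasDerivAt_id μ₀).add ?_
  refine HasDerivAt.fun_sum fun i _ => ?_
  refine HasDerivAt.fun_sum fun j _ => ?_
  exact ((hD i j).mul_const (g j)).const_mul (g i)


end B6
section B7

-- === axioms: proved in earlier batches ===
-- ==========================================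

variable {n : ℕ} (g : Fin n → ℝ) {H : Matrix (Fin n) (Fin n) ℝ}

lemma shift_symm (hH : Hᵀ = H) (μ : ℝ) :
    (H - μ • (1 : Matrix (Fin n) (Fin n) ℝ))ᵀ = H - μ • (1 : Matrix (Fin n) (Fin n) ℝ) := by
  rw [Matrix.transpose_sub, Matrix.transpose_smul, Matrix.transpose_one, hH]

lemma shift_quad (μ : ℝ) (z : Fin n → ℝ) :
    z ⬝ᵥ (H - μ • (1 : Matrix (Fin n) (Fin n) ℝ)) *ᵥ z = z ⬝ᵥ H *ᵥ z - μ * (z ⬝ᵥ z) := by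
  rw [Matrix.sub_mulVec, dotProduct_sub, Matrix.smul_mulVec,
    Matrix.one_mulVec, dotProduct_smul, smul_eq_mul]

lemma shift_posdef {μ : ℝ} (hμ : μ < lambdaMin H) {z : Fin n → ℝ} (hz : z ≠ 0) :
    0 < z ⬝ᵥ (H - μ • (1 : Matrix (Fin n) (Fin n) ℝ)) *ᵥ z := by
  rw [shift_quad]
  have h1 := lambdaMin_smul_le H z
  have h2 := dot_self_pos hz
  nlinarith

lemma shift_PosDef (hH : Hᵀ = H) {μ : ℝ} (hμ : μ < lambdaMin H) :
    (H - μ • (1 : Matrix (Fin n) (Fin n) ℝ)).PosDef := by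
  refine Matrix.PosDef.of_dotProduct_mulVec_pos ?_ ?_
  · show (H - μ • (1 : Matrix (Fin n) (Fin n) ℝ))ᴴ = _
    rw [Matrix.conjTranspose_eq_transpose_of_trivial, shift_symm hH]
  · intro x hx
    have := shift_posdef hμ hx
    simpa [star_trivial] using this

lemma shift_det_ne (hH : Hᵀ = H) {μ : ℝ} (hμ : μ < lambdaMin H) :
    (H - μ • (1 : Matrix (Fin n) (Fin n) ℝ)).det ≠ 0 :=
  (Matrix.PosDef.det_pos (shift_PosDef hH hμ)).ne'

lemma shift_mulVec_inv (hH : Hᵀ = H) {μ : ℝ} (hμ : μ < lambdaMin H) (v : Fin n → ℝ) :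
    (H - μ • (1 : Matrix (Fin n) (Fin n) ℝ)) *ᵥ
      ((H - μ • (1 : Matrix (Fin n) (Fin n) ℝ))⁻¹ *ᵥ v) = v := by
  rw [Matrix.mulVec_mulVec,
    Matrix.mul_nonsing_inv _ (isUnit_iff_ne_zero.2 (shift_det_ne hH hμ)), Matrix.one_mulVec]

/-- `ψ` -/
def psiF (g : Fin n → ℝ) (H : Matrix (Fin n) (Fin n) ℝ) (μ : ℝ) : ℝ :=
  μ + g ⬝ᵥ ((H - μ • (1 : Matrix (Fin n) (Fin n) ℝ))⁻¹ *ᵥ g)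

/-- strict increase beyond ψ(μ) -/
lemma lam_gt (hH : Hᵀ = H) {μ t : ℝ} (hμ : μ < lambdaMin H) (ht : psiF g H μ < t) :
    μ < lambdaMin (Bmat g H t) := by
  obtain ⟨x, hx1, hx2⟩ := exists_unit_isMin (Bmat g H t)
  set w : Fin n → ℝ := (H - μ • (1 : Matrix (Fin n) (Fin n) ℝ))⁻¹ *ᵥ g with hw
  have hMw : (H - μ • (1 : Matrix (Fin n) (Fin n) ℝ)) *ᵥ w = g :=
    shift_mulVec_inv hH hμ g
  set x₀ : ℝ := x 0 with hx₀
  set z : Fin n → ℝ := fun i => x i.succ with hz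
  have hxx : x₀^2 + z ⬝ᵥ z = 1 := by
    have h0 : x ⬝ᵥ x = x 0 * x 0 + ∑ i : Fin n, x i.succ * x i.succ := by
      simp [dotProduct, Fin.sum_univ_succ]
    have h1 : z ⬝ᵥ z = ∑ i : Fin n, x i.succ * x i.succ := by
      simp [dotProduct, hz]
    rw [h1, ← hx1, h0, hx₀]
    ring
  have hquad : x ⬝ᵥ (Bmat g H t).mulVec x
      = t * x₀^2 + 2 * x₀ * (g ⬝ᵥ z) + z ⬝ᵥ H.mulVec z := Bmat_quad g H t x
  have hMsymm := shift_symm (n := n) hH μ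
  have hMz : (H - μ • (1 : Matrix (Fin n) (Fin n) ℝ)) *ᵥ (z + x₀ • w)
      = (H - μ • (1 : Matrix (Fin n) (Fin n) ℝ)) *ᵥ z + x₀ • g := by
    rw [Matrix.mulVec_add, Matrix.mulVec_smul, hMw]
  have hsq : (z + x₀ • w) ⬝ᵥ (H - μ • (1 : Matrix (Fin n) (Fin n) ℝ)) *ᵥ (z + x₀ • w)
      = z ⬝ᵥ (H - μ • (1 : Matrix (Fin n) (Fin n) ℝ)) *ᵥ z
        + 2 * x₀ * (g ⬝ᵥ z) + x₀^2 * (g ⬝ᵥ w) := by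
    rw [hMz, add_dotProduct, dotProduct_add, dotProduct_add,
      smul_dotProduct, smul_dotProduct, dotProduct_smul,
      dotProduct_smul]
    have h2 : w ⬝ᵥ (H - μ • (1 : Matrix (Fin n) (Fin n) ℝ)) *ᵥ z = g ⬝ᵥ z := by
      rw [dot_mulVec_symm hMsymm w z, hMw]
    have h3 : z ⬝ᵥ g = g ⬝ᵥ z := dotProduct_comm z g
    have h4 : w ⬝ᵥ g = g ⬝ᵥ w := dotProduct_comm w g
    rw [h2, h3, h4]
    simp only [smul_eq_mul]
    ring
  have hpsi : psiF g H μ = μ + g ⬝ᵥ w := rfl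
  have hkey : lambdaMin (Bmat g H t)
      = μ + (x₀^2 * (t - psiF g H μ)
        + (z + x₀ • w) ⬝ᵥ (H - μ • (1 : Matrix (Fin n) (Fin n) ℝ)) *ᵥ (z + x₀ • w)) := by
    rw [← hx2, hquad, hsq, shift_quad, hpsi]
    linear_combination μ * hxx
  rcases eq_or_ne x₀ 0 with hx0 | hx0
  · have hzne : z ≠ 0 := by
      intro h0
      rw [h0, hx0] at hxx
      simp [dotProduct] at hxx
    have hvz : z + x₀ • w = z := by rw [hx0, zero_smul, add_zero]
    have hpos := shift_posdef hμ hzne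
    rw [hkey, hvz, hx0]
    nlinarith
  · have hterm1 : 0 < x₀^2 * (t - psiF g H μ) := by
      have := sq_pos_of_ne_zero hx0
      nlinarith
    have hterm2 : 0 ≤ (z + x₀ • w) ⬝ᵥ (H - μ • (1 : Matrix (Fin n) (Fin n) ℝ)) *ᵥ (z + x₀ • w) := by
      rcases eq_or_ne (z + x₀ • w) 0 with hv0 | hv0
      · rw [hv0]; simp
      · exact (shift_posdef hμ hv0).le
    rw [hkey]
    linarith

lemma psi_lam_eq (hH : Hᵀ = H) {t : ℝ}
    (hlt : lambdaMin (Bmat g H t) < lambdaMin H) :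
    psiF g H (lambdaMin (Bmat g H t)) = t := by
  set μ : ℝ := lambdaMin (Bmat g H t) with hμdef
  set w : Fin n → ℝ := (H - μ • (1 : Matrix (Fin n) (Fin n) ℝ))⁻¹ *ᵥ g with hw
  have hMw : (H - μ • (1 : Matrix (Fin n) (Fin n) ℝ)) *ᵥ w = g :=
    shift_mulVec_inv hH hlt g
  have hwHw : w ⬝ᵥ H.mulVec w = w ⬝ᵥ g + μ * (w ⬝ᵥ w) := by
    have h1 : H *ᵥ w = (H - μ • (1 : Matrix (Fin n) (Fin n) ℝ)) *ᵥ w + μ • w := by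
      rw [Matrix.sub_mulVec, Matrix.smul_mulVec, Matrix.one_mulVec]
      abel
    rw [h1, dotProduct_add, hMw, dotProduct_smul, smul_eq_mul]
  have hpsi : psiF g H μ = μ + g ⬝ᵥ w := rfl
  refine le_antisymm ?_ ?_
  · -- ψ(μ) ≤ t
    have hray := lambdaMin_B_le g H t 1 (-w)
    rw [← hμdef] at hray
    have hnn : (-w) ⬝ᵥ (-w) = w ⬝ᵥ w := by
      rw [neg_dotProduct, dotProduct_neg, neg_neg]
    have hgw : g ⬝ᵥ (-w) = -(g ⬝ᵥ w) := dotProduct_neg g w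
    have hHn : (-w) ⬝ᵥ H.mulVec (-w) = w ⬝ᵥ H.mulVec w := by
      rw [Matrix.mulVec_neg, neg_dotProduct, dotProduct_neg, neg_neg]
    rw [hnn, hgw, hHn, hwHw] at hray
    have hcomm : w ⬝ᵥ g = g ⬝ᵥ w := dotProduct_comm w g
    rw [hpsi]
    nlinarith [hray, hcomm]
  · -- t ≤ ψ(μ)
    by_contra hcon
    push_neg at hcon
    have := lam_gt g hH hlt hcon
    rw [← hμdef] at this
    exact lt_irrefl μ this

lemma lam_eventually_psi (hH : Hᵀ = H) {ts : ℝ}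
    (hts : lambdaMin (Bmat g H ts) < lambdaMin H) :
    ∀ᶠ t in 𝓝 ts, psiF g H (lambdaMin (Bmat g H t)) = t := by
  have hcont : ContinuousAt (fun t => lambdaMin (Bmat g H t)) ts :=
    (lambdaMin_B_continuous g H).continuousAt
  have hev : ∀ᶠ t in 𝓝 ts, lambdaMin (Bmat g H t) < lambdaMin H :=
    hcont.eventually_lt continuousAt_const hts
  filter_upwards [hev] with t ht
  exact psi_lam_eq g hH ht

lemma lam_hasDerivAt (hH : Hᵀ = H) {ts : ℝ}
    (hts : lambdaMin (Bmat g H ts) < lambdaMin H) :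
    HasDerivAt (fun t => lambdaMin (Bmat g H t))
      ((1 + nsq ((H - (lambdaMin (Bmat g H ts)) • (1 : Matrix (Fin n) (Fin n) ℝ))⁻¹ *ᵥ g))⁻¹)
      ts := by
  have hcont : ContinuousAt (fun t => lambdaMin (Bmat g H t)) ts :=
    (lambdaMin_B_continuous g H).continuousAt
  have hdet := shift_det_ne hH hts
  have hψ := psi_hasDerivAt hH g hdet
  have hne : (1 : ℝ) + nsq ((H - (lambdaMin (Bmat g H ts)) • (1 : Matrix (Fin n) (Fin n) ℝ))⁻¹ *ᵥ g) ≠ 0 := by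
    have : 0 ≤ nsq ((H - (lambdaMin (Bmat g H ts)) • (1 : Matrix (Fin n) (Fin n) ℝ))⁻¹ *ᵥ g) :=
      dot_self_nonneg _
    positivity
  exact HasDerivAt.of_local_left_inverse hcont hψ hne (lam_eventually_psi g hH hts)


end B7
end SAux

namespace SAux
section B8

-- right-derivative package for convex functions
section RightDeriv
variable {f : ℝ → ℝ}

lemma slope_rel (hf : ConvexOn ℝ Set.univ f) (x₀ : ℝ) :
    MonotoneOn (fun u => (f (x₀ + u) - f x₀) / u) (Ioi (0:ℝ)) := by
  rintro u hu u' hu' huu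
  rcases eq_or_lt_of_le huu with rfl | h
  · exact le_refl _
  · have hu0 : (0:ℝ) < u := hu
    have hu'0 : (0:ℝ) < u' := hu'
    have h3 := convex_ineq hf (p := x₀) (q := x₀ + u) (r := x₀ + u')
      (by linarith) (by linarith)
    simp only
    rw [div_le_div_iff₀ hu0 hu'0]
    nlinarith [h3]

lemma slope_extend (hf : ConvexOn ℝ Set.univ f) {p x₀ r : ℝ} (hp : p ≤ x₀) (hr : x₀ < r) :
    f r - f p ≤ (r - p) * ((f r - f x₀) / (r - x₀)) := by
  have h3 := convex_ineq hf hp hr.le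
  have hrx : (0:ℝ) < r - x₀ := by linarith
  rw [mul_div_assoc', le_div_iff₀ hrx]
  nlinarith [h3]

lemma right_deriv_package (hf : ConvexOn ℝ Set.univ f) (hmono : Monotone f) (x₀ : ℝ) :
    HasDerivWithinAt f (sInf ((fun u => (f (x₀ + u) - f x₀) / u) '' Ioi (0:ℝ)))
      (Ici x₀) x₀ := by
  set S : ℝ → ℝ := fun u => (f (x₀ + u) - f x₀) / u with hS
  have hTS : ∀ x ∈ Ioi x₀, slope f x₀ x = S (x - x₀) := by
    intro x hx
    rw [slope_def_field, hS]
    simp only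
    rw [show x₀ + (x - x₀) = x by ring]
  have himg : (slope f x₀) '' Ioi x₀ = S '' Ioi (0:ℝ) := by
    ext v
    constructor
    · rintro ⟨x, hx, rfl⟩
      exact ⟨x - x₀, by simpa [mem_Ioi] using (sub_pos.2 (show x₀ < x from hx)), (hTS x hx).symm⟩
    · rintro ⟨u, hu, rfl⟩
      have hu0 : (0:ℝ) < u := hu
      refine ⟨x₀ + u, by simp only [mem_Ioi]; linarith, ?_⟩
      rw [hTS (x₀ + u) (by simp only [mem_Ioi]; linarith)]
      rw [show x₀ + u - x₀ = u by ring]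
    
  have hmonoT : MonotoneOn (slope f x₀) (Ioi x₀) := by
    intro x hx y hy hxy
    rw [hTS x hx, hTS y hy]
    exact slope_rel hf x₀ (by simp only [mem_Ioi] at hx ⊢; linarith)
      (by simp only [mem_Ioi] at hy ⊢; linarith) (by linarith)
  have hbdd : BddBelow ((slope f x₀) '' Ioi x₀) := by
    refine ⟨0, ?_⟩
    rintro _ ⟨x, hx, rfl⟩
    rw [slope_def_field]
    have hx' : x₀ < x := hx
    exact div_nonneg (by linarith [hmono hx'.le]) (by linarith)
  have htendsto := MonotoneOn.tendsto_nhdsGT hmonoT hbdd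
  rw [himg] at htendsto
  rw [hasDerivWithinAt_iff_tendsto_slope, Set.Ici_sdiff_left]
  exact htendsto

end RightDeriv

-- EReal helper
lemma coe_sub_rho_le {ρ : ℝ → EReal} (hρ : RhoBasic ρ) (x t : ℝ) :
    ((x : ℝ) : EReal) - ρ t ≤ ((x : ℝ) : EReal) := by
  rcases eq_or_ne (ρ t) ⊤ with h | h
  · rw [h]; simp
  · lift (ρ t) to ℝ using ⟨h, rho_ne_bot hρ t⟩ with r hr
    have h0 : (0:ℝ) ≤ r := by
      have := hρ.1 t; rw [← hr] at this; exact_mod_cast this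
    rw [← EReal.coe_sub]
    exact_mod_cast (by linarith : x - r ≤ x)

section CoreSec
variable {n : ℕ} (g : Fin n → ℝ) {H : Matrix (Fin n) (Fin n) ℝ}

lemma shift_PosDef' (hHt : Hᵀ = H) {μ : ℝ}
    (hpd : ∀ z : Fin n → ℝ, z ≠ 0 → 0 < z ⬝ᵥ (H - μ • (1 : Matrix (Fin n) (Fin n) ℝ)) *ᵥ z) :
    (H - μ • (1 : Matrix (Fin n) (Fin n) ℝ)).PosDef := by
  refine Matrix.PosDef.of_dotProduct_mulVec_pos ?_ ?_
  · show (H - μ • (1 : Matrix (Fin n) (Fin n) ℝ))ᴴ = _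
    rw [Matrix.conjTranspose_eq_transpose_of_trivial, shift_symm hHt]
  · intro x hx
    simpa [star_trivial] using hpd x hx

lemma shift_mulVec_inv' (hHt : Hᵀ = H) {μ : ℝ}
    (hpd : ∀ z : Fin n → ℝ, z ≠ 0 → 0 < z ⬝ᵥ (H - μ • (1 : Matrix (Fin n) (Fin n) ℝ)) *ᵥ z)
    (v : Fin n → ℝ) :
    (H - μ • (1 : Matrix (Fin n) (Fin n) ℝ)) *ᵥ
      ((H - μ • (1 : Matrix (Fin n) (Fin n) ℝ))⁻¹ *ᵥ v) = v := by
  rw [Matrix.mulVec_mulVec,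
    Matrix.mul_nonsing_inv _ (isUnit_iff_ne_zero.2
      (Matrix.PosDef.det_pos (shift_PosDef' hHt hpd)).ne'), Matrix.one_mulVec]

lemma wHw_eq {μ : ℝ} {w v : Fin n → ℝ}
    (hMw : (H - μ • (1 : Matrix (Fin n) (Fin n) ℝ)) *ᵥ w = v) :
    w ⬝ᵥ H.mulVec w = w ⬝ᵥ v + μ * (w ⬝ᵥ w) := by
  have h1 : H *ᵥ w = (H - μ • (1 : Matrix (Fin n) (Fin n) ℝ)) *ᵥ w + μ • w := by
    rw [Matrix.sub_mulVec, Matrix.smul_mulVec, Matrix.one_mulVec]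
    abel
  rw [h1, dotProduct_add, hMw, dotProduct_smul, smul_eq_mul]

/-- The core contradiction lemma. -/
lemma core {ρ : ℝ → EReal} (hHt : Hᵀ = H)
    (hρ : RhoBasic ρ) (h1 : Assump1 ρ) (h2 : Assump2 ρ)
    {ts : ℝ} (hts : ∀ t : ℝ, khat ρ g H t - (t : EReal) ≤ khat ρ g H ts - (ts : EReal))
    {lam0 : ℝ} (hlam0 : lam0 ≤ 0)
    (hSQ : ∃ u : ℝ, 0 < u ∧
      (∀ z : Fin n → ℝ, z ≠ 0 →
        0 < z ⬝ᵥ (H - (lam0 - u) • (1 : Matrix (Fin n) (Fin n) ℝ)) *ᵥ z) ∧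
      mconjR ρ (u - lam0) - mconjR ρ (-lam0)
        < u * nsq ((H - (lam0 - u) • (1 : Matrix (Fin n) (Fin n) ℝ))⁻¹ *ᵥ g)) :
    lambdaMin (Bmat g H ts) < lam0 := by
  by_contra hcon
  push_neg at hcon
  obtain ⟨u, hu, hpd, hSQu⟩ := hSQ
  set μ : ℝ := lam0 - u with hμ
  have hμ0 : μ < 0 := by rw [hμ]; linarith
  have hMw : (H - μ • (1 : Matrix (Fin n) (Fin n) ℝ)) *ᵥ
      ((H - μ • (1 : Matrix (Fin n) (Fin n) ℝ))⁻¹ *ᵥ g) = g :=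
    shift_mulVec_inv' hHt hpd g
  set w : Fin n → ℝ := (H - μ • (1 : Matrix (Fin n) (Fin n) ℝ))⁻¹ *ᵥ g with hw
  have hMsymm := shift_symm (n := n) hHt μ
  -- the completing-the-square identity
  have hsq : ∀ (x₀ : ℝ) (z : Fin n → ℝ),
      (z + x₀ • w) ⬝ᵥ (H - μ • (1 : Matrix (Fin n) (Fin n) ℝ)) *ᵥ (z + x₀ • w)
        = z ⬝ᵥ (H - μ • (1 : Matrix (Fin n) (Fin n) ℝ)) *ᵥ z
          + 2 * x₀ * (g ⬝ᵥ z) + x₀^2 * (g ⬝ᵥ w) := by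
    intro x₀ z
    have hMz : (H - μ • (1 : Matrix (Fin n) (Fin n) ℝ)) *ᵥ (z + x₀ • w)
        = (H - μ • (1 : Matrix (Fin n) (Fin n) ℝ)) *ᵥ z + x₀ • g := by
      rw [Matrix.mulVec_add, Matrix.mulVec_smul, hMw]
    rw [hMz, add_dotProduct, dotProduct_add, dotProduct_add,
      smul_dotProduct, smul_dotProduct, dotProduct_smul,
      dotProduct_smul]
    have h2' : w ⬝ᵥ (H - μ • (1 : Matrix (Fin n) (Fin n) ℝ)) *ᵥ z = g ⬝ᵥ z := by
      rw [dot_mulVec_symm hMsymm w z, hMw]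
    have h3 : z ⬝ᵥ g = g ⬝ᵥ z := dotProduct_comm z g
    have h4 : w ⬝ᵥ g = g ⬝ᵥ w := dotProduct_comm w g
    rw [h2', h3, h4]
    simp only [smul_eq_mul]
    ring
  -- lower bound for λ(t')
  have hlamt' : μ ≤ lambdaMin (Bmat g H (μ + g ⬝ᵥ w)) := by
    refine le_lambdaMin_B g H _ μ ?_
    intro x₀ z
    have hh1 := hsq x₀ z
    have hh2 : 0 ≤ (z + x₀ • w) ⬝ᵥ (H - μ • (1 : Matrix (Fin n) (Fin n) ℝ)) *ᵥ (z + x₀ • w) := by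
      rcases eq_or_ne (z + x₀ • w) 0 with hv0 | hv0
      · rw [hv0]; simp
      · exact (hpd _ hv0).le
    have hh3 := shift_quad (H := H) μ z
    nlinarith [hh1, hh2, hh3]
  have hkt' : ((μ - mconjR ρ (-μ) : ℝ) : EReal) ≤ khat ρ g H (μ + g ⬝ᵥ w) :=
    khat_ge g H hρ h1 h2 _ hlamt' hμ0.le
  have hkts : khat ρ g H ts
      ≤ ((lambdaMin (Bmat g H ts) - mconjR ρ (-(lambdaMin (Bmat g H ts))) : ℝ) : EReal) :=
    khat_le_conj g H hρ h2 ts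
  set ν : ℝ := lambdaMin (Bmat g H ts) with hν
  -- lower bound for ts
  have hwHw : w ⬝ᵥ H.mulVec w = w ⬝ᵥ g + μ * (w ⬝ᵥ w) := wHw_eq hMw
  have hts_ge : ν + g ⬝ᵥ w + (ν - μ) * (w ⬝ᵥ w) ≤ ts := by
    have hray := lambdaMin_B_le g H ts 1 (-w)
    have hnn : (-w) ⬝ᵥ (-w) = w ⬝ᵥ w := by
      rw [neg_dotProduct, dotProduct_neg, neg_neg]
    have hgw : g ⬝ᵥ (-w) = -(g ⬝ᵥ w) := dotProduct_neg g w
    have hHn : (-w) ⬝ᵥ H.mulVec (-w) = w ⬝ᵥ H.mulVec w := by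
      rw [Matrix.mulVec_neg, neg_dotProduct, dotProduct_neg, neg_neg]
    rw [hnn, hgw, hHn, hwHw] at hray
    have hcomm : w ⬝ᵥ g = g ⬝ᵥ w := dotProduct_comm w g
    rw [← hν] at hray
    nlinarith [hray, hcomm]
  -- EReal chain
  have E1 : ((μ - mconjR ρ (-μ) - (μ + g ⬝ᵥ w) : ℝ) : EReal)
      ≤ khat ρ g H (μ + g ⬝ᵥ w) - ((μ + g ⬝ᵥ w : ℝ) : EReal) := by
    rw [EReal.coe_sub]
    exact EReal.sub_le_sub hkt' (le_refl _)
  have E2 : khat ρ g H ts - (ts : EReal) ≤ ((ν - mconjR ρ (-ν) - ts : ℝ) : EReal) := by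
    rw [EReal.coe_sub]
    exact EReal.sub_le_sub hkts (le_refl _)
  have Echain := le_trans (le_trans E1 (hts (μ + g ⬝ᵥ w))) E2
  have hreal : μ - mconjR ρ (-μ) - (μ + g ⬝ᵥ w) ≤ ν - mconjR ρ (-ν) - ts := by
    exact_mod_cast Echain
  -- slope estimate
  have ha : 0 < ν - μ := by rw [hμ]; linarith [hcon]
  have hμeq : -μ = u - lam0 := by rw [hμ]; ring
  have hslope : mconjR ρ (-μ) - mconjR ρ (-ν)
      ≤ (ν - μ) * ((mconjR ρ (u - lam0) - mconjR ρ (-lam0)) / u) := by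
    have hse := slope_extend (mconjR_convexOn hρ h2)
      (p := -ν) (x₀ := -lam0) (r := u - lam0) (by linarith [hcon]) (by linarith)
    have e1 : (u - lam0) - (-ν) = ν - μ := by rw [hμ]; ring
    have e2 : (u - lam0) - (-lam0) = u := by ring
    rw [e1, e2] at hse
    rw [hμeq]
    exact hse
  -- contradiction
  have hQle : w ⬝ᵥ w ≤ (mconjR ρ (u - lam0) - mconjR ρ (-lam0)) / u := by
    have h5 : (ν - μ) * (w ⬝ᵥ w) ≤ mconjR ρ (-μ) - mconjR ρ (-ν) := by linarith
    have h6 : (ν - μ) * (w ⬝ᵥ w)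
        ≤ (ν - μ) * ((mconjR ρ (u - lam0) - mconjR ρ (-lam0)) / u) := le_trans h5 hslope
    exact le_of_mul_le_mul_left h6 ha
  have hQgt : (mconjR ρ (u - lam0) - mconjR ρ (-lam0)) / u < w ⬝ᵥ w := by
    rw [div_lt_iff₀ hu]
    calc mconjR ρ (u - lam0) - mconjR ρ (-lam0)
        < u * nsq ((H - (lam0 - u) • (1 : Matrix (Fin n) (Fin n) ℝ))⁻¹ *ᵥ g) := hSQu
      _ = (w ⬝ᵥ w) * u := by rw [hw]; unfold nsq; ring
  linarith

end CoreSec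
end B8
end SAux

namespace SAux
section B9
variable {n : ℕ} (g : Fin n → ℝ) {H : Matrix (Fin n) (Fin n) ℝ}

lemma add_quad (B : Matrix (Fin n) (Fin n) ℝ) (u : ℝ) (z : Fin n → ℝ) :
    z ⬝ᵥ (B + u • (1 : Matrix (Fin n) (Fin n) ℝ)) *ᵥ z = z ⬝ᵥ B *ᵥ z + u * (z ⬝ᵥ z) := by
  rw [Matrix.add_mulVec, dotProduct_add, Matrix.smul_mulVec,
    Matrix.one_mulVec, dotProduct_smul, smul_eq_mul]

lemma Qs_antitone {d c : Fin n → ℝ} (hd : ∀ i, 0 ≤ d i) {u₁ u₂ : ℝ}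
    (h1 : 0 < u₁) (h12 : u₁ ≤ u₂) :
    ∑ i, (c i)^2 * ((d i + u₂)⁻¹)^2 ≤ ∑ i, (c i)^2 * ((d i + u₁)⁻¹)^2 := by
  refine Finset.sum_le_sum fun i _ => ?_
  have hp1 : 0 < d i + u₁ := by have := hd i; linarith
  have hp2 : 0 < d i + u₂ := by linarith
  have hinv : (d i + u₂)⁻¹ ≤ (d i + u₁)⁻¹ := by
    apply inv_anti₀ hp1
    linarith
  have hnn : 0 ≤ (d i + u₂)⁻¹ := by positivity
  nlinarith [sq_nonneg (c i), mul_le_mul hinv hinv hnn (by positivity : (0:ℝ) ≤ (d i + u₁)⁻¹)]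

lemma Qs_tendsto {d c : Fin n → ℝ} (hd : ∀ i, 0 ≤ d i) (hdc : ∀ i, d i = 0 → c i = 0) :
    Tendsto (fun u : ℝ => ∑ i, (c i)^2 * ((d i + u)⁻¹)^2) (𝓝[>] (0:ℝ))
      (𝓝 (∑ i, (c i)^2 * ((d i)⁻¹)^2)) := by
  refine tendsto_finset_sum _ fun i _ => ?_
  rcases eq_or_ne (d i) 0 with h0 | hne
  · have hc0 : c i = 0 := hdc i h0
    simp only [hc0]
    simpa using tendsto_const_nhds
  · have hcont : ContinuousAt (fun u : ℝ => (c i)^2 * ((d i + u)⁻¹)^2) 0 := by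
      have h1 : ContinuousAt (fun u : ℝ => d i + u) 0 := by fun_prop
      have h2 : ContinuousAt (fun u : ℝ => (d i + u)⁻¹) 0 :=
        h1.inv₀ (by simpa using hne)
      exact (h2.pow 2).const_mul _
    have h3 := (hcont.continuousWithinAt (s := Ioi (0:ℝ))).tendsto
    simpa using h3

lemma khat_diff {ρ : ℝ → EReal} (hρ : RhoBasic ρ) (h1 : Assump1 ρ) (h2 : Assump2 ρ)
    (h3 : Assump3 ρ) (hHt : Hᵀ = H) {ts : ℝ}
    (h0 : lambdaMin (Bmat g H ts) < 0) (hm : lambdaMin (Bmat g H ts) < lambdaMin H) :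
    DifferentiableAt ℝ (fun w : ℝ => (khat ρ g H w).toReal) ts := by
  have hlam := lam_hasDerivAt g hHt hm
  have hcont := (lambdaMin_B_continuous g H).continuousAt (x := ts)
  have hev : ∀ᶠ t in 𝓝 ts, lambdaMin (Bmat g H t) < 0 :=
    hcont.eventually_lt continuousAt_const h0
  have heq : (fun w : ℝ => (khat ρ g H w).toReal)
      =ᶠ[𝓝 ts] (fun t => lambdaMin (Bmat g H t) - mconjR ρ (-(lambdaMin (Bmat g H t)))) := by
    filter_upwards [hev] with t ht
    exact khat_toReal g H hρ h1 h2 t ht.le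
  rw [Filter.EventuallyEq.differentiableAt_iff heq]
  have hmdiff : DifferentiableAt ℝ (mconjR ρ) (-(lambdaMin (Bmat g H ts))) :=
    h3 _ (by linarith)
  have hneg : DifferentiableAt ℝ (fun t => -(lambdaMin (Bmat g H t))) ts :=
    hlam.differentiableAt.neg
  exact hlam.differentiableAt.sub (DifferentiableAt.comp (g := mconjR ρ) ts hmdiff hneg)

end B9
end SAux

theorem stmt18 {n : ℕ} (g : Fin n → ℝ) (hg : g ≠ 0)
    (H : Matrix (Fin n) (Fin n) ℝ) (hH : H.IsSymm)
    (ρ : ℝ → EReal) (hρ : RhoBasic ρ) (h1 : Assump1 ρ) (h2 : Assump2 ρ) (h3 : Assump3 ρ)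
    (ts : ℝ) (hts : ∀ t : ℝ, khat ρ g H t - (t : EReal) ≤ khat ρ g H ts - (ts : EReal)) :
    (H.PosDef → nsq (H⁻¹.mulVec g) ∉ argminSet ρ →
        lambdaMin (Bmat g H ts) < 0 ∧
          DifferentiableAt ℝ (fun w : ℝ => (khat ρ g H w).toReal) ts) ∧
      (lambdaMin H ≤ 0 →
        (∃ y : Fin n → ℝ, (H - lambdaMin H • (1 : Matrix (Fin n) (Fin n) ℝ)).mulVec y = g) →
        Real.sqrt (derivWithin (mconjR ρ) (Ici (-(lambdaMin H))) (-(lambdaMin H))) <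
          vnorm ((symPinv (H - lambdaMin H • (1 : Matrix (Fin n) (Fin n) ℝ))).mulVec g) →
        lambdaMin (Bmat g H ts) < lambdaMin H ∧
          DifferentiableAt ℝ (fun w : ℝ => (khat ρ g H w).toReal) ts) := by
  obtain ⟨i0, hi0⟩ := Function.ne_iff.1 hg
  haveI : Nonempty (Fin n) := ⟨i0⟩
  have hHt : Hᵀ = H := hH
  constructor
  · -- Case (i): H positive definite
    intro hPD hargmin
    have hpdH : ∀ z : Fin n → ℝ, z ≠ 0 → 0 < z ⬝ᵥ H *ᵥ z := by
      intro z hz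
      have := hPD.dotProduct_mulVec_pos hz
      simpa [star_trivial] using this
    have hlm_pos : 0 < lambdaMin H := by
      obtain ⟨x, hx1, hx2⟩ := SAux.exists_unit_isMin H
      have hxne : x ≠ 0 := by
        intro h0
        rw [h0] at hx1
        simp [dotProduct] at hx1
      rw [← hx2]
      exact hpdH x hxne
    have hdetH : IsUnit H.det := isUnit_iff_ne_zero.2 hPD.det_pos.ne'
    have hy : H *ᵥ (H⁻¹ *ᵥ g) = g := by
      rw [Matrix.mulVec_mulVec, Matrix.mul_nonsing_inv _ hdetH, Matrix.one_mulVec]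
    have hherm : H.IsHermitian := hPD.1
    have hpsdH : ∀ x : Fin n → ℝ, 0 ≤ x ⬝ᵥ H *ᵥ x := by
      intro x
      rcases eq_or_ne x 0 with rfl | hx
      · simp
      · exact (hpdH x hx).le
    obtain ⟨d, c, hd, hdc, hforms, hNform⟩ := SAux.spec_package hherm hpsdH hy
    have hNval : nsq (symPinv H *ᵥ g) = nsq (H⁻¹ *ᵥ g) := by
      rw [SAux.symPinv_eq_inv hherm hpdH]
    have hNpos : 0 < nsq (H⁻¹.mulVec g) := by
      rcases eq_or_lt_of_le (SAux.dot_self_nonneg (H⁻¹ *ᵥ g)) with h0 | h0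
      · exfalso
        have hz : H⁻¹ *ᵥ g = 0 := SAux.eq_zero_of_dot_self h0.symm
        rw [hz, Matrix.mulVec_zero] at hy
        exact hg hy.symm
      · exact h0
    set N : ℝ := nsq (H⁻¹.mulVec g) with hN
    have hρN : (0 : EReal) < ρ N := by
      have h' : ¬ ∀ s, ρ N ≤ ρ s := hargmin
      push_neg at h'
      obtain ⟨s, hs⟩ := h'
      exact lt_of_le_of_lt (hρ.1 s) hs
    obtain ⟨b₀, hb₀0, hb₀N⟩ := EReal.lt_iff_exists_real_btwn.1 hρN
    have hb₀pos : (0:ℝ) < b₀ := by exact_mod_cast hb₀0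
    have hlsc := hρ.2.2.1 N (b₀ : EReal) hb₀N
    rw [Metric.eventually_nhds_iff] at hlsc
    obtain ⟨ε, hεpos, hε⟩ := hlsc
    set N₁ : ℝ := max (N/2) (N - ε/2) with hN₁
    have hN₁pos : 0 < N₁ := lt_of_lt_of_le (half_pos hNpos) (le_max_left _ _)
    have hN₁lt : N₁ < N := by
      rw [hN₁]
      exact max_lt (by linarith) (by linarith)
    have hρN₁ : (b₀ : EReal) < ρ N₁ := by
      apply hε
      rw [Real.dist_eq, abs_lt]
      have h5 : N - ε/2 ≤ N₁ := le_max_right _ _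
      constructor <;> [linarith; linarith]
    have hmbound : ∀ u : ℝ, 0 < u → u ≤ b₀ / N₁ → mconjR ρ u ≤ u * N₁ := by
      intro u hu hub
      have hle : mconj ρ u ≤ ((u * N₁ : ℝ) : EReal) := by
        refine iSup_le fun t => ?_
        rcases le_or_gt (t:ℝ) N₁ with hcase | hcase
        · refine le_trans (SAux.coe_sub_rho_le hρ _ _) ?_
          exact_mod_cast (by nlinarith [t.2] : u * (t:ℝ) ≤ u * N₁)
        · have htpos : (0:ℝ) < (t:ℝ) := lt_trans hN₁pos hcase
          set θ : ℝ := N₁ / (t:ℝ) with hθ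
          have hθ0 : 0 ≤ θ := by positivity
          have hθ1 : θ ≤ 1 := by
            rw [hθ, div_le_one htpos]
            linarith
          have hcomb := hρ.2.2.2 (t:ℝ) 0 θ hθ0 hθ1
          have harg : θ * (t:ℝ) + (1 - θ) * 0 = N₁ := by
            rw [hθ, div_mul_cancel₀ _ htpos.ne', mul_zero, add_zero]
          rw [harg, hρ.2.1, mul_zero, add_zero] at hcomb
          rcases eq_or_ne (ρ t) ⊤ with htop | htop
          · rw [htop]
            simp
          · lift (ρ t) to ℝ using ⟨htop, SAux.rho_ne_bot hρ t⟩ with rt hrt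
            have hbrt : (b₀ : EReal) < ((θ * rt : ℝ) : EReal) := by
              rw [EReal.coe_mul]
              exact lt_of_lt_of_le hρN₁ hcomb
            have hrtb : b₀ < θ * rt := by exact_mod_cast hbrt
            have hrt_ge : b₀ * (t:ℝ) / N₁ ≤ rt := by
              rw [div_le_iff₀ hN₁pos]
              have hrtb2 : b₀ < N₁ / (t:ℝ) * rt := hrtb
              have h8 : b₀ * (t:ℝ) < N₁ * rt := by
                have h8' := mul_lt_mul_of_pos_right hrtb2 htpos
                calc b₀ * (t:ℝ) < (N₁ / (t:ℝ) * rt) * (t:ℝ) := h8'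
                  _ = N₁ * rt := by
                    rw [mul_comm (N₁ / (t:ℝ)) rt, mul_assoc, div_mul_cancel₀ _ htpos.ne',
                      mul_comm]
              nlinarith
            rw [← EReal.coe_sub]
            have h9 : u * (t:ℝ) - rt ≤ u * N₁ := by
              have h10 : u * (t:ℝ) - rt ≤ u * (t:ℝ) - b₀ * (t:ℝ)/N₁ := by linarith
              have h11 : u * (t:ℝ) - b₀*(t:ℝ)/N₁ = (t:ℝ) * (u - b₀/N₁) := by
                field_simp
              have h12 : (t:ℝ) * (u - b₀/N₁) ≤ 0 :=
                mul_nonpos_of_nonneg_of_nonpos htpos.le (by linarith)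
              nlinarith [mul_nonneg hu.le hN₁pos.le]
            exact_mod_cast h9
      have hmc := SAux.mconj_eq_coe hρ h2 u
      rw [hmc] at hle
      exact_mod_cast hle
    have hA0 : ∀ u : ℝ, H - ((0:ℝ) - u) • (1 : Matrix (Fin n) (Fin n) ℝ)
        = H + u • (1 : Matrix (Fin n) (Fin n) ℝ) := by
      intro u
      rw [zero_sub, neg_smul, sub_neg_eq_add]
    have htend := SAux.Qs_tendsto hd hdc
    have hNsum : (∑ i, (c i)^2 * ((d i)⁻¹)^2) = N := by
      rw [← hNform, hNval]
    rw [hNsum] at htend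
    have hev : ∀ᶠ u in 𝓝[>] (0:ℝ), N₁ < ∑ i, (c i)^2 * ((d i + u)⁻¹)^2 :=
      htend.eventually (eventually_gt_nhds hN₁lt)
    obtain ⟨u₂, hu₂big, hu₂mem⟩ := (hev.and self_mem_nhdsWithin).exists
    have hu₂pos : (0:ℝ) < u₂ := hu₂mem
    set u : ℝ := min (b₀/N₁) u₂ with hu
    have hupos : 0 < u := lt_min (by positivity) hu₂pos
    have hSQ : ∃ u : ℝ, 0 < u ∧
        (∀ z : Fin n → ℝ, z ≠ 0 →
          0 < z ⬝ᵥ (H - ((0:ℝ) - u) • (1 : Matrix (Fin n) (Fin n) ℝ)) *ᵥ z) ∧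
        mconjR ρ (u - 0) - mconjR ρ (-(0:ℝ))
          < u * nsq ((H - ((0:ℝ) - u) • (1 : Matrix (Fin n) (Fin n) ℝ))⁻¹ *ᵥ g) := by
      refine ⟨u, hupos, ?_, ?_⟩
      · intro z hz
        rw [hA0 u, SAux.add_quad]
        have h6 := hpdH z hz
        have h7 := SAux.dot_self_nonneg z
        nlinarith
      · rw [hA0 u, (hforms u hupos).2]
        have e2 : mconjR ρ (-(0:ℝ)) = 0 := by
          rw [neg_zero]
          exact SAux.mconjR_nonpos_eq_zero hρ h2 (le_refl 0)
        rw [sub_zero, e2, sub_zero]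
        have hb1 : mconjR ρ u ≤ u * N₁ := hmbound u hupos (min_le_left _ _)
        have hb2 : N₁ < ∑ i, (c i)^2 * ((d i + u)⁻¹)^2 :=
          lt_of_lt_of_le hu₂big (SAux.Qs_antitone hd hupos (min_le_right _ _))
        nlinarith
    have hmain := SAux.core g hHt hρ h1 h2 hts (le_refl (0:ℝ)) hSQ
    exact ⟨hmain, SAux.khat_diff g hρ h1 h2 h3 hHt hmain (lt_trans hmain hlm_pos)⟩
  · -- Case (ii)
    intro hlm hyex hsqrt
    obtain ⟨y, hy⟩ := hyex
    have hApsd : ∀ x : Fin n → ℝ,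
        0 ≤ x ⬝ᵥ (H - lambdaMin H • (1 : Matrix (Fin n) (Fin n) ℝ)) *ᵥ x := by
      intro x
      rw [SAux.shift_quad]
      have := SAux.lambdaMin_smul_le H x
      linarith
    have hherm : (H - lambdaMin H • (1 : Matrix (Fin n) (Fin n) ℝ)).IsHermitian := by
      show _ᴴ = _
      rw [Matrix.conjTranspose_eq_transpose_of_trivial, SAux.shift_symm hHt]
    obtain ⟨d, c, hd, hdc, hforms, hNform⟩ := SAux.spec_package hherm hApsd hy
    have hconv := SAux.mconjR_convexOn hρ h2
    have hmono := SAux.mconjR_mono hρ h2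
    set x₀ : ℝ := -(lambdaMin H) with hx₀def
    have hDW := SAux.right_deriv_package hconv hmono x₀
    have hdval : derivWithin (mconjR ρ) (Ici x₀) x₀
        = sInf ((fun u => (mconjR ρ (x₀ + u) - mconjR ρ x₀)/u) '' Ioi (0:ℝ)) :=
      hDW.derivWithin (uniqueDiffOn_Ici x₀ x₀ self_mem_Ici)
    have hbddS : BddBelow ((fun u => (mconjR ρ (x₀ + u) - mconjR ρ x₀)/u) '' Ioi (0:ℝ)) := by
      refine ⟨0, ?_⟩
      rintro _ ⟨v, hv, rfl⟩
      have hv0 : (0:ℝ) < v := hv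
      exact div_nonneg (sub_nonneg.2 (hmono (by linarith))) hv0.le
    have hneS : ((fun u => (mconjR ρ (x₀ + u) - mconjR ρ x₀)/u) '' Ioi (0:ℝ)).Nonempty :=
      ⟨_, ⟨1, by simp, rfl⟩⟩
    have hd_lt : sInf ((fun u => (mconjR ρ (x₀ + u) - mconjR ρ x₀)/u) '' Ioi (0:ℝ))
        < nsq (symPinv (H - lambdaMin H • (1 : Matrix (Fin n) (Fin n) ℝ)) *ᵥ g) := by
      by_contra hge
      push_neg at hge
      have h8 := Real.sqrt_le_sqrt hge
      rw [← hdval] at h8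
      have h9 : vnorm (symPinv (H - lambdaMin H • (1 : Matrix (Fin n) (Fin n) ℝ)) *ᵥ g)
          = Real.sqrt (nsq (symPinv (H - lambdaMin H • (1 : Matrix (Fin n) (Fin n) ℝ)) *ᵥ g)) := rfl
      rw [h9] at hsqrt
      linarith
    obtain ⟨b, ⟨u₁, hu₁mem, rfl⟩, hbineq⟩ := (csInf_lt_iff hbddS hneS).1 hd_lt
    have hu₁pos : (0:ℝ) < u₁ := hu₁mem
    have htend := SAux.Qs_tendsto hd hdc
    rw [← hNform] at htend
    have hev : ∀ᶠ v in 𝓝[>] (0:ℝ),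
        (mconjR ρ (x₀ + u₁) - mconjR ρ x₀)/u₁ < ∑ i, (c i)^2 * ((d i + v)⁻¹)^2 :=
      htend.eventually (eventually_gt_nhds hbineq)
    obtain ⟨u₂, hu₂big, hu₂mem⟩ := (hev.and self_mem_nhdsWithin).exists
    have hu₂pos : (0:ℝ) < u₂ := hu₂mem
    set u : ℝ := min u₁ u₂ with hu
    have hupos : 0 < u := lt_min hu₁pos hu₂pos
    have hM1 : H - (lambdaMin H - u) • (1 : Matrix (Fin n) (Fin n) ℝ)
        = (H - lambdaMin H • (1 : Matrix (Fin n) (Fin n) ℝ))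
          + u • (1 : Matrix (Fin n) (Fin n) ℝ) := by
      rw [sub_smul]
      abel
    have hSQ : ∃ v : ℝ, 0 < v ∧
        (∀ z : Fin n → ℝ, z ≠ 0 →
          0 < z ⬝ᵥ (H - (lambdaMin H - v) • (1 : Matrix (Fin n) (Fin n) ℝ)) *ᵥ z) ∧
        mconjR ρ (v - lambdaMin H) - mconjR ρ (-(lambdaMin H))
          < v * nsq ((H - (lambdaMin H - v) • (1 : Matrix (Fin n) (Fin n) ℝ))⁻¹ *ᵥ g) := by
      refine ⟨u, hupos, ?_, ?_⟩
      · intro z hz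
        rw [hM1, SAux.add_quad]
        have h6 := hApsd z
        have h7 := SAux.dot_self_pos hz
        nlinarith
      · rw [hM1, (hforms u hupos).2]
        have e1 : u - lambdaMin H = x₀ + u := by rw [hx₀def]; ring
        have e2 : -(lambdaMin H) = x₀ := rfl
        rw [e1, e2]
        have hS : (mconjR ρ (x₀ + u) - mconjR ρ x₀)/u
            ≤ (mconjR ρ (x₀ + u₁) - mconjR ρ x₀)/u₁ :=
          SAux.slope_rel hconv x₀ (by exact hupos) (by exact hu₁pos) (min_le_left _ _)
        have hQ : ∑ i, (c i)^2 * ((d i + u₂)⁻¹)^2 ≤ ∑ i, (c i)^2 * ((d i + u)⁻¹)^2 :=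
          SAux.Qs_antitone hd hupos (min_le_right _ _)
        have hchain : (mconjR ρ (x₀ + u) - mconjR ρ x₀)/u
            < ∑ i, (c i)^2 * ((d i + u)⁻¹)^2 := by linarith
        rw [div_lt_iff₀ hupos] at hchain
        linarith [hchain]
    have hmain := SAux.core g hHt hρ h1 h2 hts hlm hSQ
    exact ⟨hmain, SAux.khat_diff g hρ h1 h2 h3 hHt (lt_of_lt_of_le hmain hlm) hmain⟩

end
end
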